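/- arXiv:2601.04906 — 8 statements merged into one kernel-verified Lean document; each statement's English description precedes it below -/
import Mathlib

section
/- Let f : [0,∞) → ℝ be continuous and define F(t) = ∫₀ᵗ f(u) du; assume F is bounded on [0,∞). Then the least concave majorant MF is differentiable at every point of (0,∞), has a finite right derivative at 0, and the slope function f₀ : [0,∞) → ℝ (equal to the derivative of MF on (0,∞) and to the right derivative at 0) is continuous and non-negative on [0,∞). -/
open MeasureTheory Filter Set
open Topology

/-- The least concave majorant on `[0, ∞)` of a function `θ : ℝ → ℝ`:
`Mθ(x) = inf { g(x) : g bounded on [0,∞), concave on [0,∞), θ ≤ g on [0,∞) }`. -/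
noncomputable def leastConcaveMajorant (θ : ℝ → ℝ) (x : ℝ) : ℝ :=
  sInf {y : ℝ | ∃ g : ℝ → ℝ,
    (∃ C : ℝ, ∀ t ∈ Set.Ici (0:ℝ), |g t| ≤ C) ∧
    ConcaveOn ℝ (Set.Ici 0) g ∧
    (∀ t ∈ Set.Ici (0:ℝ), θ t ≤ g t) ∧
    y = g x}

namespace LCMAux

variable {F : ℝ → ℝ} {C : ℝ}

lemma lcm_le {g : ℝ → ℝ} (hgb : ∃ D : ℝ, ∀ t ∈ Set.Ici (0:ℝ), |g t| ≤ D)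
    (hgc : ConcaveOn ℝ (Set.Ici 0) g) (hgF : ∀ t ∈ Set.Ici (0:ℝ), F t ≤ g t)
    {x : ℝ} (hx : 0 ≤ x) : leastConcaveMajorant F x ≤ g x := by
  apply csInf_le
  · refine ⟨F x, ?_⟩
    rintro y ⟨g', -, -, hg'F, rfl⟩
    exact hg'F x hx
  · exact ⟨g, hgb, hgc, hgF, rfl⟩

lemma le_lcm (hC : ∀ t ∈ Set.Ici (0:ℝ), |F t| ≤ C) {x : ℝ} (hx : 0 ≤ x) :
    F x ≤ leastConcaveMajorant F x := by
  apply le_csInf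
  · exact ⟨C, fun _ => C, ⟨|C|, fun t _ => le_rfl⟩,
      concaveOn_const _ (convex_Ici 0), fun t ht => (abs_le.1 (hC t ht)).2, rfl⟩
  · rintro y ⟨g, -, -, hgF, rfl⟩
    exact hgF x hx

lemma lcm_le_const (hC : ∀ t ∈ Set.Ici (0:ℝ), |F t| ≤ C) {x : ℝ} (hx : 0 ≤ x) :
    leastConcaveMajorant F x ≤ C :=
  lcm_le ⟨|C|, fun t _ => le_rfl⟩ (concaveOn_const _ (convex_Ici 0))
    (fun t ht => (abs_le.1 (hC t ht)).2) hx

lemma lcm_concave (hC : ∀ t ∈ Set.Ici (0:ℝ), |F t| ≤ C) :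
    ConcaveOn ℝ (Set.Ici 0) (leastConcaveMajorant F) := by
  refine ⟨convex_Ici 0, fun x hx y hy a b ha hb hab => ?_⟩
  apply le_csInf
  · exact ⟨C, fun _ => C, ⟨|C|, fun t _ => le_rfl⟩,
      concaveOn_const _ (convex_Ici 0), fun t ht => (abs_le.1 (hC t ht)).2, rfl⟩
  · rintro z ⟨g, hgb, hgc, hgF, rfl⟩
    calc a • leastConcaveMajorant F x + b • leastConcaveMajorant F y
        ≤ a • g x + b • g y := by
          gcongr
          · exact lcm_le hgb hgc hgF hx
          · exact lcm_le hgb hgc hgF hy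
      _ ≤ g (a • x + b • y) := hgc.2 hx hy ha hb hab

lemma lcm_slope_anti (hC : ∀ t ∈ Set.Ici (0:ℝ), |F t| ≤ C) {a x y : ℝ}
    (ha : 0 ≤ a) (hx : 0 ≤ x) (hy : 0 ≤ y) (hxa : x ≠ a) (hya : y ≠ a) (hxy : x ≤ y) :
    slope (leastConcaveMajorant F) a y ≤ slope (leastConcaveMajorant F) a x := by
  set M := leastConcaveMajorant F
  have h := ((lcm_concave hC).neg).secant_mono (a := a) (x := x) (y := y) ha hx hy hxa hya hxy
  simp only [Pi.neg_apply] at h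
  rw [slope_def_field, slope_def_field]
  have e1 : (-M x - -M a) / (x - a) = -((M x - M a) / (x - a)) := by ring
  have e2 : (-M y - -M a) / (y - a) = -((M y - M a) / (y - a)) := by ring
  rw [e1, e2] at h
  linarith

end LCMAux

section
variable {F M : ℝ → ℝ} {C : ℝ}

lemma eq_affine_on
    (hMc : ConcaveOn ℝ (Set.Ici 0) M)
    (hFM : ∀ t ∈ Set.Ici (0:ℝ), F t ≤ M t)
    (hMC : ∀ t ∈ Set.Ici (0:ℝ), |M t| ≤ C)
    (hmin : ∀ g : ℝ → ℝ, (∃ D : ℝ, ∀ t ∈ Set.Ici (0:ℝ), |g t| ≤ D) →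
      ConcaveOn ℝ (Set.Ici 0) g → (∀ t ∈ Set.Ici (0:ℝ), F t ≤ g t) →
      ∀ x ∈ Set.Ici (0:ℝ), M x ≤ g x)
    {p q : ℝ} (hp : (0:ℝ) ≤ p) (hpq : p < q)
    (hFL : ∀ t ∈ Set.Icc p q, F t ≤ M p + slope M p q * (t - p)) :
    ∀ t ∈ Set.Icc p q, M t = M p + slope M p q * (t - p) := by
  have hq : (0:ℝ) ≤ q := hp.trans hpq.le
  set s : ℝ := slope M p q with hs
  set L : ℝ → ℝ := fun t => M p + s * (t - p) with hLdef
  have hslope : ∀ {x y : ℝ}, 0 ≤ x → 0 ≤ y → ∀ (a : ℝ), 0 ≤ a → x ≠ a → y ≠ a → x ≤ y →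
      slope M a y ≤ slope M a x := by
    intro x y hx hy a ha hxa hya hxy
    have h := (hMc.neg).secant_mono (a := a) (x := x) (y := y) ha hx hy hxa hya hxy
    simp only [Pi.neg_apply] at h
    rw [slope_def_field, slope_def_field]
    have e1 : (-M x - -M a) / (x - a) = -((M x - M a) / (x - a)) := by ring
    have e2 : (-M y - -M a) / (y - a) = -((M y - M a) / (y - a)) := by ring
    rw [e1, e2] at h; linarith
  have hLq : M q = M p + s * (q - p) := by
    have : s * (q - p) = M q - M p := by
      rw [hs, slope_def_field, div_mul_cancel₀ _ (by linarith : q - p ≠ 0)]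
    linarith
  -- M ≤ L outside (p,q), L ≤ M inside
  have houtR : ∀ t, q < t → M t ≤ L t := by
    intro t ht
    have h1 : slope M p t ≤ slope M p q :=
      hslope hq (hq.trans ht.le) p hp (ne_of_gt hpq) (ne_of_gt (hpq.trans ht)) ht.le
    rw [slope_def_field, ← hs] at h1
    have h2 := (div_le_iff₀ (by linarith : (0:ℝ) < t - p)).1 h1
    simp only [hLdef]; linarith
  have houtL : ∀ t, 0 ≤ t → t < p → M t ≤ L t := by
    intro t ht htp
    have h1 : slope M q p ≤ slope M q t :=
      hslope ht hp q hq (ne_of_lt (htp.trans hpq)) (ne_of_lt hpq) htp.le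
    rw [slope_comm, ← hs, slope_def_field] at h1
    have h2 := (le_div_iff_of_neg (by linarith : t - q < 0)).1 h1
    have h3 : s * (t - q) + s * (q - p) = s * (t - p) := by ring
    simp only [hLdef]; linarith
  have hin : ∀ t ∈ Set.Icc p q, L t ≤ M t := by
    rintro t ⟨hpt, htq⟩
    rcases eq_or_lt_of_le hpt with rfl | hpt'
    · simp [hLdef]
    · have h1 : slope M p q ≤ slope M p t :=
        hslope (hp.trans hpt'.le) hq p hp (ne_of_gt hpt') (ne_of_gt hpq) htq
      rw [← hs, slope_def_field] at h1
      have h2 := (le_div_iff₀ (by linarith : (0:ℝ) < t - p)).1 h1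
      simp only [hLdef]; linarith
  have hLconc : ConcaveOn ℝ (Set.Ici 0) L := by
    refine ⟨convex_Ici 0, fun x _ y _ a b ha hb hab => le_of_eq ?_⟩
    simp only [hLdef, smul_eq_mul]
    linear_combination (M p - s * p) * hab
  -- L is bounded below by -C on [0,∞)
  have hMlb : ∀ t ∈ Set.Ici (0:ℝ), -C ≤ M t := fun t ht => neg_le_of_abs_le (hMC t ht)
  have hLlb : ∀ t ∈ Set.Ici (0:ℝ), -C ≤ L t := by
    intro t ht
    rcases lt_or_ge t p with h | h
    · exact (hMlb t ht).trans (houtL t ht h)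
    rcases le_or_gt t q with h' | h'
    · rcases le_or_gt 0 s with hs0 | hs0
      · have : M p ≤ L t := by simp only [hLdef]; nlinarith
        exact (hMlb p hp).trans this
      · have : M q ≤ L t := by simp only [hLdef]; nlinarith
        exact (hMlb q hq).trans this
    · exact (hMlb t ht).trans (houtR t h')
  set G : ℝ → ℝ := M ⊓ L with hG
  have hGb : ∀ t ∈ Set.Ici (0:ℝ), |G t| ≤ C := by
    intro t ht
    rw [abs_le]
    constructor
    · exact le_inf (hMlb t ht) (hLlb t ht)
    · exact le_trans inf_le_left (le_of_abs_le (hMC t ht))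
  have hGF : ∀ t ∈ Set.Ici (0:ℝ), F t ≤ G t := by
    intro t ht
    refine le_inf (hFM t ht) ?_
    rcases lt_or_ge t p with h | h
    · exact (hFM t ht).trans (houtL t ht h)
    rcases le_or_gt t q with h' | h'
    · exact hFL t ⟨h, h'⟩
    · exact (hFM t ht).trans (houtR t h')
  have hMG : ∀ x ∈ Set.Ici (0:ℝ), M x ≤ G x :=
    hmin G ⟨C, hGb⟩ (hMc.inf hLconc) hGF
  rintro t ⟨hpt, htq⟩
  have h1 : M t ≤ L t := le_trans (hMG t (hp.trans hpt)) inf_le_right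
  exact le_antisymm h1 (hin t ⟨hpt, htq⟩)
end

/-- if `f` is continuous on `[0,∞)`, `F(t) = ∫₀ᵗ f`, and `F` is bounded on
`[0,∞)`, then the least concave majorant `MF` is differentiable on `(0,∞)`, has a finite
right derivative at `0`, and the resulting slope function `f₀` is continuous and
non-negative on `[0,∞)`. -/
theorem slope_of_lcm_continuous_nonneg
    (f : ℝ → ℝ) (hf : ContinuousOn f (Set.Ici 0))
    (F : ℝ → ℝ) (hF : ∀ t, F t = ∫ u in (0:ℝ)..t, f u)
    (hFbdd : ∃ C : ℝ, ∀ t ∈ Set.Ici (0:ℝ), |F t| ≤ C) :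
    ∃ f₀ : ℝ → ℝ,
      (∀ x : ℝ, 0 < x → HasDerivAt (leastConcaveMajorant F) (f₀ x) x) ∧
      HasDerivWithinAt (leastConcaveMajorant F) (f₀ 0) (Set.Ici 0) 0 ∧
      ContinuousOn f₀ (Set.Ici 0) ∧
      (∀ x ∈ Set.Ici (0:ℝ), 0 ≤ f₀ x) := by
  obtain ⟨C, hC⟩ := hFbdd
  set M := leastConcaveMajorant F with hMdef
  have hC0 : (0:ℝ) ≤ C := (abs_nonneg _).trans (hC 0 Set.self_mem_Ici)
  have hconc : ConcaveOn ℝ (Set.Ici 0) M := LCMAux.lcm_concave hC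
  have hFleM : ∀ t ∈ Set.Ici (0:ℝ), F t ≤ M t := fun t ht => LCMAux.le_lcm hC ht
  have hMleC : ∀ t ∈ Set.Ici (0:ℝ), M t ≤ C := fun t ht => LCMAux.lcm_le_const hC ht
  have hMabs : ∀ t ∈ Set.Ici (0:ℝ), |M t| ≤ C := fun t ht =>
    abs_le.2 ⟨(neg_le_of_abs_le (hC t ht)).trans (hFleM t ht), hMleC t ht⟩
  have hMlb : ∀ t ∈ Set.Ici (0:ℝ), -C ≤ M t := fun t ht => neg_le_of_abs_le (hMabs t ht)
  have hmin : ∀ g : ℝ → ℝ, (∃ D : ℝ, ∀ t ∈ Set.Ici (0:ℝ), |g t| ≤ D) →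
      ConcaveOn ℝ (Set.Ici 0) g → (∀ t ∈ Set.Ici (0:ℝ), F t ≤ g t) →
      ∀ x ∈ Set.Ici (0:ℝ), M x ≤ g x :=
    fun g hgb hgc hgF x hx => LCMAux.lcm_le hgb hgc hgF hx
  have hslope : ∀ {x y : ℝ}, 0 ≤ x → 0 ≤ y → ∀ (a : ℝ), 0 ≤ a → x ≠ a → y ≠ a → x ≤ y →
      slope M a y ≤ slope M a x :=
    fun hx hy a ha hxa hya hxy => LCMAux.lcm_slope_anti hC ha hx hy hxa hya hxy
  -- FTC
  have hFeq : F = fun u => ∫ t in (0:ℝ)..u, f t := funext hF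
  have hFc : ∀ x : ℝ, 0 < x → HasDerivAt F (f x) x := by
    intro x hx
    have h1 : IntervalIntegrable f volume 0 x :=
      (hf.mono (by rw [Set.uIcc_of_le hx.le]; exact fun t ht => ht.1)).intervalIntegrable
    have h2 : StronglyMeasurableAtFilter f (𝓝 x) volume :=
      ContinuousOn.stronglyMeasurableAtFilter isOpen_Ioi (hf.mono Set.Ioi_subset_Ici_self) x hx
    have h3 : ContinuousAt f x := hf.continuousAt (Ici_mem_nhds hx)
    have := intervalIntegral.integral_hasDerivAt_right h1 h2 h3
    rwa [← hFeq] at this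
  have hF0 : F 0 = 0 := by rw [hF]; simp
  -- the linear majorant at 0
  obtain ⟨K0, hK0⟩ : ∃ K, ∀ t ∈ Set.Icc (0:ℝ) 1, ‖f t‖ ≤ K :=
    IsCompact.exists_bound_of_continuousOn isCompact_Icc (hf.mono (fun t ht => ht.1))
  set a : ℝ := max (max K0 C) 0 with hadef
  have ha0 : (0:ℝ) ≤ a := le_max_right _ _
  have haK : K0 ≤ a := le_max_of_le_left (le_max_left _ _)
  have haC : C ≤ a := le_max_of_le_left (le_max_right _ _)
  have hFlin : ∀ t ∈ Set.Ici (0:ℝ), F t ≤ a * t := by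
    intro t ht
    rcases le_or_gt t 1 with h1 | h1
    · have ht' : (0:ℝ) ≤ t := ht
      have habs : ‖∫ u in (0:ℝ)..t, f u‖ ≤ K0 * |t - 0| := by
        apply intervalIntegral.norm_integral_le_of_norm_le_const
        intro u hu
        rw [Set.uIoc_of_le ht'] at hu
        exact hK0 u ⟨hu.1.le, hu.2.trans h1⟩
      rw [Real.norm_eq_abs, sub_zero, abs_of_nonneg ht'] at habs
      rw [hF]
      calc (∫ u in (0:ℝ)..t, f u) ≤ |∫ u in (0:ℝ)..t, f u| := le_abs_self _
        _ ≤ K0 * t := habs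
        _ ≤ a * t := mul_le_mul_of_nonneg_right haK ht'
    · have ht' : (0:ℝ) ≤ t := ht
      calc F t ≤ C := (abs_le.1 (hC t ht)).2
        _ ≤ C * t := le_mul_of_one_le_right hC0 h1.le
        _ ≤ a * t := mul_le_mul_of_nonneg_right haC ht'
  have hMlin : ∀ t ∈ Set.Ici (0:ℝ), M t ≤ a * t := by
    intro t ht
    have hg : M t ≤ ((fun u => a * u) ⊓ (fun _ => C)) t := by
      apply hmin _ ⟨C, ?_⟩ ?_ ?_ t ht
      · intro u hu
        have hu' : (0:ℝ) ≤ u := hu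
        rw [Pi.inf_apply, abs_le]
        exact ⟨le_inf (le_trans (neg_nonpos_of_nonneg hC0) (by positivity))
          (neg_le_self hC0), inf_le_right⟩
      · refine ConcaveOn.inf ⟨convex_Ici 0, fun x _ y _ c d hc hd hcd => le_of_eq (by
          simp only [smul_eq_mul]; ring)⟩ (concaveOn_const _ (convex_Ici 0))
      · intro u hu
        exact le_inf (hFlin u hu) ((abs_le.1 (hC u hu)).2)
    exact hg.trans inf_le_left
  have hM0 : M 0 = 0 := by
    have h1 : M 0 ≤ 0 := by simpa using hMlin 0 Set.self_mem_Ici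
    have h2 : (0:ℝ) ≤ M 0 := by have := hFleM 0 Set.self_mem_Ici; rwa [hF0] at this
    linarith
  -- derivative within at 0
  have hanti0 : AntitoneOn (slope M 0) (Set.Ioi 0) := fun u hu v hv huv =>
    hslope (le_of_lt hu) (le_of_lt hv) 0 le_rfl (ne_of_gt hu) (ne_of_gt hv) huv
  have hbdd0 : BddAbove (slope M 0 '' Set.Ioi 0) := by
    refine ⟨a, ?_⟩
    rintro _ ⟨t, ht, rfl⟩
    rw [slope_def_field, hM0, sub_zero, sub_zero, div_le_iff₀ ht]
    exact hMlin t (Set.mem_Ici.2 ht.le)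
  set d0 : ℝ := sSup (slope M 0 '' Set.Ioi 0) with hd0def
  have htend0 : Tendsto (slope M 0) (𝓝[>] 0) (𝓝 d0) :=
    hanti0.tendsto_nhdsGT hbdd0
  have hd0 : HasDerivWithinAt M d0 (Set.Ici 0) 0 := by
    rw [← hasDerivWithinAt_Ioi_iff_Ici, hasDerivWithinAt_iff_tendsto_slope,
      Set.diff_singleton_eq_self (by simp : (0:ℝ) ∉ Set.Ioi (0:ℝ))]
    exact htend0
  have hdiff : ∀ x : ℝ, 0 < x → ∃ d, HasDerivAt M d x := by
    intro x hx
    rcases eq_or_lt_of_le (hFleM x (Set.mem_Ici.2 hx.le)) with heq | hlt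
    -- contact case : F x = M x
    · have hzR : BddAbove (slope M x '' Set.Ioi x) := by
        refine ⟨slope M x (x/2), ?_⟩
        rintro _ ⟨t, ht, rfl⟩
        exact hslope (by linarith) (by rw [Set.mem_Ioi] at ht; linarith) x hx.le
          (ne_of_lt (by linarith : x/2 < x)) (ne_of_gt ht) (by rw [Set.mem_Ioi] at ht; linarith)
      have hzL : BddBelow (slope M x '' Set.Ioo 0 x) := by
        refine ⟨slope M x (x+1), ?_⟩
        rintro _ ⟨t, ht, rfl⟩
        exact hslope ht.1.le (by linarith) x hx.le (ne_of_lt ht.2)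
          (ne_of_gt (by linarith : x < x + 1)) (by linarith [ht.2])
      set dR : ℝ := sSup (slope M x '' Set.Ioi x) with hdRdef
      set dL : ℝ := sInf (slope M x '' Set.Ioo 0 x) with hdLdef
      have hantiR : AntitoneOn (slope M x) (Set.Ioi x) := fun u hu v hv huv =>
        hslope (by rw [Set.mem_Ioi] at hu; linarith) (by rw [Set.mem_Ioi] at hv; linarith)
          x hx.le (ne_of_gt hu) (ne_of_gt hv) huv
      have hantiL : AntitoneOn (slope M x) (Set.Ioo 0 x) := fun u hu v hv huv =>
        hslope hu.1.le hv.1.le x hx.le (ne_of_lt hu.2) (ne_of_lt hv.2) huv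
      have htR : Tendsto (slope M x) (𝓝[>] x) (𝓝 dR) :=
        hantiR.tendsto_nhdsGT hzR
      have htL : Tendsto (slope M x) (𝓝[<] x) (𝓝 dL) :=
        AntitoneOn.tendsto_nhdsWithin_Ioo_left ⟨x/2, by constructor <;> linarith⟩ hantiL hzL
      have htF : Tendsto (slope F x) (𝓝[≠] x) (𝓝 (f x)) :=
        hasDerivAt_iff_tendsto_slope.1 (hFc x hx)
      have htF_R : Tendsto (slope F x) (𝓝[>] x) (𝓝 (f x)) :=
        htF.mono_left (nhdsWithin_mono _ fun y (hy : y ∈ Set.Ioi x) => ne_of_gt hy)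
      have htF_L : Tendsto (slope F x) (𝓝[<] x) (𝓝 (f x)) :=
        htF.mono_left (nhdsWithin_mono _ fun y (hy : y ∈ Set.Iio x) => ne_of_lt hy)
      have h1 : f x ≤ dR := by
        refine le_of_tendsto htF_R ?_
        filter_upwards [self_mem_nhdsWithin] with t ht
        rw [Set.mem_Ioi] at ht
        have hFs : slope F x t ≤ slope M x t := by
          rw [slope_def_field, slope_def_field, heq]
          rw [div_le_div_iff_of_pos_right (by linarith : (0:ℝ) < t - x)]
          have := hFleM t (Set.mem_Ici.2 (by linarith))
          linarith
        exact hFs.trans (le_csSup hzR ⟨t, ht, rfl⟩)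
      have h2 : dL ≤ f x := by
        refine ge_of_tendsto htF_L ?_
        filter_upwards [Ioo_mem_nhdsLT_of_mem (⟨hx, le_rfl⟩ : x ∈ Set.Ioc 0 x)] with t ht
        have hMs : slope M x t ≤ slope F x t := by
          rw [slope_def_field, slope_def_field, heq]
          rw [div_le_div_right_of_neg (by linarith [ht.2] : t - x < 0)]
          have := hFleM t (Set.mem_Ici.2 ht.1.le)
          linarith
        exact (csInf_le hzL ⟨t, ht, rfl⟩).trans hMs
      have h3 : dR ≤ dL := by
        refine le_csInf ⟨slope M x (x/2), ⟨x/2, ⟨by linarith, by linarith⟩, rfl⟩⟩ ?_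
        rintro _ ⟨t, ht, rfl⟩
        refine csSup_le ⟨slope M x (x+1), ⟨x+1, by rw [Set.mem_Ioi]; linarith, rfl⟩⟩ ?_
        rintro _ ⟨u, hu, rfl⟩
        rw [Set.mem_Ioi] at hu
        exact hslope ht.1.le (by linarith) x hx.le (ne_of_lt ht.2) (ne_of_gt hu)
          (by linarith [ht.2])
      have hdRfx : dR = f x := le_antisymm (h3.trans h2) h1
      have hdLfx : dL = f x := le_antisymm h2 (h1.trans h3)
      refine ⟨f x, hasDerivAt_iff_tendsto_slope.2 ?_⟩
      rw [← nhdsLT_sup_nhdsGT x]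
      exact tendsto_sup.2 ⟨hdLfx ▸ htL, hdRfx ▸ htR⟩
    -- non-contact case : F x < M x
    · set ε : ℝ := (M x - F x) / 3 with hεdef
      have hε : 0 < ε := by rw [hεdef]; linarith
      set K : ℝ := max |slope M x (x/2)| |slope M x (x+1)| with hKdef
      have hK0' : (0:ℝ) ≤ K := le_trans (abs_nonneg _) (le_max_left _ _)
      have hLip : ∀ t, x/2 < t → t < x + 1 → t ≠ x → |M t - M x| ≤ K * |t - x| := by
        intro t h1 h2 h3
        have hs1 : slope M x t ≤ slope M x (x/2) :=
          hslope (by linarith) (by linarith) x hx.le (ne_of_lt (by linarith : x/2 < x)) h3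
            (by linarith)
        have hs2 : slope M x (x+1) ≤ slope M x t :=
          hslope (by linarith) (by linarith) x hx.le h3 (ne_of_gt (by linarith : x < x+1))
            (by linarith)
        have habs : |slope M x t| ≤ K := by
          rw [abs_le]
          constructor
          · have h5 := neg_abs_le (slope M x (x+1))
            have h6 := le_max_right |slope M x (x/2)| |slope M x (x+1)|
            linarith
          · have h5 := le_abs_self (slope M x (x/2))
            have h6 := le_max_left |slope M x (x/2)| |slope M x (x+1)|
            linarith
        have heq2 : M t - M x = slope M x t * (t - x) := by
          rw [slope_def_field, div_mul_cancel₀ _ (sub_ne_zero_of_ne h3)]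
        rw [heq2, abs_mul]
        exact mul_le_mul_of_nonneg_right habs (abs_nonneg _)
      obtain ⟨δ₁, hδ₁pos, hδ₁⟩ := Metric.continuousAt_iff.1 (hFc x hx).continuousAt ε hε
      set δ : ℝ := min (min (δ₁/2) (x/4)) (min (1/2) (ε / (K+1))) with hδdef
      have hδpos : 0 < δ :=
        lt_min (lt_min (by linarith) (by linarith)) (lt_min (by norm_num)
          (div_pos hε (by linarith)))
      have hδx : δ ≤ x/4 := le_trans (min_le_left _ _) (min_le_right _ _)
      have hδδ₁ : δ ≤ δ₁/2 := le_trans (min_le_left _ _) (min_le_left _ _)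
      have hδK : δ ≤ ε / (K+1) := le_trans (min_le_right _ _) (min_le_right _ _)
      have hδ1 : δ ≤ 1/2 := le_trans (min_le_right _ _) (min_le_left _ _)
      have hKδ : K * δ ≤ ε := by
        have h1 : K * δ ≤ (K+1) * (ε/(K+1)) :=
          mul_le_mul (by linarith) hδK hδpos.le (by linarith)
        rwa [mul_div_cancel₀ _ (by linarith : K + 1 ≠ 0)] at h1
      set p : ℝ := x - δ with hpdef
      set q : ℝ := x + δ with hqdef
      have hp0 : (0:ℝ) ≤ p := by rw [hpdef]; linarith
      have hpq : p < q := by rw [hpdef, hqdef]; linarith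
      have hMp : M x - ε ≤ M p := by
        have h1 := hLip p (by rw [hpdef]; linarith) (by rw [hpdef]; linarith)
          (by rw [hpdef]; exact ne_of_lt (by linarith))
        have h2 : |p - x| = δ := by rw [hpdef]; rw [show x - δ - x = -δ by ring, abs_neg,
          abs_of_pos hδpos]
        rw [h2] at h1
        have h3 := (abs_le.1 h1).1
        linarith
      have hMq : M x - ε ≤ M q := by
        have h1 := hLip q (by rw [hqdef]; linarith) (by rw [hqdef]; linarith)
          (by rw [hqdef]; exact ne_of_gt (by linarith))
        have h2 : |q - x| = δ := by rw [hqdef]; rw [show x + δ - x = δ by ring,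
          abs_of_pos hδpos]
        rw [h2] at h1
        have h3 := (abs_le.1 h1).1
        linarith
      have hchord : ∀ t ∈ Set.Icc p q, min (M p) (M q) ≤ M p + slope M p q * (t - p) := by
        rintro t ⟨h1, h2⟩
        rcases le_or_gt 0 (slope M p q) with hs | hs
        · have : 0 ≤ slope M p q * (t - p) := mul_nonneg hs (by linarith)
          exact (min_le_left _ _).trans (by linarith)
        · have hMq_eq : M p + slope M p q * (q - p) = M q := by
            rw [slope_def_field, div_mul_cancel₀ _ (ne_of_gt (by linarith : (0:ℝ) < q - p))]
            ring
          have : slope M p q * (q - p) ≤ slope M p q * (t - p) :=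
            mul_le_mul_of_nonpos_left (by linarith) hs.le
          exact (min_le_right _ _).trans (by linarith)
      have hFL : ∀ t ∈ Set.Icc p q, F t ≤ M p + slope M p q * (t - p) := by
        intro t ht
        have hdist : dist t x < δ₁ := by
          rw [Real.dist_eq]
          have h4 : |t - x| ≤ δ := abs_le.2 ⟨by linarith [ht.1, hpdef], by linarith [ht.2]⟩
          linarith
        have hFt : F t - F x < ε := by
          have := hδ₁ hdist
          rw [Real.dist_eq] at this
          exact lt_of_le_of_lt (le_abs_self _) this
        have h5 : M x - ε ≤ min (M p) (M q) := le_min hMp hMq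
        have h6 := hchord t ht
        have hεx : M x = F x + 3 * ε := by rw [hεdef]; ring
        have h7 := min_le_left (M p) (M q)
        linarith [h6, h5]
      have haff := eq_affine_on hconc hFleM hMabs hmin hp0 hpq hFL
      refine ⟨slope M p q, ?_⟩
      have hL : HasDerivAt (fun t => M p + slope M p q * (t - p)) (slope M p q) x := by
        simpa using (((hasDerivAt_id x).sub_const p).const_mul (slope M p q)).const_add (M p)
      apply hL.congr_of_eventuallyEq
      filter_upwards [Icc_mem_nhds (show p < x by rw [hpdef]; linarith)
        (show x < q by rw [hqdef]; linarith)] with t ht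
      exact haff t ht
  have huniq : UniqueDiffOn ℝ (Set.Ici (0:ℝ)) := uniqueDiffOn_Ici 0
  have hderivAt : ∀ x : ℝ, 0 < x → HasDerivAt M (derivWithin M (Set.Ici 0) x) x := by
    intro x hx
    obtain ⟨d, hd⟩ := hdiff x hx
    rwa [hd.hasDerivWithinAt.derivWithin (huniq x hx.le)]
  have hderiv0 : HasDerivWithinAt M (derivWithin M (Set.Ici 0) 0) (Set.Ici 0) 0 := by
    rwa [hd0.derivWithin (huniq 0 Set.self_mem_Ici)]
  set f₀ : ℝ → ℝ := derivWithin M (Set.Ici 0) with hf₀def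
  -- tendsto of slopes to f₀
  have htendR : ∀ x : ℝ, 0 ≤ x → Tendsto (slope M x) (𝓝[>] x) (𝓝 (f₀ x)) := by
    intro x hx
    rcases eq_or_lt_of_le hx with rfl | hx'
    · exact (hasDerivWithinAt_iff_tendsto_slope.1 hderiv0).mono_left
        (nhdsWithin_mono _ (fun y hy => ⟨Set.mem_Ici.2 (le_of_lt hy), ne_of_gt hy⟩))
    · exact (hasDerivAt_iff_tendsto_slope.1 (hderivAt x hx')).mono_left
        (nhdsWithin_mono _ (fun y hy => ne_of_gt hy))
  have htendL : ∀ x : ℝ, 0 < x → Tendsto (slope M x) (𝓝[<] x) (𝓝 (f₀ x)) := by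
    intro x hx
    exact (hasDerivAt_iff_tendsto_slope.1 (hderivAt x hx)).mono_left
      (nhdsWithin_mono _ (fun y hy => ne_of_lt hy))
  -- key slope inequalities
  have key1 : ∀ {u v : ℝ}, 0 ≤ u → u < v → slope M u v ≤ f₀ u := by
    intro u v hu huv
    refine ge_of_tendsto (htendR u hu) ?_
    filter_upwards [Ioo_mem_nhdsGT_of_mem ⟨le_rfl, huv⟩] with t ht
    exact hslope (hu.trans ht.1.le) (hu.trans huv.le) u hu (ne_of_gt ht.1) (ne_of_gt huv) ht.2.le
  have key2 : ∀ {u v : ℝ}, 0 ≤ u → u < v → f₀ v ≤ slope M u v := by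
    intro u v hu huv
    have hv : 0 < v := lt_of_le_of_lt hu huv
    rw [slope_comm]
    refine le_of_tendsto (htendL v hv) ?_
    filter_upwards [Ioo_mem_nhdsLT_of_mem ⟨huv, le_rfl⟩] with t ht
    exact hslope hu (hu.trans ht.1.le) v hv.le (ne_of_lt huv) (ne_of_lt ht.2) ht.1.le
  -- nonnegativity
  have hnonneg : ∀ x ∈ Set.Ici (0:ℝ), 0 ≤ f₀ x := by
    intro x hx
    by_contra hneg
    push_neg at hneg
    set b : ℝ := x + (M x + C + 1) / (-f₀ x) with hbdef
    have hnum : (0:ℝ) < M x + C + 1 := by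
      have := hMlb x hx; linarith
    have hxb : x < b := lt_add_of_pos_right _ (div_pos hnum (by linarith))
    have h1 : slope M x b ≤ f₀ x := key1 hx hxb
    rw [slope_def_field, div_le_iff₀ (by linarith : (0:ℝ) < b - x)] at h1
    have h2 : -C ≤ M b := hMlb b (Set.mem_Ici.2 ((Set.mem_Ici.1 hx).trans hxb.le))
    have h4 : (b - x) * (-f₀ x) = M x + C + 1 := by
      rw [hbdef, add_sub_cancel_left]
      exact div_mul_cancel₀ _ (ne_of_gt (by linarith : (0:ℝ) < -f₀ x))
    have h5 : f₀ x * (b - x) = -((b - x) * -f₀ x) := by ring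
    rw [h4] at h5
    linarith
  -- continuity
  have hcont : ContinuousOn f₀ (Set.Ici 0) := by
    intro x hx
    have hx0 : (0:ℝ) ≤ x := hx
    rw [← continuousWithinAt_diff_self]
    have hsub : Set.Ici (0:ℝ) \ {x} ⊆ (Set.Ici 0 ∩ Set.Iio x) ∪ Set.Ioi x := by
      rintro y ⟨hy, hyx⟩
      rcases lt_or_gt_of_ne (hyx : y ≠ x) with h | h
      · exact Or.inl ⟨hy, h⟩
      · exact Or.inr h
    show Tendsto f₀ (𝓝[Set.Ici 0 \ {x}] x) (𝓝 (f₀ x))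
    refine Tendsto.mono_left ?_ (nhdsWithin_mono _ hsub)
    rw [nhdsWithin_union, tendsto_sup]
    constructor
    · -- approach from the left
      rcases eq_or_lt_of_le hx0 with rfl | hxpos
      · have hempty : Set.Ici (0:ℝ) ∩ Set.Iio 0 = ∅ := by
          ext y; simp only [Set.mem_inter_iff, Set.mem_Ici, Set.mem_Iio, Set.mem_empty_iff_false,
            iff_false, not_and]
          intro h1 h2; linarith
        rw [hempty, nhdsWithin_empty]
        exact tendsto_bot
      · refine Tendsto.mono_left ?_ (nhdsWithin_mono _ Set.inter_subset_right)
        refine tendsto_order.2 ⟨?_, ?_⟩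
        · intro l hl
          filter_upwards [Ioo_mem_nhdsLT_of_mem (⟨hxpos, le_rfl⟩ : x ∈ Set.Ioc 0 x)] with y hy
          have h1 : f₀ x ≤ slope M y x := key2 hy.1.le hy.2
          have h2 : slope M y x ≤ f₀ y := key1 hy.1.le hy.2
          linarith
        · intro m hm
          have hev : ∀ᶠ z in 𝓝[<] x, slope M x z < (f₀ x + m)/2 :=
            (htendL x hxpos).eventually_lt_const (by linarith)
          obtain ⟨z, hz1, hz2⟩ :=
            (hev.and (Ioo_mem_nhdsLT_of_mem (⟨hxpos, le_rfl⟩ : x ∈ Set.Ioc 0 x))).exists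
          have hMcx : Tendsto M (𝓝[<] x) (𝓝 (M x)) :=
            (hderivAt x hxpos).continuousAt.tendsto.mono_left nhdsWithin_le_nhds
          have hden : Tendsto (fun y : ℝ => y - z) (𝓝[<] x) (𝓝 (x - z)) :=
            ((continuousAt_id.sub continuousAt_const).tendsto).mono_left nhdsWithin_le_nhds
          have htend : Tendsto (fun y => (M y - M z) / (y - z)) (𝓝[<] x)
              (𝓝 ((M x - M z) / (x - z))) :=
            (hMcx.sub_const _).div hden (by intro h; have := hz2.2; nlinarith [sub_eq_zero.1 h])
          have hlim : (M x - M z) / (x - z) < m := by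
            have e1 : (M x - M z) / (x - z) = slope M z x := (slope_def_field M z x).symm
            rw [e1, ← slope_comm]
            linarith [hz1]
          filter_upwards [htend.eventually_lt_const hlim,
            Ioo_mem_nhdsLT_of_mem (⟨hz2.2, le_rfl⟩ : x ∈ Set.Ioc z x)] with y hy1 hy2
          have h1 : f₀ y ≤ slope M z y := key2 hz2.1.le hy2.1
          rw [slope_def_field] at h1
          linarith
    · -- approach from the right
      refine tendsto_order.2 ⟨?_, ?_⟩
      · intro l hl
        have hev : ∀ᶠ z in 𝓝[>] x, (l + f₀ x)/2 < slope M x z :=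
          (htendR x hx0).eventually_const_lt (by linarith)
        obtain ⟨z, hz1, hz2⟩ :=
          (hev.and (Ioo_mem_nhdsGT_of_mem (⟨le_rfl, by linarith⟩ : x ∈ Set.Ico x (x+1)))).exists
        have hMcx : Tendsto M (𝓝[>] x) (𝓝 (M x)) := by
          rcases eq_or_lt_of_le hx0 with rfl | hxpos
          · exact hderiv0.continuousWithinAt.mono_left
              (nhdsWithin_mono _ Set.Ioi_subset_Ici_self)
          · exact (hderivAt x hxpos).continuousAt.tendsto.mono_left nhdsWithin_le_nhds
        have hden : Tendsto (fun y : ℝ => y - z) (𝓝[>] x) (𝓝 (x - z)) :=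
          ((continuousAt_id.sub continuousAt_const).tendsto).mono_left nhdsWithin_le_nhds
        have htend : Tendsto (fun y => (M y - M z) / (y - z)) (𝓝[>] x)
            (𝓝 ((M x - M z) / (x - z))) :=
          (hMcx.sub_const _).div hden (by intro h; have := hz2.1; nlinarith [sub_eq_zero.1 h])
        have hlim : l < (M x - M z) / (x - z) := by
          have e1 : (M x - M z) / (x - z) = slope M z x := (slope_def_field M z x).symm
          rw [e1, ← slope_comm]
          linarith [hz1]
        filter_upwards [htend.eventually_const_lt hlim,
          Ioo_mem_nhdsGT_of_mem (⟨le_rfl, hz2.1⟩ : x ∈ Set.Ico x z)] with y hy1 hy2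
        have h1 : slope M y z ≤ f₀ y := key1 (hx0.trans hy2.1.le) hy2.2
        have e2 : slope M y z = (M y - M z) / (y - z) := by
          rw [slope_comm, slope_def_field]
        rw [e2] at h1
        linarith
      · intro m hm
        filter_upwards [self_mem_nhdsWithin] with y hy
        have hy' : x < y := hy
        have h1 : f₀ y ≤ slope M x y := key2 hx0 hy'
        have h2 : slope M x y ≤ f₀ x := key1 hx0 hy'
        linarith
  exact ⟨f₀, hderivAt, hderiv0, hcont, hnonneg⟩
end

section
/- Let f and f_n (n ∈ ℕ) be continuous functions from [0,∞) to ℝ, set F_n(t) = ∫₀ᵗ f_n(u) du and F(t) = ∫₀ᵗ f(u) du, and assume that F and each F_n are bounded on [0,∞), that f is non-negative, and that sup_{t≥0} |f_n(t) − f(t)| → 0 as n → ∞. Let f_{n0} and f₀ denote the slope functions (derivative on (0,∞), right derivative at 0) of MF_n and MF respectively. Then sup_{t≥0} |f_{n0}(t) − f₀(t)| → 0 as n → ∞. -/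
open MeasureTheory Filter Set Topology

namespace LCMaux

lemma lcm_le {θ g : ℝ → ℝ} (hb : ∃ C : ℝ, ∀ t ∈ Set.Ici (0:ℝ), |g t| ≤ C)
    (hc : ConcaveOn ℝ (Set.Ici 0) g) (hle : ∀ t ∈ Set.Ici (0:ℝ), θ t ≤ g t)
    {x : ℝ} (hx : 0 ≤ x) : leastConcaveMajorant θ x ≤ g x := by
  refine csInf_le ⟨θ x, ?_⟩ ⟨g, hb, hc, hle, rfl⟩
  rintro y ⟨g', _, _, hle', rfl⟩
  exact hle' x hx

lemma adm_const {θ : ℝ → ℝ} {C : ℝ} (hb : ∀ t ∈ Set.Ici (0:ℝ), |θ t| ≤ C) :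
    ∃ g : ℝ → ℝ, ((∃ C' : ℝ, ∀ t ∈ Set.Ici (0:ℝ), |g t| ≤ C') ∧
      ConcaveOn ℝ (Set.Ici 0) g ∧ (∀ t ∈ Set.Ici (0:ℝ), θ t ≤ g t)) ∧ ∀ x, g x = C :=
  ⟨fun _ => C, ⟨⟨|C|, fun _ _ => le_rfl⟩, concaveOn_const C (convex_Ici 0),
    fun t ht => (abs_le.1 (hb t ht)).2⟩, fun _ => rfl⟩

lemma le_lcm {θ : ℝ → ℝ} {C : ℝ} (hb : ∀ t ∈ Set.Ici (0:ℝ), |θ t| ≤ C)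
    {x : ℝ} (hx : 0 ≤ x) : θ x ≤ leastConcaveMajorant θ x := by
  obtain ⟨g, ⟨hgb, hgc, hgle⟩, hgC⟩ := adm_const hb
  refine le_csInf ⟨g x, g, hgb, hgc, hgle, rfl⟩ ?_
  rintro y ⟨g', _, _, hle', rfl⟩
  exact hle' x hx

lemma lcm_le_const {θ : ℝ → ℝ} {C : ℝ} (hb : ∀ t ∈ Set.Ici (0:ℝ), |θ t| ≤ C)
    {x : ℝ} (hx : 0 ≤ x) : leastConcaveMajorant θ x ≤ C := by
  obtain ⟨g, ⟨hgb, hgc, hgle⟩, hgC⟩ := adm_const hb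
  have := lcm_le hgb hgc hgle hx
  rwa [hgC] at this

lemma lcm_abs_le {θ : ℝ → ℝ} {C : ℝ} (hb : ∀ t ∈ Set.Ici (0:ℝ), |θ t| ≤ C)
    {x : ℝ} (hx : 0 ≤ x) : |leastConcaveMajorant θ x| ≤ C := by
  rw [abs_le]
  refine ⟨le_trans ?_ (le_lcm hb hx), lcm_le_const hb hx⟩
  exact (abs_le.1 (hb x hx)).1

lemma lcm_concave {θ : ℝ → ℝ} {C : ℝ} (hb : ∀ t ∈ Set.Ici (0:ℝ), |θ t| ≤ C) :
    ConcaveOn ℝ (Set.Ici 0) (leastConcaveMajorant θ) := by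
  refine ⟨convex_Ici 0, ?_⟩
  intro x hx y hy a b ha hb' hab
  obtain ⟨g₀, ⟨hg₀b, hg₀c, hg₀le⟩, _⟩ := adm_const hb
  refine le_csInf ⟨g₀ _, g₀, hg₀b, hg₀c, hg₀le, rfl⟩ ?_
  rintro z ⟨g, hgb, hgc, hgle, rfl⟩
  have h1 : leastConcaveMajorant θ x ≤ g x := lcm_le hgb hgc hgle hx
  have h2 : leastConcaveMajorant θ y ≤ g y := lcm_le hgb hgc hgle hy
  calc a • leastConcaveMajorant θ x + b • leastConcaveMajorant θ y
      ≤ a • g x + b • g y :=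
        add_le_add (smul_le_smul_of_nonneg_left h1 ha) (smul_le_smul_of_nonneg_left h2 hb')
    _ ≤ g (a • x + b • y) := hgc.2 hx hy ha hb' hab

lemma concaveOn_linear {c : ℝ} : ConcaveOn ℝ (Set.Ici 0) (fun t : ℝ => c * t) := by
  refine ⟨convex_Ici 0, ?_⟩
  intro x _ y _ a b _ _ _
  simp only [smul_eq_mul]
  ring_nf
  exact le_rfl

/-- comparison: if `θ₁ ≤ θ₂ + c·t` on `[0,∞)` then `Mθ₁ ≤ Mθ₂ + c·x`. -/
lemma lcm_le_lcm_add_linear {θ₁ θ₂ : ℝ → ℝ} {c C₁ C₂ : ℝ}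
    (hb1 : ∀ t ∈ Set.Ici (0:ℝ), |θ₁ t| ≤ C₁) (hb2 : ∀ t ∈ Set.Ici (0:ℝ), |θ₂ t| ≤ C₂)
    (hle : ∀ t ∈ Set.Ici (0:ℝ), θ₁ t ≤ θ₂ t + c * t) {x : ℝ} (hx : 0 ≤ x) :
    leastConcaveMajorant θ₁ x ≤ leastConcaveMajorant θ₂ x + c * x := by
  rw [← sub_le_iff_le_add]
  obtain ⟨g₀, ⟨hg₀b, hg₀c, hg₀le⟩, _⟩ := adm_const hb2
  refine le_csInf ⟨g₀ _, g₀, hg₀b, hg₀c, hg₀le, rfl⟩ ?_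
  rintro z ⟨g, hgb, hgc, hgle, rfl⟩
  rw [sub_le_iff_le_add]
  have hC₁0 : (0:ℝ) ≤ C₁ := le_trans (abs_nonneg _) (hb1 0 Set.self_mem_Ici)
  set h : ℝ → ℝ := fun t => min (g t + c * t) C₁ with hh
  have hhb : ∃ C : ℝ, ∀ t ∈ Set.Ici (0:ℝ), |h t| ≤ C := by
    refine ⟨C₁, fun t ht => abs_le.2 ⟨?_, min_le_right _ _⟩⟩
    calc -C₁ ≤ θ₁ t := (abs_le.1 (hb1 t ht)).1
      _ ≤ h t := le_min (le_trans (hle t ht)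
          (add_le_add_left (hgle t ht) _)) ((abs_le.1 (hb1 t ht)).2)
  have hhc : ConcaveOn ℝ (Set.Ici 0) h :=
    (hgc.add concaveOn_linear).inf (concaveOn_const C₁ (convex_Ici 0))
  have hhle : ∀ t ∈ Set.Ici (0:ℝ), θ₁ t ≤ h t := fun t ht =>
    le_min (le_trans (hle t ht) (add_le_add_left (hgle t ht) _)) ((abs_le.1 (hb1 t ht)).2)
  calc leastConcaveMajorant θ₁ x ≤ h x := lcm_le hhb hhc hhle hx
    _ ≤ g x + c * x := min_le_left _ _

section Deriv

variable {G f0 : ℝ → ℝ}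

lemma concave_secant_anti (hc : ConcaveOn ℝ (Set.Ici 0) G) {a x y : ℝ} (ha : 0 ≤ a)
    (hx : 0 ≤ x) (hy : 0 ≤ y) (hxa : x ≠ a) (hya : y ≠ a) (hxy : x ≤ y) :
    (G y - G a) / (y - a) ≤ (G x - G a) / (x - a) := by
  have h := hc.neg.secant_mono (a := a) (x := x) (y := y) ha hx hy hxa hya hxy
  simp only [Pi.neg_apply] at h
  have e1 : (-G x - -G a) / (x - a) = -((G x - G a) / (x - a)) := by
    rw [neg_sub_neg, ← neg_sub (G x) (G a), neg_div]
  have e2 : (-G y - -G a) / (y - a) = -((G y - G a) / (y - a)) := by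
    rw [neg_sub_neg, ← neg_sub (G y) (G a), neg_div]
  rw [e1, e2] at h
  exact neg_le_neg_iff.1 h

lemma tendsto_slope_right (hd : ∀ x : ℝ, 0 < x → HasDerivAt G (f0 x) x)
    (hd0 : HasDerivWithinAt G (f0 0) (Set.Ici 0) 0) {a : ℝ} (ha : 0 ≤ a) :
    Tendsto (slope G a) (𝓝[>] a) (𝓝 (f0 a)) := by
  rcases eq_or_lt_of_le ha with h | h
  · have := hasDerivWithinAt_iff_tendsto_slope.1 hd0
    rw [Set.Ici_sdiff_left] at this
    rw [← h]
    exact this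
  · exact (hasDerivAt_iff_tendsto_slope.1 (hd a h)).mono_left
      (nhdsWithin_mono _ fun y hy => Set.mem_compl_singleton_iff.2 (ne_of_gt hy))

lemma slope_le_deriv (hc : ConcaveOn ℝ (Set.Ici 0) G)
    (hd : ∀ x : ℝ, 0 < x → HasDerivAt G (f0 x) x)
    (hd0 : HasDerivWithinAt G (f0 0) (Set.Ici 0) 0) {a b : ℝ} (ha : 0 ≤ a) (hab : a < b) :
    (G b - G a) / (b - a) ≤ f0 a := by
  refine ge_of_tendsto (tendsto_slope_right hd hd0 ha) ?_
  filter_upwards [Ioo_mem_nhdsGT hab] with y hy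
  have := concave_secant_anti hc ha (le_trans ha hy.1.le) (le_trans ha hab.le)
    hy.1.ne' hab.ne' hy.2.le
  rw [slope_def_field]
  exact this

lemma deriv_le_slope (hc : ConcaveOn ℝ (Set.Ici 0) G)
    (hd : ∀ x : ℝ, 0 < x → HasDerivAt G (f0 x) x)
    (hd0 : HasDerivWithinAt G (f0 0) (Set.Ici 0) 0) {a b : ℝ} (ha : 0 ≤ a) (hab : a < b) :
    f0 b ≤ (G b - G a) / (b - a) := by
  have hb0 : 0 ≤ b := le_trans ha hab.le
  refine le_of_tendsto (tendsto_slope_right hd hd0 hb0) ?_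
  filter_upwards [self_mem_nhdsWithin] with z hz
  have hz' : b < z := hz
  have := concave_secant_anti hc hb0 ha (le_trans hb0 hz'.le) hab.ne hz'.ne'
    (le_trans hab.le hz'.le)
  rw [slope_def_field]
  calc (G z - G b) / (z - b) ≤ (G a - G b) / (a - b) := this
    _ = (G b - G a) / (b - a) := by rw [← neg_sub (G b) (G a), ← neg_sub b a, neg_div_neg_eq]

lemma deriv_anti (hc : ConcaveOn ℝ (Set.Ici 0) G)
    (hd : ∀ x : ℝ, 0 < x → HasDerivAt G (f0 x) x)
    (hd0 : HasDerivWithinAt G (f0 0) (Set.Ici 0) 0) :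
    AntitoneOn f0 (Set.Ici 0) := by
  intro a ha b hb hab
  rcases eq_or_lt_of_le hab with h | h
  · rw [h]
  · exact le_trans (deriv_le_slope hc hd hd0 ha h) (slope_le_deriv hc hd hd0 ha h)

lemma deriv_nonneg (hc : ConcaveOn ℝ (Set.Ici 0) G)
    (hd : ∀ x : ℝ, 0 < x → HasDerivAt G (f0 x) x)
    (hd0 : HasDerivWithinAt G (f0 0) (Set.Ici 0) 0) {C : ℝ}
    (hC : ∀ t ∈ Set.Ici (0:ℝ), |G t| ≤ C) {x : ℝ} (hx : 0 ≤ x) : 0 ≤ f0 x := by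
  by_contra h
  push_neg at h
  have hC0 : (0:ℝ) ≤ C := le_trans (abs_nonneg _) (hC 0 Set.self_mem_Ici)
  have hq : 0 < (2 * C + 1) / (-f0 x) := div_pos (by linarith) (by linarith)
  set b := x + (2 * C + 1) / (-f0 x) with hbdef
  have hxb : x < b := by simp only [hbdef]; linarith
  have h1 := slope_le_deriv hc hd hd0 hx hxb
  have hbx : 0 < b - x := by linarith
  rw [div_le_iff₀ hbx] at h1
  have hfne : f0 x ≠ 0 := ne_of_lt h
  have hbxval : b - x = (2 * C + 1) / (-f0 x) := by simp [hbdef]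
  have hne : -f0 x ≠ 0 := by linarith
  have hmc : -f0 x * ((2 * C + 1) / (-f0 x)) = 2 * C + 1 := mul_div_cancel₀ _ hne
  have heq : f0 x * (b - x) = -(2 * C + 1) := by
    rw [hbxval]; linear_combination -hmc
  have hGb := abs_le.1 (hC b (le_of_lt (lt_of_le_of_lt hx hxb)))
  have hGx := abs_le.1 (hC x hx)
  rw [heq] at h1
  linarith [hGb.1, hGx.2]

lemma G_contOn (hd : ∀ x : ℝ, 0 < x → HasDerivAt G (f0 x) x)
    (hd0 : HasDerivWithinAt G (f0 0) (Set.Ici 0) 0) : ContinuousOn G (Set.Ici 0) := by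
  intro x hx
  rcases eq_or_lt_of_le (Set.mem_Ici.1 hx) with h | h
  · rw [← h]; exact hd0.continuousWithinAt
  · exact (hd x h).continuousAt.continuousWithinAt

lemma deriv_continuousOn (hc : ConcaveOn ℝ (Set.Ici 0) G)
    (hd : ∀ x : ℝ, 0 < x → HasDerivAt G (f0 x) x)
    (hd0 : HasDerivWithinAt G (f0 0) (Set.Ici 0) 0) :
    ContinuousOn f0 (Set.Ici 0) := by
  have hGc := G_contOn hd hd0
  have hanti := deriv_anti hc hd hd0
  intro x hx
  rw [ContinuousWithinAt]
  refine tendsto_order.2 ⟨?_, ?_⟩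
  · intro c hc'
    obtain ⟨b, hcb, hxb⟩ :=
      (((tendsto_slope_right hd hd0 hx).eventually (eventually_gt_nhds hc')).and
        self_mem_nhdsWithin).exists
    have hxb' : x < b := hxb
    have hval : c < (G b - G x) / (b - x) := by rwa [slope_def_field] at hcb
    have hcw : ContinuousWithinAt (fun y => (G b - G y) / (b - y)) (Set.Ici 0) x :=
      (continuousWithinAt_const.sub (hGc x hx)).div
        (continuousWithinAt_const.sub continuousWithinAt_id) (sub_ne_zero_of_ne hxb'.ne')
    filter_upwards [hcw.eventually (eventually_gt_nhds hval),
      (eventually_lt_nhds hxb').filter_mono nhdsWithin_le_nhds, self_mem_nhdsWithin]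
      with y h1 h2 hy0
    rcases le_or_gt y x with hyx | hxy'
    · exact lt_of_lt_of_le hc' (hanti hy0 hx hyx)
    · exact lt_of_lt_of_le h1 (slope_le_deriv hc hd hd0 hy0 h2)
  · intro c hc'
    rcases eq_or_lt_of_le (Set.mem_Ici.1 hx) with h0 | h0
    · filter_upwards [self_mem_nhdsWithin] with y hy
      exact lt_of_le_of_lt (hanti hx hy (h0 ▸ hy)) hc'
    · have hleft : Tendsto (slope G x) (𝓝[<] x) (𝓝 (f0 x)) :=
        (hasDerivAt_iff_tendsto_slope.1 (hd x h0)).mono_left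
          (nhdsWithin_mono _ fun y hy => Set.mem_compl_singleton_iff.2 (ne_of_lt hy))
      obtain ⟨a, hsl, ha0, hax⟩ :=
        ((hleft.eventually (eventually_lt_nhds hc')).and
          (((eventually_gt_nhds h0).filter_mono nhdsWithin_le_nhds).and
            self_mem_nhdsWithin)).exists
      have hax' : a < x := hax
      have ha0' : (0:ℝ) ≤ a := le_of_lt ha0
      have hsl' : (G x - G a) / (x - a) < c := by
        rwa [slope_comm, slope_def_field] at hsl
      have hcw : ContinuousWithinAt (fun y => (G y - G a) / (y - a)) (Set.Ici 0) x :=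
        ((hGc x hx).sub continuousWithinAt_const).div
          (continuousWithinAt_id.sub continuousWithinAt_const) (sub_ne_zero_of_ne hax'.ne')
      filter_upwards [hcw.eventually (eventually_lt_nhds hsl'),
        (eventually_gt_nhds hax').filter_mono nhdsWithin_le_nhds, self_mem_nhdsWithin]
        with y h1 h2 hy0
      rcases le_or_gt x y with hxy | hyx
      · exact lt_of_le_of_lt (hanti hx hy0 hxy) hc'
      · exact lt_of_le_of_lt (deriv_le_slope hc hd hd0 ha0' h2) h1

end Deriv

end LCMaux

theorem slopes_of_lcm_tendstoUniformly
    (fseq : ℕ → ℝ → ℝ) (f : ℝ → ℝ)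
    (hfn : ∀ n, ContinuousOn (fseq n) (Set.Ici 0))
    (hf : ContinuousOn f (Set.Ici 0))
    (hfpos : ∀ t ∈ Set.Ici (0:ℝ), 0 ≤ f t)
    (Fseq : ℕ → ℝ → ℝ) (F : ℝ → ℝ)
    (hFn : ∀ n t, Fseq n t = ∫ u in (0:ℝ)..t, fseq n u)
    (hF : ∀ t, F t = ∫ u in (0:ℝ)..t, f u)
    (hFnbdd : ∀ n, ∃ C : ℝ, ∀ t ∈ Set.Ici (0:ℝ), |Fseq n t| ≤ C)
    (hFbdd : ∃ C : ℝ, ∀ t ∈ Set.Ici (0:ℝ), |F t| ≤ C)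
    (hconv : TendstoUniformlyOn fseq f atTop (Set.Ici 0))
    (fn0 : ℕ → ℝ → ℝ) (f0 : ℝ → ℝ)
    (hfn0 : ∀ n, (∀ x : ℝ, 0 < x → HasDerivAt (leastConcaveMajorant (Fseq n)) (fn0 n x) x) ∧
      HasDerivWithinAt (leastConcaveMajorant (Fseq n)) (fn0 n 0) (Set.Ici 0) 0)
    (hf0 : (∀ x : ℝ, 0 < x → HasDerivAt (leastConcaveMajorant F) (f0 x) x) ∧
      HasDerivWithinAt (leastConcaveMajorant F) (f0 0) (Set.Ici 0) 0) :
    TendstoUniformlyOn fn0 f0 atTop (Set.Ici 0) := by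
  classical
  obtain ⟨C₀, hC₀⟩ := hFbdd
  have hC₀0 : (0:ℝ) ≤ C₀ := le_trans (abs_nonneg _) (hC₀ 0 Set.self_mem_Ici)
  set G : ℝ → ℝ := leastConcaveMajorant F with hGdef
  set Gn : ℕ → ℝ → ℝ := fun n => leastConcaveMajorant (Fseq n) with hGndef
  have hGconc : ConcaveOn ℝ (Set.Ici 0) G := LCMaux.lcm_concave hC₀
  have hGabs : ∀ t ∈ Set.Ici (0:ℝ), |G t| ≤ C₀ := fun t ht => LCMaux.lcm_abs_le hC₀ ht
  have hGnconc : ∀ n, ConcaveOn ℝ (Set.Ici 0) (Gn n) :=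
    fun n => LCMaux.lcm_concave (hFnbdd n).choose_spec
  have hGnabs : ∀ n, ∀ t ∈ Set.Ici (0:ℝ), |Gn n t| ≤ (hFnbdd n).choose :=
    fun n t ht => LCMaux.lcm_abs_le (hFnbdd n).choose_spec ht
  have hf0anti : AntitoneOn f0 (Set.Ici 0) := LCMaux.deriv_anti hGconc hf0.1 hf0.2
  have hf0cont : ContinuousOn f0 (Set.Ici 0) := LCMaux.deriv_continuousOn hGconc hf0.1 hf0.2
  have hf0nonneg : ∀ x : ℝ, 0 ≤ x → 0 ≤ f0 x :=
    fun x hx => LCMaux.deriv_nonneg hGconc hf0.1 hf0.2 hGabs hx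
  have hfn0anti : ∀ n, AntitoneOn (fn0 n) (Set.Ici 0) :=
    fun n => LCMaux.deriv_anti (hGnconc n) (hfn0 n).1 (hfn0 n).2
  have hfn0nonneg : ∀ n, ∀ x : ℝ, 0 ≤ x → 0 ≤ fn0 n x :=
    fun n x hx => LCMaux.deriv_nonneg (hGnconc n) (hfn0 n).1 (hfn0 n).2 (hGnabs n) hx
  have S1G : ∀ a b : ℝ, 0 ≤ a → a < b → (G b - G a) / (b - a) ≤ f0 a :=
    fun a b ha hab => LCMaux.slope_le_deriv hGconc hf0.1 hf0.2 ha hab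
  have S2G : ∀ a b : ℝ, 0 ≤ a → a < b → f0 b ≤ (G b - G a) / (b - a) :=
    fun a b ha hab => LCMaux.deriv_le_slope hGconc hf0.1 hf0.2 ha hab
  have S1n : ∀ n, ∀ a b : ℝ, 0 ≤ a → a < b → (Gn n b - Gn n a) / (b - a) ≤ fn0 n a :=
    fun n a b ha hab => LCMaux.slope_le_deriv (hGnconc n) (hfn0 n).1 (hfn0 n).2 ha hab
  have S2n : ∀ n, ∀ a b : ℝ, 0 ≤ a → a < b → fn0 n b ≤ (Gn n b - Gn n a) / (b - a) :=
    fun n a b ha hab => LCMaux.deriv_le_slope (hGnconc n) (hfn0 n).1 (hfn0 n).2 ha hab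
  rw [Metric.tendstoUniformlyOn_iff]
  intro ε hε
  set T : ℝ := max 1 (8 * C₀ / ε) with hTdef
  have hT1 : (1:ℝ) ≤ T := le_max_left _ _
  have hT0 : (0:ℝ) < T := lt_of_lt_of_le one_pos hT1
  have hCT : 2 * C₀ / T ≤ ε / 4 := by
    rw [div_le_iff₀ hT0]
    have h8 : 8 * C₀ / ε ≤ T := le_max_right _ _
    calc 2 * C₀ = ε / 4 * (8 * C₀ / ε) := by field_simp; ring
      _ ≤ ε / 4 * T := mul_le_mul_of_nonneg_left h8 (by linarith)
  have hcomp : IsCompact (Set.Icc (0:ℝ) (T + 1)) := isCompact_Icc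
  have hUC := hcomp.uniformContinuousOn_of_continuous (hf0cont.mono Set.Icc_subset_Ici_self)
  obtain ⟨δ', hδ'pos, hδ'⟩ := Metric.uniformContinuousOn_iff.1 hUC (ε / 4) (by linarith)
  set h : ℝ := min (δ' / 2) 1 with hhdef
  have hhpos : 0 < h := lt_min (by linarith) one_pos
  have hh1 : h ≤ 1 := min_le_right _ _
  have hhδ : h < δ' := lt_of_le_of_lt (min_le_left _ _) (by linarith)
  have hUC' : ∀ u v : ℝ, 0 ≤ u → u ≤ T + 1 → 0 ≤ v → v ≤ T + 1 → |u - v| ≤ h →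
      |f0 u - f0 v| ≤ ε / 4 := by
    intro u v hu hu' hv hv' huv
    have := hδ' u ⟨hu, hu'⟩ v ⟨hv, hv'⟩ (by rw [Real.dist_eq]; exact lt_of_le_of_lt huv hhδ)
    rw [Real.dist_eq] at this
    exact le_of_lt this
  set δ₀ : ℝ := ε / 4 * h / (2 * T + 1) with hδ₀def
  have h2T : (0:ℝ) < 2 * T + 1 := by linarith
  have hδ₀pos : 0 < δ₀ := div_pos (mul_pos (by linarith) hhpos) h2T
  have hδ₀0 : 0 ≤ δ₀ := le_of_lt hδ₀pos
  have hδ₀key : δ₀ * (2 * T + 1) / h = ε / 4 := by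
    rw [hδ₀def]
    field_simp
  have hδ₀le : δ₀ ≤ ε / 4 := by
    rw [hδ₀def, mul_div_assoc]
    have : h / (2 * T + 1) ≤ 1 := (div_le_one h2T).2 (by linarith)
    nlinarith
  have hev := Metric.tendstoUniformlyOn_iff.1 hconv δ₀ hδ₀pos
  filter_upwards [hev] with n hn
  intro x hx
  have hx0 : (0:ℝ) ≤ x := hx
  have hfd : ∀ t ∈ Set.Ici (0:ℝ), |fseq n t - f t| ≤ δ₀ := by
    intro t ht
    have := hn t ht
    rw [Real.dist_eq] at this
    rw [abs_sub_comm]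
    exact le_of_lt this
  have hFd : ∀ t ∈ Set.Ici (0:ℝ), |Fseq n t - F t| ≤ δ₀ * t := by
    intro t ht
    have ht' : (0:ℝ) ≤ t := ht
    have hsub : Set.uIcc (0:ℝ) t ⊆ Set.Ici 0 := by
      rw [Set.uIcc_of_le ht']
      exact fun u hu => hu.1
    have hi1 : IntervalIntegrable (fseq n) volume 0 t := ((hfn n).mono hsub).intervalIntegrable
    have hi2 : IntervalIntegrable f volume 0 t := (hf.mono hsub).intervalIntegrable
    have heq : Fseq n t - F t = ∫ u in (0:ℝ)..t, (fseq n u - f u) := by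
      rw [hFn, hF, intervalIntegral.integral_sub hi1 hi2]
    rw [heq]
    have hb := intervalIntegral.norm_integral_le_of_norm_le_const (C := δ₀)
      (f := fun u => fseq n u - f u) (a := (0:ℝ)) (b := t) ?_
    · rw [Real.norm_eq_abs] at hb
      calc |∫ u in (0:ℝ)..t, (fseq n u - f u)| ≤ δ₀ * |t - 0| := hb
        _ = δ₀ * t := by rw [sub_zero, abs_of_nonneg ht']
    · intro u hu
      have hu' : u ∈ Set.Ici (0:ℝ) := by
        rw [Set.uIoc_of_le ht'] at hu
        exact le_of_lt hu.1
      rw [Real.norm_eq_abs]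
      exact hfd u hu'
  obtain ⟨Cn, hCn⟩ := hFnbdd n
  have hup : ∀ t ∈ Set.Ici (0:ℝ), Gn n t ≤ G t + δ₀ * t := by
    intro t ht
    exact LCMaux.lcm_le_lcm_add_linear hCn hC₀
      (fun s hs => by have := abs_le.1 (hFd s hs); linarith [this.2]) ht
  have hdown : ∀ t ∈ Set.Ici (0:ℝ), G t ≤ Gn n t + δ₀ * t := by
    intro t ht
    exact LCMaux.lcm_le_lcm_add_linear hC₀ hCn
      (fun s hs => by have := abs_le.1 (hFd s hs); linarith [this.1]) ht
  rw [Real.dist_eq]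
  by_cases hxT : x ≤ T
  · -- compact region
    have hupper : fn0 n x - f0 x ≤ ε / 2 := by
      by_cases hxh : x ≤ h
      · have h1 : fn0 n x ≤ fn0 n 0 := hfn0anti n Set.self_mem_Ici hx hx0
        have h2 : fn0 n 0 ≤ f0 0 + δ₀ := by
          refine le_of_tendsto (LCMaux.tendsto_slope_right (hfn0 n).1 (hfn0 n).2 le_rfl) ?_
          filter_upwards [self_mem_nhdsWithin] with t ht
          have ht' : (0:ℝ) < t := ht
          rw [slope_def_field]
          have e1 : Gn n t ≤ G t + δ₀ * t := hup t (le_of_lt ht')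
          have e2 : G 0 ≤ Gn n 0 + δ₀ * 0 := hdown 0 Set.self_mem_Ici
          have e3 : (G t - G 0) / (t - 0) ≤ f0 0 := S1G 0 t le_rfl ht'
          have ht0 : (0:ℝ) < t - 0 := by linarith
          have hnum : Gn n t - Gn n 0 ≤ (G t - G 0) + δ₀ * t := by
            simp only [mul_zero] at e2
            linarith
          calc (Gn n t - Gn n 0) / (t - 0) ≤ ((G t - G 0) + δ₀ * t) / (t - 0) :=
                (div_le_div_iff_of_pos_right ht0).2 hnum
            _ = (G t - G 0) / (t - 0) + δ₀ := by
                rw [add_div]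
                congr 1
                rw [sub_zero, mul_div_assoc, div_self (ne_of_gt ht'), mul_one]
            _ ≤ f0 0 + δ₀ := by linarith
        have h3 : |f0 0 - f0 x| ≤ ε / 4 := by
          refine hUC' 0 x le_rfl (by linarith) hx0 (by linarith) ?_
          rw [zero_sub, abs_neg, abs_of_nonneg hx0]
          exact hxh
        have h3' := abs_le.1 h3
        linarith [h3'.1, h3'.2]
      · push_neg at hxh
        set a : ℝ := x - h with hadef
        have ha0 : (0:ℝ) ≤ a := by simp only [hadef]; linarith
        have hax : a < x := by simp only [hadef]; linarith
        have hxa : x - a = h := by simp only [hadef]; ring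
        have h1 : fn0 n x ≤ (Gn n x - Gn n a) / (x - a) := S2n n a x ha0 hax
        have h2 : (G x - G a) / (x - a) ≤ f0 a := S1G a x ha0 hax
        have e1 : Gn n x ≤ G x + δ₀ * x := hup x hx0
        have e2 : G a ≤ Gn n a + δ₀ * a := hdown a ha0
        rw [hxa] at h1 h2
        have h3 : (Gn n x - Gn n a) / h ≤ ((G x - G a) + δ₀ * (x + a)) / h := by
          refine (div_le_div_iff_of_pos_right hhpos).2 ?_
          linarith
        have h4 : ((G x - G a) + δ₀ * (x + a)) / h = (G x - G a) / h + δ₀ * (x + a) / h :=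
          add_div _ _ _
        have h5 : δ₀ * (x + a) / h ≤ ε / 4 := by
          have hxa2 : x + a ≤ 2 * T + 1 := by simp only [hadef]; linarith
          calc δ₀ * (x + a) / h ≤ δ₀ * (2 * T + 1) / h :=
                (div_le_div_iff_of_pos_right hhpos).2 (mul_le_mul_of_nonneg_left hxa2 hδ₀0)
            _ = ε / 4 := hδ₀key
        have h6 : |f0 a - f0 x| ≤ ε / 4 := by
          refine hUC' a x ha0 (by simp only [hadef]; linarith) hx0 (by linarith) ?_
          rw [show a - x = -h by simp only [hadef]; ring, abs_neg, abs_of_nonneg (le_of_lt hhpos)]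
        have h6' := abs_le.1 h6
        linarith [h6'.1, h6'.2]
    have hlower : f0 x - fn0 n x ≤ ε / 2 := by
      set b : ℝ := x + h with hbdef
      have hxb : x < b := by simp only [hbdef]; linarith
      have hb0 : (0:ℝ) ≤ b := by linarith
      have hbx : b - x = h := by simp only [hbdef]; ring
      have h1 : (Gn n b - Gn n x) / (b - x) ≤ fn0 n x := S1n n x b hx0 hxb
      have h2 : f0 b ≤ (G b - G x) / (b - x) := S2G x b hx0 hxb
      have e1 : G b ≤ Gn n b + δ₀ * b := hdown b hb0
      have e2 : Gn n x ≤ G x + δ₀ * x := hup x hx0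
      rw [hbx] at h1 h2
      have h3 : ((G b - G x) - δ₀ * (b + x)) / h ≤ (Gn n b - Gn n x) / h := by
        refine (div_le_div_iff_of_pos_right hhpos).2 ?_
        linarith
      have h4 : ((G b - G x) - δ₀ * (b + x)) / h = (G b - G x) / h - δ₀ * (b + x) / h :=
        sub_div _ _ _
      have h5 : δ₀ * (b + x) / h ≤ ε / 4 := by
        have hbx2 : b + x ≤ 2 * T + 1 := by simp only [hbdef]; linarith
        calc δ₀ * (b + x) / h ≤ δ₀ * (2 * T + 1) / h :=
              (div_le_div_iff_of_pos_right hhpos).2 (mul_le_mul_of_nonneg_left hbx2 hδ₀0)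
          _ = ε / 4 := hδ₀key
      have h6 : |f0 x - f0 b| ≤ ε / 4 := by
        refine hUC' x b hx0 (by linarith) hb0 (by simp only [hbdef]; linarith) ?_
        rw [show x - b = -h by simp only [hbdef]; ring, abs_neg, abs_of_nonneg (le_of_lt hhpos)]
      have h6' := abs_le.1 h6
      linarith [h6'.1, h6'.2]
    have : |f0 x - fn0 n x| ≤ ε / 2 := abs_le.2 ⟨by linarith, by linarith⟩
    linarith
  · -- tail region
    push_neg at hxT
    have hTmem : T ∈ Set.Ici (0:ℝ) := le_of_lt hT0
    have hf0x : 0 ≤ f0 x := hf0nonneg x hx0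
    have hfn0x : 0 ≤ fn0 n x := hfn0nonneg n x hx0
    have hf0Tx : f0 x ≤ f0 T := hf0anti hTmem hx (le_of_lt hxT)
    have hfn0Tx : fn0 n x ≤ fn0 n T := hfn0anti n hTmem hx (le_of_lt hxT)
    have hGT := abs_le.1 (hGabs T hTmem)
    have hG0 := abs_le.1 (hGabs 0 Set.self_mem_Ici)
    have hf0T : f0 T ≤ 2 * C₀ / T := by
      have := S2G 0 T le_rfl hT0
      rw [sub_zero] at this
      calc f0 T ≤ (G T - G 0) / T := this
        _ ≤ 2 * C₀ / T := (div_le_div_iff_of_pos_right hT0).2 (by linarith [hGT.2, hG0.1])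
    have hfn0T : fn0 n T ≤ 2 * C₀ / T + δ₀ := by
      have h1 := S2n n 0 T le_rfl hT0
      rw [sub_zero] at h1
      have e1 : Gn n T ≤ G T + δ₀ * T := hup T hTmem
      have e2 : G 0 ≤ Gn n 0 + δ₀ * 0 := hdown 0 Set.self_mem_Ici
      simp only [mul_zero] at e2
      calc fn0 n T ≤ (Gn n T - Gn n 0) / T := h1
        _ ≤ (2 * C₀ + δ₀ * T) / T := (div_le_div_iff_of_pos_right hT0).2 (by linarith [hGT.2, hG0.1])
        _ = 2 * C₀ / T + δ₀ := by
            rw [add_div, mul_div_cancel_right₀ _ (ne_of_gt hT0)]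
    have hbnd : |f0 x - fn0 n x| ≤ ε / 2 := by
      refine abs_le.2 ⟨?_, ?_⟩
      · linarith [hf0x, hfn0Tx, hfn0T, hCT, hδ₀le]
      · linarith [hfn0x, hf0Tx, hf0T, hCT]
    linarith
end

section
/- On a probability space, let (f_n) be a sequence of random continuous functions on [0,∞) and f a (possibly random) non-negative continuous function on [0,∞) such that almost surely F_n(t) = ∫₀ᵗ f_n(u) du and F(t) = ∫₀ᵗ f(u) du are bounded on [0,∞). If sup_{t≥0} |f_n(t) − f(t)| → 0 in probability as n → ∞, then sup_{t≥0} |f_{n0}(t) − f₀(t)| → 0 in probability, where f_{n0} and f₀ denote the slope functions (derivative on (0,∞), right derivative at 0) of MF_n and MF respectively. -/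
open MeasureTheory Filter Set

namespace LCM

def Adm (θ : ℝ → ℝ) : Set (ℝ → ℝ) :=
  {g | (∃ C : ℝ, ∀ t ∈ Set.Ici (0:ℝ), |g t| ≤ C) ∧ ConcaveOn ℝ (Set.Ici 0) g ∧
    (∀ t ∈ Set.Ici (0:ℝ), θ t ≤ g t)}

variable {θ : ℝ → ℝ} {C : ℝ}

lemma bddBelow_valset {x : ℝ} (hx : (0:ℝ) ≤ x) :
    θ x ∈ lowerBounds {y : ℝ | ∃ g : ℝ → ℝ,
      (∃ C : ℝ, ∀ t ∈ Set.Ici (0:ℝ), |g t| ≤ C) ∧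
      ConcaveOn ℝ (Set.Ici 0) g ∧
      (∀ t ∈ Set.Ici (0:ℝ), θ t ≤ g t) ∧ y = g x} := by
  rintro y ⟨g, _, _, hmaj, rfl⟩
  exact hmaj x hx

lemma const_mem_Adm (hC : ∀ t ∈ Set.Ici (0:ℝ), |θ t| ≤ C) : (fun _ => C) ∈ Adm θ := by
  have hC0 : 0 ≤ C := le_trans (abs_nonneg _) (hC 0 Set.self_mem_Ici)
  exact ⟨⟨C, fun t _ => by rw [abs_of_nonneg hC0]⟩,
    concaveOn_const _ (convex_Ici _), fun t ht => (abs_le.mp (hC t ht)).2⟩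

lemma lcm_le {g : ℝ → ℝ} (hg : g ∈ Adm θ) {x : ℝ} (hx : (0:ℝ) ≤ x) :
    leastConcaveMajorant θ x ≤ g x := by
  apply csInf_le ⟨θ x, bddBelow_valset hx⟩
  exact ⟨g, hg.1, hg.2.1, hg.2.2, rfl⟩

lemma le_lcm (hC : ∀ t ∈ Set.Ici (0:ℝ), |θ t| ≤ C) {x : ℝ} (hx : (0:ℝ) ≤ x) :
    θ x ≤ leastConcaveMajorant θ x := by
  apply le_csInf
  · exact ⟨C, (fun _ => C), (const_mem_Adm hC).1, (const_mem_Adm hC).2.1,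
      (const_mem_Adm hC).2.2, rfl⟩
  · rintro y ⟨g, _, _, hmaj, rfl⟩; exact hmaj x hx

lemma lcm_concave (hC : ∀ t ∈ Set.Ici (0:ℝ), |θ t| ≤ C) :
    ConcaveOn ℝ (Set.Ici 0) (leastConcaveMajorant θ) := by
  refine ⟨convex_Ici _, fun x hx y hy a b ha hb hab => ?_⟩
  have hz : (0:ℝ) ≤ a • x + b • y := by
    have := add_nonneg (smul_nonneg ha (Set.mem_Ici.mp hx)) (smul_nonneg hb (Set.mem_Ici.mp hy))
    simpa using this
  apply le_csInf
  · exact ⟨C, (fun _ => C), (const_mem_Adm hC).1, (const_mem_Adm hC).2.1,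
      (const_mem_Adm hC).2.2, rfl⟩
  · rintro z ⟨g, hb', hconc, hmaj, rfl⟩
    have hg : g ∈ Adm θ := ⟨hb', hconc, hmaj⟩
    calc a • leastConcaveMajorant θ x + b • leastConcaveMajorant θ y
        ≤ a • g x + b • g y := by
          gcongr
          · exact lcm_le hg (Set.mem_Ici.mp hx)
          · exact lcm_le hg (Set.mem_Ici.mp hy)
      _ ≤ g (a • x + b • y) := hconc.2 hx hy ha hb hab

lemma lcm_le_C (hC : ∀ t ∈ Set.Ici (0:ℝ), |θ t| ≤ C) {x : ℝ} (hx : (0:ℝ) ≤ x) :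
    leastConcaveMajorant θ x ≤ C := lcm_le (const_mem_Adm hC) hx

lemma lcm_abs_le (hC : ∀ t ∈ Set.Ici (0:ℝ), |θ t| ≤ C) {x : ℝ} (hx : (0:ℝ) ≤ x) :
    |leastConcaveMajorant θ x| ≤ C := by
  rw [abs_le]
  refine ⟨le_trans ?_ (le_lcm hC hx), lcm_le_C hC hx⟩
  exact neg_le_of_abs_le (hC x hx)

lemma lcm_mem_Adm (hC : ∀ t ∈ Set.Ici (0:ℝ), |θ t| ≤ C) :
    leastConcaveMajorant θ ∈ Adm θ :=
  ⟨⟨C, fun t ht => lcm_abs_le hC ht⟩, lcm_concave hC, fun t ht => le_lcm hC ht⟩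

/-- the value of the LCM at 0 equals θ 0 = 0, given a linear bound near 0. -/
lemma lcm_zero (hC : ∀ t ∈ Set.Ici (0:ℝ), |θ t| ≤ C) (hθ0 : θ 0 = 0)
    {K : ℝ} (hK : ∀ t ∈ Set.Icc (0:ℝ) 1, θ t ≤ K * t) :
    leastConcaveMajorant θ 0 = 0 := by
  have hC0 : 0 ≤ C := le_trans (abs_nonneg _) (hC 0 Set.self_mem_Ici)
  set K' : ℝ := max K C with hK'
  have hg : (fun t => min (leastConcaveMajorant θ t) (K' * t)) ∈ Adm θ := by
    refine ⟨⟨C, fun t ht => ?_⟩, ?_, fun t ht => ?_⟩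
    · rw [abs_le]
      constructor
      · refine le_min ?_ ?_
        · exact neg_le_of_abs_le (lcm_abs_le hC ht)
        · calc -C ≤ θ t := neg_le_of_abs_le (hC t ht)
            _ ≤ K' * t := ?_
          rcases le_or_gt t 1 with h1 | h1
          · exact le_trans (hK t ⟨ht, h1⟩) (by nlinarith [le_max_left K C, Set.mem_Ici.mp ht])
          · calc θ t ≤ C := (abs_le.mp (hC t ht)).2
              _ ≤ K' * t := by nlinarith [le_max_right K C]
      · exact le_trans (min_le_left _ _) (lcm_le_C hC ht)
    · have haff : ConcaveOn ℝ (Set.Ici (0:ℝ)) (fun t => K' * t) := by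
        refine ⟨convex_Ici _, fun x _ y _ a b _ _ _ => ?_⟩
        simp only [smul_eq_mul]; ring_nf; exact le_rfl
      exact (lcm_concave hC).inf haff
    · refine le_min (le_lcm hC ht) ?_
      rcases le_or_gt t 1 with h1 | h1
      · exact le_trans (hK t ⟨ht, h1⟩) (by nlinarith [le_max_left K C, Set.mem_Ici.mp ht])
      · calc θ t ≤ C := (abs_le.mp (hC t ht)).2
          _ ≤ K' * t := by nlinarith [le_max_right K C]
  have h1 : leastConcaveMajorant θ 0 ≤ 0 := by
    have h := lcm_le hg le_rfl
    have : min (leastConcaveMajorant θ 0) (K' * 0) ≤ 0 := by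
      simpa using min_le_right (leastConcaveMajorant θ 0) 0
    exact h.trans this
  have h2 : 0 ≤ leastConcaveMajorant θ 0 := by
    have := le_lcm hC (le_refl (0:ℝ)); rwa [hθ0] at this
  linarith

end LCM
namespace LCM
section Deriv

variable {θ : ℝ → ℝ} {C : ℝ} {φ : ℝ → ℝ}

local notation "A" => leastConcaveMajorant θ

/-- slope of a concave function decreases when right endpoint moves right. -/
lemma slope_right_anti (hC : ∀ t ∈ Set.Ici (0:ℝ), |θ t| ≤ C)
    {u s v : ℝ} (hu : 0 ≤ u) (hus : u < s) (hsv : s < v) :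
    slope (A) u v ≤ slope (A) u s := by
  have h := (lcm_concave hC).slope_anti_adjacent (Set.mem_Ici.mpr hu)
    (Set.mem_Ici.mpr (by linarith : (0:ℝ) ≤ v)) hus hsv
  rw [slope_def_field, slope_def_field]
  rw [div_le_div_iff₀ (by linarith) (by linarith)] at h ⊢
  nlinarith

/-- slope of a concave function decreases when left endpoint moves right. -/
lemma slope_left_anti (hC : ∀ t ∈ Set.Ici (0:ℝ), |θ t| ≤ C)
    {u s v : ℝ} (hu : 0 ≤ u) (hus : u < s) (hsv : s < v) :
    slope (A) s v ≤ slope (A) u v := by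
  have h := (lcm_concave hC).slope_anti_adjacent (Set.mem_Ici.mpr hu)
    (Set.mem_Ici.mpr (by linarith : (0:ℝ) ≤ v)) hus hsv
  rw [slope_def_field, slope_def_field]
  rw [div_le_div_iff₀ (by linarith) (by linarith)] at h ⊢
  nlinarith

lemma tendsto_slope_right (hφ : ∀ x : ℝ, 0 < x → HasDerivAt (leastConcaveMajorant θ) (φ x) x)
    (hφ0 : HasDerivWithinAt (leastConcaveMajorant θ) (φ 0) (Set.Ici 0) 0)
    {x : ℝ} (hx : 0 ≤ x) :
    Filter.Tendsto (slope (A) x) (nhdsWithin x (Set.Ioi x)) (nhds (φ x)) := by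
  rcases eq_or_lt_of_le hx with rfl | hx'
  · have := hasDerivWithinAt_iff_tendsto_slope.mp hφ0
    refine this.mono_left (nhdsWithin_mono _ ?_)
    intro s hs; exact ⟨Set.mem_Ici.mpr (le_of_lt (Set.mem_Ioi.mp hs)), ne_of_gt (Set.mem_Ioi.mp hs)⟩
  · have := hasDerivAt_iff_tendsto_slope.mp (hφ x hx')
    refine this.mono_left (nhdsWithin_mono _ ?_)
    intro s hs; exact ne_of_gt hs

lemma tendsto_slope_left (hφ : ∀ x : ℝ, 0 < x → HasDerivAt (leastConcaveMajorant θ) (φ x) x)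
    {x : ℝ} (hx : 0 < x) :
    Filter.Tendsto (slope (A) x) (nhdsWithin x (Set.Iio x)) (nhds (φ x)) := by
  have := hasDerivAt_iff_tendsto_slope.mp (hφ x hx)
  refine this.mono_left (nhdsWithin_mono _ ?_)
  intro s hs; exact ne_of_lt hs

/-- the derivative at x dominates slopes to the right. -/
lemma slope_le_deriv (hC : ∀ t ∈ Set.Ici (0:ℝ), |θ t| ≤ C)
    (hφ : ∀ x : ℝ, 0 < x → HasDerivAt (leastConcaveMajorant θ) (φ x) x)
    (hφ0 : HasDerivWithinAt (leastConcaveMajorant θ) (φ 0) (Set.Ici 0) 0)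
    {x t : ℝ} (hx : 0 ≤ x) (hxt : x < t) :
    slope (A) x t ≤ φ x := by
  refine ge_of_tendsto (tendsto_slope_right hφ hφ0 hx) ?_
  filter_upwards [Ioo_mem_nhdsGT_of_mem (Set.left_mem_Ico.mpr hxt)] with s hs
  exact slope_right_anti hC hx hs.1 hs.2

/-- the derivative at x is dominated by slopes from the left. -/
lemma deriv_le_slope (hC : ∀ t ∈ Set.Ici (0:ℝ), |θ t| ≤ C)
    (hφ : ∀ x : ℝ, 0 < x → HasDerivAt (leastConcaveMajorant θ) (φ x) x)
    {u x : ℝ} (hu : 0 ≤ u) (hux : u < x) :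
    φ x ≤ slope (A) u x := by
  have hx : 0 < x := lt_of_le_of_lt hu hux
  refine le_of_tendsto (tendsto_slope_left hφ hx) ?_
  filter_upwards [Ioo_mem_nhdsLT_of_mem (Set.right_mem_Ioc.mpr hux)] with s hs
  rw [slope_comm]
  exact slope_left_anti hC hu hs.1 hs.2

lemma phi_antitone (hC : ∀ t ∈ Set.Ici (0:ℝ), |θ t| ≤ C)
    (hφ : ∀ x : ℝ, 0 < x → HasDerivAt (leastConcaveMajorant θ) (φ x) x)
    (hφ0 : HasDerivWithinAt (leastConcaveMajorant θ) (φ 0) (Set.Ici 0) 0)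
    {x y : ℝ} (hx : 0 ≤ x) (hxy : x < y) : φ y ≤ φ x :=
  le_trans (deriv_le_slope hC hφ hx hxy) (slope_le_deriv hC hφ hφ0 hx hxy)

/-- tangent line lies above the function. -/
lemma tangent_le (hC : ∀ t ∈ Set.Ici (0:ℝ), |θ t| ≤ C)
    (hφ : ∀ x : ℝ, 0 < x → HasDerivAt (leastConcaveMajorant θ) (φ x) x)
    (hφ0 : HasDerivWithinAt (leastConcaveMajorant θ) (φ 0) (Set.Ici 0) 0)
    {x t : ℝ} (hx : 0 ≤ x) (ht : 0 ≤ t) :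
    A t ≤ A x + φ x * (t - x) := by
  rcases lt_trichotomy x t with h | rfl | h
  · have := slope_le_deriv hC hφ hφ0 hx h
    rw [slope_def_field, div_le_iff₀ (by linarith)] at this
    linarith
  · simp
  · have := deriv_le_slope hC hφ ht h
    rw [slope_def_field, le_div_iff₀ (by linarith)] at this
    linarith

lemma phi_nonneg (hC : ∀ t ∈ Set.Ici (0:ℝ), |θ t| ≤ C)
    (hφ : ∀ x : ℝ, 0 < x → HasDerivAt (leastConcaveMajorant θ) (φ x) x)
    (hφ0 : HasDerivWithinAt (leastConcaveMajorant θ) (φ 0) (Set.Ici 0) 0)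
    {x : ℝ} (hx : 0 ≤ x) : 0 ≤ φ x := by
  by_contra hneg
  push_neg at hneg
  set t : ℝ := x + (A x + C + 1) / (-φ x) with hT
  have hAx : -C ≤ A x := neg_le_of_abs_le (lcm_abs_le hC hx)
  have hpos : 0 < (A x + C + 1) / (-φ x) := by
    apply div_pos (by linarith) (by linarith)
  have ht : 0 ≤ t := by rw [hT]; linarith
  have h1 := tangent_le hC hφ hφ0 hx ht
  have h2 : -C ≤ A t := neg_le_of_abs_le (lcm_abs_le hC ht)
  have hφne : φ x ≠ 0 := ne_of_lt hneg
  have h3 : φ x * (t - x) = -(A x + C + 1) := by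
    rw [hT]
    have : x + (A x + C + 1) / -φ x - x = (A x + C + 1) / -φ x := by ring
    rw [this, mul_div_assoc']
    rw [div_eq_iff (by simpa using hφne)]
    ring
  rw [h3] at h1
  linarith

end Deriv
end LCM
namespace LCM
section Struct

variable {θ : ℝ → ℝ} {C : ℝ} {φ : ℝ → ℝ}

local notation "A" => leastConcaveMajorant θ

lemma contA (hφ : ∀ x : ℝ, 0 < x → HasDerivAt (leastConcaveMajorant θ) (φ x) x)
    (hφ0 : HasDerivWithinAt (leastConcaveMajorant θ) (φ 0) (Set.Ici 0) 0) :
    ContinuousOn (A) (Set.Ici 0) := by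
  intro x hx
  rcases eq_or_lt_of_le (Set.mem_Ici.mp hx) with rfl | hx'
  · exact hφ0.continuousWithinAt
  · exact (hφ x hx').continuousAt.continuousWithinAt

lemma mvt (hφ : ∀ x : ℝ, 0 < x → HasDerivAt (leastConcaveMajorant θ) (φ x) x)
    (hφ0 : HasDerivWithinAt (leastConcaveMajorant θ) (φ 0) (Set.Ici 0) 0)
    {u v : ℝ} (hu : 0 ≤ u) (huv : u < v) :
    ∃ ξ ∈ Set.Ioo u v, A v - A u = φ ξ * (v - u) := by
  obtain ⟨ξ, hξ, hval⟩ := exists_hasDerivAt_eq_slope (A) φ huv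
    ((contA hφ hφ0).mono (Set.Icc_subset_Ici_self.trans (by rw [Set.Ici_subset_Ici]; exact hu)))
    (fun x hx => hφ x (lt_of_le_of_lt hu hx.1))
  refine ⟨ξ, hξ, ?_⟩
  rw [hval, div_mul_cancel₀]
  exact ne_of_gt (by linarith)

lemma touch_deriv (hC : ∀ t ∈ Set.Ici (0:ℝ), |θ t| ≤ C)
    {x : ℝ} (hx : 0 < x) (htouch : A x = θ x)
    (hφ : ∀ x : ℝ, 0 < x → HasDerivAt (leastConcaveMajorant θ) (φ x) x)
    {d : ℝ} (hd : HasDerivAt θ d x) : φ x = d := by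
  have hmin : IsLocalMin (fun t => A t - θ t) x := by
    have : ∀ᶠ t in nhds x, A x - θ x ≤ A t - θ t := by
      filter_upwards [Ici_mem_nhds hx] with t ht
      have := le_lcm hC (Set.mem_Ici.mp ht)
      rw [htouch]; linarith
    simpa [IsLocalMin, IsMinFilter, htouch] using this
  have := hmin.hasDerivAt_eq_zero ((hφ x hx).sub hd)
  linarith [this]

lemma chord_le (hC : ∀ t ∈ Set.Ici (0:ℝ), |θ t| ≤ C)
    {u v t : ℝ} (hu : 0 ≤ u) (huv : u < v) (ht : t ∈ Set.Icc u v) :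
    A u + slope (A) u v * (t - u) ≤ A t := by
  have hvu : (0:ℝ) < v - u := by linarith
  set a : ℝ := (v - t) / (v - u) with ha_def
  set b : ℝ := (t - u) / (v - u) with hb_def
  have ha : 0 ≤ a := div_nonneg (by linarith [ht.2]) (le_of_lt hvu)
  have hb : 0 ≤ b := div_nonneg (by linarith [ht.1]) (le_of_lt hvu)
  have hab : a + b = 1 := by rw [ha_def, hb_def]; field_simp; ring
  have hcomb : a • u + b • v = t := by
    rw [ha_def, hb_def]; simp only [smul_eq_mul]; field_simp; ring
  have hconc := (lcm_concave hC).2 (Set.mem_Ici.mpr hu)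
    (Set.mem_Ici.mpr (by linarith : (0:ℝ) ≤ v)) ha hb hab
  rw [hcomb] at hconc
  refine le_trans (le_of_eq ?_) hconc
  rw [slope_def_field, ha_def, hb_def]
  simp only [smul_eq_mul]
  field_simp
  ring


lemma hasDerivAt_affine (cst σ b : ℝ) (x : ℝ) :
    HasDerivAt (fun t : ℝ => cst + σ * (t - b)) σ x := by
  simpa using (((hasDerivAt_id x).sub_const b).const_mul σ).const_add cst

/-- if A is affine on [a,b] then its derivative at b equals the affine slope. -/
lemma affine_deriv_right (hφ : ∀ x : ℝ, 0 < x → HasDerivAt (leastConcaveMajorant θ) (φ x) x)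
    {a b σ : ℝ} (ha : 0 ≤ a) (hab : a < b) (hb : 0 < b)
    (haff : ∀ t ∈ Set.Icc a b, A t = A b + σ * (t - b)) : φ b = σ := by
  have h1 : HasDerivWithinAt (A) σ (Set.Icc a b) b :=
    ((hasDerivAt_affine (A b) σ b b).hasDerivWithinAt).congr
      (fun t ht => haff t ht) (haff b (Set.right_mem_Icc.mpr (le_of_lt hab)))
  have h2 : HasDerivWithinAt (A) (φ b) (Set.Icc a b) b := (hφ b hb).hasDerivWithinAt
  have hu := uniqueDiffOn_Icc hab b (Set.right_mem_Icc.mpr (le_of_lt hab))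
  rw [← h1.derivWithin hu, ← h2.derivWithin hu]

/-- if A is affine on [a,b] then its derivative at a equals the affine slope. -/
lemma affine_deriv_left (hφ : ∀ x : ℝ, 0 < x → HasDerivAt (leastConcaveMajorant θ) (φ x) x)
    (hφ0 : HasDerivWithinAt (leastConcaveMajorant θ) (φ 0) (Set.Ici 0) 0)
    {a b σ : ℝ} (ha : 0 ≤ a) (hab : a < b)
    (haff : ∀ t ∈ Set.Icc a b, A t = A a + σ * (t - a)) : φ a = σ := by
  have h1 : HasDerivWithinAt (A) σ (Set.Icc a b) a :=
    ((hasDerivAt_affine (A a) σ a a).hasDerivWithinAt).congr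
      (fun t ht => haff t ht) (haff a (Set.left_mem_Icc.mpr (le_of_lt hab)))
  have h2 : HasDerivWithinAt (A) (φ a) (Set.Icc a b) a := by
    rcases eq_or_lt_of_le ha with rfl | ha'
    · exact hφ0.mono (fun t ht => Set.mem_Ici.mpr ht.1)
    · exact (hφ a ha').hasDerivWithinAt
  have hu := uniqueDiffOn_Icc hab a (Set.left_mem_Icc.mpr (le_of_lt hab))
  rw [← h1.derivWithin hu, ← h2.derivWithin hu]

/-- On an interval where A is strictly above θ, φ is constant. -/
lemma bridge_phi_const (hC : ∀ t ∈ Set.Ici (0:ℝ), |θ t| ≤ C)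
    (hφ : ∀ x : ℝ, 0 < x → HasDerivAt (leastConcaveMajorant θ) (φ x) x)
    (hφ0 : HasDerivWithinAt (leastConcaveMajorant θ) (φ 0) (Set.Ici 0) 0)
    (hθc : ContinuousOn θ (Set.Ici 0))
    {p q : ℝ} (hp : 0 ≤ p) (hgap : ∀ t ∈ Set.Ioo p q, θ t < A t)
    {s1 s2 : ℝ} (hs1 : s1 ∈ Set.Ioo p q) (hs2 : s2 ∈ Set.Ioo p q) (h12 : s1 < s2) :
    φ s1 = φ s2 := by
  have hs1p : 0 < s1 := lt_of_le_of_lt hp hs1.1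
  refine le_antisymm ?_ (phi_antitone hC hφ hφ0 (le_of_lt hs1p) h12)
  by_contra hlt
  push_neg at hlt
  -- hlt : φ s2 < φ s1
  -- minimum of A - θ over [s1, s2]
  have hIccsub : Set.Icc s1 s2 ⊆ Set.Ioo p q := fun t ht =>
    ⟨lt_of_lt_of_le hs1.1 ht.1, lt_of_le_of_lt ht.2 hs2.2⟩
  have hIccIci : Set.Icc s1 s2 ⊆ Set.Ici (0:ℝ) := fun t ht =>
    Set.mem_Ici.mpr (le_trans (le_of_lt hs1p) ht.1)
  obtain ⟨tm, htm, htmin⟩ := IsCompact.exists_isMinOn isCompact_Icc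
    (Set.nonempty_Icc.mpr (le_of_lt h12))
    (((contA hφ hφ0).mono hIccIci).sub (hθc.mono hIccIci))
  set m : ℝ := A tm - θ tm with hm_def
  have hm : 0 < m := sub_pos.mpr (hgap tm (hIccsub htm))
  set Δ : ℝ := φ s1 - φ s2 with hΔ_def
  have hΔ : 0 < Δ := sub_pos.mpr hlt
  set ρ : ℝ := min ((s2 - s1)/2) (m / (2*Δ + 1)) with hρ_def
  have hρ : 0 < ρ := lt_min (by linarith) (div_pos hm (by linarith))
  have hρΔ : 2 * ρ * Δ < m := by
    have h1 : ρ ≤ m / (2*Δ + 1) := min_le_right _ _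
    have := mul_le_mul_of_nonneg_right h1 (le_of_lt hΔ)
    rw [div_mul_eq_mul_div, le_div_iff₀ (by linarith)] at this
    nlinarith
  set c : ℝ := (φ s1 + φ s2)/2 with hc_def
  set S : Set ℝ := {t | t ∈ Set.Icc s1 s2 ∧ φ t ≤ c} with hS_def
  have hs2S : s2 ∈ S := ⟨Set.right_mem_Icc.mpr (le_of_lt h12), by rw [hc_def]; linarith⟩
  have hSne : S.Nonempty := ⟨s2, hs2S⟩
  have hSbdd : BddBelow S := ⟨s1, fun t ht => ht.1.1⟩
  set w : ℝ := sInf S with hw_def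
  have hw1 : s1 ≤ w := le_csInf hSne (fun t ht => ht.1.1)
  have hw2 : w ≤ s2 := csInf_le hSbdd hs2S
  -- pick v' ∈ S with v' < w + ρ
  obtain ⟨v', hv'S, hv'lt⟩ := exists_lt_of_csInf_lt hSne (by linarith : sInf S < w + ρ)
  have hv'w : w ≤ v' := csInf_le hSbdd hv'S
  set u : ℝ := max s1 (w - ρ) with hu_def
  have hus1 : s1 ≤ u := le_max_left _ _
  have huw : u ≤ w := max_le hw1 (by linarith)
  have hu0 : 0 < u := lt_of_lt_of_le hs1p hus1
  have hφu : c < φ u := by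
    rcases le_or_gt (w - ρ) s1 with hcase | hcase
    · have : u = s1 := max_eq_left hcase
      rw [this, hc_def]; linarith
    · have hueq : u = w - ρ := max_eq_right (le_of_lt hcase)
      have hultw : u < w := by rw [hueq]; linarith
      have hnotS : u ∉ S := fun hmem => absurd (csInf_le hSbdd hmem) (not_le.mpr hultw)
      have huIcc : u ∈ Set.Icc s1 s2 := ⟨hus1, le_trans huw hw2⟩
      by_contra hle
      push_neg at hle
      exact hnotS ⟨huIcc, hle⟩
  have hφv' : φ v' ≤ c := hv'S.2
  have hv'0 : 0 ≤ v' := le_trans (le_of_lt hs1p) hv'S.1.1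
  have huv' : u < v' := by
    by_contra hle
    push_neg at hle
    rcases eq_or_lt_of_le hle with heq | hlt'
    · rw [heq] at hφv'; linarith
    · have := phi_antitone hC hφ hφ0 hv'0 hlt'
      linarith
  have hdiff : v' - u < 2 * ρ := by
    have h1 : w - ρ ≤ u := le_max_right _ _
    linarith
  set σ : ℝ := slope (A) u v' with hσ_def
  have hσ1 : φ v' ≤ σ := deriv_le_slope hC hφ (le_of_lt hu0) huv'
  have hσ2 : σ ≤ φ u := slope_le_deriv hC hφ hφ0 (le_of_lt hu0) huv'
  set L : ℝ → ℝ := fun t => A u + σ * (t - u) with hL_def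
  have hLv' : L v' = A v' := by
    rw [hL_def]; simp only; rw [hσ_def, slope_def_field,
      div_mul_cancel₀ _ (ne_of_gt (sub_pos.mpr huv'))]
    ring
  have hφus1 : φ u ≤ φ s1 := by
    rcases eq_or_lt_of_le hus1 with heq | hlt'
    · rw [← heq]
    · exact phi_antitone hC hφ hφ0 (le_of_lt hs1p) hlt'
  have hφv's2 : φ s2 ≤ φ v' := by
    rcases eq_or_lt_of_le hv'S.1.2 with heq | hlt'
    · rw [heq]
    · exact phi_antitone hC hφ hφ0 hv'0 hlt'
  -- A - L is small on [u, v']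
  have hAL : ∀ t ∈ Set.Icc u v', A t - L t ≤ 2 * ρ * Δ := by
    intro t ht
    have h1 := tangent_le hC hφ hφ0 (le_of_lt hu0) (le_trans (le_of_lt hu0) ht.1)
    have h2 : A t - L t ≤ (φ u - σ) * (t - u) := by
      have hLt : L t = A u + σ * (t - u) := by rw [hL_def]
      have hexp : (φ u - σ) * (t - u) = φ u * (t - u) - σ * (t - u) := by ring
      rw [hLt, hexp]; linarith
    have h3 : (φ u - σ) * (t - u) ≤ Δ * (2 * ρ) := by
      have hb1 : 0 ≤ φ u - σ := by linarith
      have hb2 : 0 ≤ t - u := by linarith [ht.1]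
      have hb3 : φ u - σ ≤ Δ := by rw [hΔ_def]; rw [hc_def] at hφu hφv'; linarith
      have hb4 : t - u ≤ 2 * ρ := by linarith [ht.2]
      exact mul_le_mul hb3 hb4 hb2 (le_of_lt hΔ)
    have heq2 : Δ * (2 * ρ) = 2 * ρ * Δ := by ring
    linarith
  -- A lies below L outside [u, v']
  have hout : ∀ t ∈ Set.Ici (0:ℝ), t ∉ Set.Icc u v' → A t ≤ L t := by
    intro t ht htout
    rw [Set.mem_Icc, not_and_or] at htout
    rcases htout with h | h
    · push_neg at h
      have h1 := tangent_le hC hφ hφ0 (le_of_lt hu0) (Set.mem_Ici.mp ht)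
      have h2 : φ u * (t - u) ≤ σ * (t - u) :=
        mul_le_mul_of_nonpos_right hσ2 (by linarith)
      have hLt : L t = A u + σ * (t - u) := by rw [hL_def]
      rw [hLt]; linarith
    · push_neg at h
      have h1 := tangent_le hC hφ hφ0 hv'0 (Set.mem_Ici.mp ht)
      have h2 : φ v' * (t - v') ≤ σ * (t - v') :=
        mul_le_mul_of_nonneg_right hσ1 (by linarith)
      have h3 : L t = A v' + σ * (t - v') := by
        rw [← hLv', hL_def]; ring
      rw [h3]; linarith
  -- the candidate majorant
  have hIccuv : Set.Icc u v' ⊆ Set.Ioo p q := fun t ht =>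
    ⟨lt_of_lt_of_le hs1.1 (le_trans hus1 ht.1),
     lt_of_le_of_lt (le_trans ht.2 hv'S.1.2) hs2.2⟩
  have hIccuv' : Set.Icc u v' ⊆ Set.Icc s1 s2 := fun t ht =>
    ⟨le_trans hus1 ht.1, le_trans ht.2 hv'S.1.2⟩
  have hWmaj : ∀ t ∈ Set.Ici (0:ℝ), θ t ≤ min (A t) (L t) := by
    intro t ht
    by_cases htin : t ∈ Set.Icc u v'
    · refine le_min (le_lcm hC (Set.mem_Ici.mp ht)) ?_
      have h1 := hAL t htin
      have h2 : m ≤ A t - θ t := htmin (hIccuv' htin)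
      linarith
    · rw [min_eq_left (hout t ht htin)]
      exact le_lcm hC (Set.mem_Ici.mp ht)
  have hLconc : ConcaveOn ℝ (Set.Ici (0:ℝ)) L := by
    refine ⟨convex_Ici _, fun x _ y _ a b ha hb hab => ?_⟩
    apply le_of_eq
    rw [hL_def]; simp only [smul_eq_mul]
    linear_combination (A u - σ * u) * hab
  have hWadm : (fun t => min (A t) (L t)) ∈ Adm θ := by
    refine ⟨⟨C, fun t ht => ?_⟩, (lcm_concave hC).inf hLconc, hWmaj⟩
    rw [abs_le]
    constructor
    · calc -C ≤ θ t := neg_le_of_abs_le (hC t ht)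
        _ ≤ min (A t) (L t) := hWmaj t ht
    · exact le_trans (min_le_left _ _) (lcm_le_C hC ht)
  -- find a point where L < A, else A is affine on [u, v'] which forces φ u = φ v'
  by_cases hall : ∀ t ∈ Set.Icc u v', A t ≤ L t
  · -- A = L on [u, v']
    have heq : ∀ t ∈ Set.Icc u v', A t = L t := by
      intro t ht
      refine le_antisymm (hall t ht) ?_
      have := chord_le hC (le_of_lt hu0) huv' ht
      rw [hL_def]; simp only
      rw [hσ_def] at *
      linarith [this]
    have haffv : ∀ t ∈ Set.Icc u v', A t = A v' + σ * (t - v') := by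
      intro t ht
      rw [heq t ht, ← hLv', hL_def]; ring
    have haffu : ∀ t ∈ Set.Icc u v', A t = A u + σ * (t - u) := by
      intro t ht; rw [heq t ht]
    have h1 : φ v' = σ := affine_deriv_right hφ (le_of_lt hu0) huv'
      (lt_of_le_of_lt (le_of_lt hu0) huv') haffv
    have h2 : φ u = σ := affine_deriv_left hφ hφ0 (le_of_lt hu0) huv' haffu
    rw [hc_def] at hφu hφv'
    linarith
  · push_neg at hall
    obtain ⟨t₀, ht₀, ht₀lt⟩ := hall
    have ht₀0 : (0:ℝ) ≤ t₀ := le_trans (le_of_lt hu0) ht₀.1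
    have := lcm_le hWadm ht₀0
    have : A t₀ ≤ L t₀ := le_trans this (min_le_right _ _)
    linarith

end Struct
end LCM
namespace LCM
section Bridges

variable {θ : ℝ → ℝ} {C : ℝ} {φ : ℝ → ℝ}

local notation "A" => leastConcaveMajorant θ

lemma phi_const_of_gap (hC : ∀ t ∈ Set.Ici (0:ℝ), |θ t| ≤ C)
    (hφ : ∀ x : ℝ, 0 < x → HasDerivAt (leastConcaveMajorant θ) (φ x) x)
    (hφ0 : HasDerivWithinAt (leastConcaveMajorant θ) (φ 0) (Set.Ici 0) 0)
    (hθc : ContinuousOn θ (Set.Ici 0))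
    {p q : ℝ} (hp : 0 ≤ p) (hgap : ∀ t ∈ Set.Ioo p q, θ t < A t)
    {s1 s2 : ℝ} (hs1 : s1 ∈ Set.Ioo p q) (hs2 : s2 ∈ Set.Ioo p q) :
    φ s1 = φ s2 := by
  rcases lt_trichotomy s1 s2 with h | h | h
  · exact bridge_phi_const hC hφ hφ0 hθc hp hgap hs1 hs2 h
  · rw [h]
  · exact (bridge_phi_const hC hφ hφ0 hθc hp hgap hs2 hs1 h).symm

lemma bridge_affine_val (hC : ∀ t ∈ Set.Ici (0:ℝ), |θ t| ≤ C)
    (hφ : ∀ x : ℝ, 0 < x → HasDerivAt (leastConcaveMajorant θ) (φ x) x)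
    (hφ0 : HasDerivWithinAt (leastConcaveMajorant θ) (φ 0) (Set.Ici 0) 0)
    (hθc : ContinuousOn θ (Set.Ici 0))
    {p q : ℝ} (hp : 0 ≤ p) (hpq : p < q) (hgap : ∀ t ∈ Set.Ioo p q, θ t < A t) :
    ∀ t ∈ Set.Icc p q, A t = A p + φ ((p+q)/2) * (t - p) := by
  have hmid : (p+q)/2 ∈ Set.Ioo p q := ⟨by linarith, by linarith⟩
  intro t ht
  rcases eq_or_lt_of_le ht.1 with rfl | hpt
  · simp
  · obtain ⟨ξ, hξ, hval⟩ := mvt hφ hφ0 hp hpt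
    have hξmem : ξ ∈ Set.Ioo p q := ⟨hξ.1, lt_of_lt_of_le hξ.2 ht.2⟩
    have := phi_const_of_gap hC hφ hφ0 hθc hp hgap hξmem hmid
    rw [← this]
    linarith [hval]

lemma bridge_phi_left (hC : ∀ t ∈ Set.Ici (0:ℝ), |θ t| ≤ C)
    (hφ : ∀ x : ℝ, 0 < x → HasDerivAt (leastConcaveMajorant θ) (φ x) x)
    (hφ0 : HasDerivWithinAt (leastConcaveMajorant θ) (φ 0) (Set.Ici 0) 0)
    (hθc : ContinuousOn θ (Set.Ici 0))
    {p q : ℝ} (hp : 0 ≤ p) (hpq : p < q) (hgap : ∀ t ∈ Set.Ioo p q, θ t < A t) :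
    φ p = φ ((p+q)/2) :=
  affine_deriv_left hφ hφ0 hp hpq (bridge_affine_val hC hφ hφ0 hθc hp hpq hgap)

lemma bridge_phi_right (hC : ∀ t ∈ Set.Ici (0:ℝ), |θ t| ≤ C)
    (hφ : ∀ x : ℝ, 0 < x → HasDerivAt (leastConcaveMajorant θ) (φ x) x)
    (hφ0 : HasDerivWithinAt (leastConcaveMajorant θ) (φ 0) (Set.Ici 0) 0)
    (hθc : ContinuousOn θ (Set.Ici 0))
    {p q : ℝ} (hp : 0 ≤ p) (hpq : p < q) (hgap : ∀ t ∈ Set.Ioo p q, θ t < A t) :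
    φ q = φ ((p+q)/2) := by
  have hval := bridge_affine_val hC hφ hφ0 hθc hp hpq hgap
  refine affine_deriv_right hφ hp hpq (lt_of_le_of_lt hp hpq) ?_
  intro t ht
  have h1 := hval t ht
  have h2 := hval q (Set.right_mem_Icc.mpr (le_of_lt hpq))
  rw [h1, h2]; ring

lemma unbounded_bridge (hC : ∀ t ∈ Set.Ici (0:ℝ), |θ t| ≤ C)
    (hφ : ∀ x : ℝ, 0 < x → HasDerivAt (leastConcaveMajorant θ) (φ x) x)
    (hφ0 : HasDerivWithinAt (leastConcaveMajorant θ) (φ 0) (Set.Ici 0) 0)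
    (hθc : ContinuousOn θ (Set.Ici 0))
    {p : ℝ} (hp : 0 ≤ p) (hgap : ∀ t ∈ Set.Ioi p, θ t < A t) :
    φ p = 0 := by
  have hgap' : ∀ q : ℝ, ∀ t ∈ Set.Ioo p q, θ t < A t := fun q t ht => hgap t ht.1
  have hconst : ∀ s : ℝ, p < s → φ s = φ (p+1) := by
    intro s hs
    have hq : p < max s (p+1) + 1 := by
      have := le_max_left s (p+1); have := le_max_right s (p+1); linarith
    exact phi_const_of_gap hC hφ hφ0 hθc hp (hgap' (max s (p+1) + 1))
      ⟨hs, by have := le_max_left s (p+1); linarith⟩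
      ⟨by linarith, by have := le_max_right s (p+1); linarith⟩
  set σ : ℝ := φ (p+1) with hσ_def
  have hσ0 : 0 ≤ σ := phi_nonneg hC hφ hφ0 (by linarith)
  have hσle : σ ≤ 0 := by
    by_contra hpos
    push_neg at hpos
    set T : ℝ := p + 1 + (2*C+1)/σ with hT_def
    have hT1 : p + 1 < T := by
      rw [hT_def]
      have hC0 : 0 ≤ C := le_trans (abs_nonneg _) (hC 0 Set.self_mem_Ici)
      have : 0 < (2*C+1)/σ := div_pos (by linarith) hpos
      linarith
    obtain ⟨ξ, hξ, hval⟩ := mvt hφ hφ0 (by linarith : (0:ℝ) ≤ p + 1) hT1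
    have hξσ : φ ξ = σ := hconst ξ (by linarith [hξ.1])
    rw [hξσ] at hval
    have hTσ : σ * (T - (p+1)) = 2*C+1 := by
      rw [hT_def]
      field_simp
      ring
    have h1 : A T ≤ C := lcm_le_C hC (by linarith)
    have h2 : -C ≤ A (p+1) := neg_le_of_abs_le (lcm_abs_le hC (by linarith))
    rw [hTσ] at hval
    linarith
  have hσ : σ = 0 := le_antisymm hσle hσ0
  have := bridge_phi_left hC hφ hφ0 hθc hp (by linarith : p < p + 2) (hgap' (p+2))
  rw [this]
  rw [hconst ((p + (p+2))/2) (by linarith)]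
  exact hσ

end Bridges
end LCM
namespace LCM
section Compare

variable {θ₁ θ₂ f g φ γ : ℝ → ℝ} {C₁ C₂ δ : ℝ}

local notation "A" => leastConcaveMajorant θ₁
local notation "B" => leastConcaveMajorant θ₂

/-- At a touch point of B, the slope of B exceeds that of A by at most δ. -/
lemma touch_le
    (hC₁ : ∀ t ∈ Set.Ici (0:ℝ), |θ₁ t| ≤ C₁) (hC₂ : ∀ t ∈ Set.Ici (0:ℝ), |θ₂ t| ≤ C₂)
    (hφ : ∀ x : ℝ, 0 < x → HasDerivAt (leastConcaveMajorant θ₁) (φ x) x)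
    (hφ0 : HasDerivWithinAt (leastConcaveMajorant θ₁) (φ 0) (Set.Ici 0) 0)
    (hγ : ∀ x : ℝ, 0 < x → HasDerivAt (leastConcaveMajorant θ₂) (γ x) x)
    (hγ0 : HasDerivWithinAt (leastConcaveMajorant θ₂) (γ 0) (Set.Ici 0) 0)
    (hθ₁c : ContinuousOn θ₁ (Set.Ici 0))
    (hθ₁0 : θ₁ 0 = 0)
    (hA0 : leastConcaveMajorant θ₁ 0 = 0)
    (hf : ∀ x : ℝ, 0 < x → HasDerivAt θ₁ (f x) x)
    (hg : ∀ x : ℝ, 0 < x → HasDerivAt θ₂ (g x) x)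
    (hfg : ∀ t ∈ Set.Ici (0:ℝ), |g t - f t| ≤ δ)
    (hLip : ∀ s t : ℝ, 0 ≤ s → s ≤ t → |(θ₂ t - θ₁ t) - (θ₂ s - θ₁ s)| ≤ δ * (t - s))
    {b : ℝ} (hb : 0 < b) (htb : leastConcaveMajorant θ₂ b = θ₂ b) :
    γ b ≤ φ b + δ := by
  set S' : Set ℝ := Set.Icc 0 b ∩ (fun t => A t - θ₁ t) ⁻¹' {0} with hS'_def
  have hS'icc : ∀ t ∈ S', t ∈ Set.Icc 0 b := fun t ht => ht.1
  have hS'closed : IsClosed S' := by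
    apply ContinuousOn.preimage_isClosed_of_isClosed
      (((contA hφ hφ0).mono ?_).sub (hθ₁c.mono ?_)) isClosed_Icc isClosed_singleton
    · exact fun t ht => ht.1
    · exact fun t ht => ht.1
  have h0S' : (0:ℝ) ∈ S' := by
    constructor
    · exact Set.left_mem_Icc.mpr (le_of_lt hb)
    · simp [hA0, hθ₁0]
  set a' : ℝ := sSup S' with ha'_def
  have ha'S' : a' ∈ S' := hS'closed.csSup_mem ⟨0, h0S'⟩ ⟨b, fun t ht => ht.1.2⟩
  have ha'0 : 0 ≤ a' := ha'S'.1.1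
  have ha'b : a' ≤ b := ha'S'.1.2
  have ha'touch : A a' = θ₁ a' := by
    have := ha'S'.2
    simp only [Set.mem_preimage, Set.mem_singleton_iff] at this
    linarith
  rcases eq_or_lt_of_le ha'b with heq | ha'lt
  · -- double touch at b
    rw [heq] at ha'touch
    have h1 : φ b = f b := touch_deriv hC₁ hb ha'touch hφ (hf b hb)
    have h2 : γ b = g b := touch_deriv hC₂ hb htb hγ (hg b hb)
    have h3 := hfg b (Set.mem_Ici.mpr (le_of_lt hb))
    rw [h1, h2]
    have := abs_le.mp h3
    linarith [this.2]
  · -- A has a bridge (a', b]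
    have hgap : ∀ t ∈ Set.Ioo a' b, θ₁ t < A t := by
      intro t ht
      rcases eq_or_lt_of_le (le_lcm hC₁ (Set.mem_Ici.mpr (le_trans ha'0 (le_of_lt ht.1)))) with heq | h
      · exfalso
        have htS' : t ∈ S' := by
          refine ⟨⟨le_trans ha'0 (le_of_lt ht.1), le_of_lt ht.2⟩, ?_⟩
          simp only [Set.mem_preimage, Set.mem_singleton_iff]
          linarith
        have := le_csSup ⟨b, fun s hs => hs.1.2⟩ htS'
        rw [← ha'_def] at this
        linarith [ht.1]
      · exact h
    set σ : ℝ := φ ((a' + b)/2) with hσ_def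
    have hφb : φ b = σ := bridge_phi_right hC₁ hφ hφ0 hθ₁c ha'0 ha'lt hgap
    have hAval := bridge_affine_val hC₁ hφ hφ0 hθ₁c ha'0 ha'lt hgap b
      (Set.right_mem_Icc.mpr (le_of_lt ha'lt))
    -- chain of inequalities
    have hc1 : A b ≥ θ₁ b := le_lcm hC₁ (Set.mem_Ici.mpr (le_of_lt hb))
    have hc2 : (θ₂ b - θ₁ b) - (θ₂ a' - θ₁ a') ≤ δ * (b - a') :=
      (abs_le.mp (hLip a' b ha'0 (le_of_lt ha'lt))).2
    have hc3 : θ₂ a' ≤ B a' := le_lcm hC₂ (Set.mem_Ici.mpr ha'0)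
    have hc4 : B a' ≤ B b + γ b * (a' - b) :=
      tangent_le hC₂ hγ hγ0 (le_of_lt hb) ha'0
    rw [htb] at hc4
    have hAb : A b = A a' + σ * (b - a') := hAval
    rw [hφb]
    have hchain : γ b * (b - a') ≤ (σ + δ) * (b - a') := by nlinarith
    exact le_of_mul_le_mul_right hchain (by linarith : (0:ℝ) < b - a')

/-- One-sided comparison of slopes of least concave majorants. -/
lemma one_sided
    (hC₁ : ∀ t ∈ Set.Ici (0:ℝ), |θ₁ t| ≤ C₁) (hC₂ : ∀ t ∈ Set.Ici (0:ℝ), |θ₂ t| ≤ C₂)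
    (hφ : ∀ x : ℝ, 0 < x → HasDerivAt (leastConcaveMajorant θ₁) (φ x) x)
    (hφ0 : HasDerivWithinAt (leastConcaveMajorant θ₁) (φ 0) (Set.Ici 0) 0)
    (hγ : ∀ x : ℝ, 0 < x → HasDerivAt (leastConcaveMajorant θ₂) (γ x) x)
    (hγ0 : HasDerivWithinAt (leastConcaveMajorant θ₂) (γ 0) (Set.Ici 0) 0)
    (hθ₁c : ContinuousOn θ₁ (Set.Ici 0)) (hθ₂c : ContinuousOn θ₂ (Set.Ici 0))
    (hθ₁0 : θ₁ 0 = 0)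
    (hA0 : leastConcaveMajorant θ₁ 0 = 0)
    (hf : ∀ x : ℝ, 0 < x → HasDerivAt θ₁ (f x) x)
    (hg : ∀ x : ℝ, 0 < x → HasDerivAt θ₂ (g x) x)
    (hfg : ∀ t ∈ Set.Ici (0:ℝ), |g t - f t| ≤ δ)
    (hLip : ∀ s t : ℝ, 0 ≤ s → s ≤ t → |(θ₂ t - θ₁ t) - (θ₂ s - θ₁ s)| ≤ δ * (t - s))
    (hδ : 0 ≤ δ) :
    ∀ x : ℝ, 0 ≤ x → γ x ≤ φ x + δ := by
  have main : ∀ x : ℝ, 0 < x → γ x ≤ φ x + δ := by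
    intro x hx
    set S : Set ℝ := Set.Ici x ∩ (fun t => B t - θ₂ t) ⁻¹' {0} with hS_def
    by_cases hSne : S.Nonempty
    · have hIcisub : Set.Ici x ⊆ Set.Ici (0:ℝ) := by
        rw [Set.Ici_subset_Ici]; exact le_of_lt hx
      have hSclosed : IsClosed S := by
        apply ContinuousOn.preimage_isClosed_of_isClosed
          (((contA hγ hγ0).mono hIcisub).sub (hθ₂c.mono hIcisub)) isClosed_Ici
          isClosed_singleton
      have hSbdd : BddBelow S := ⟨x, fun t ht => ht.1⟩
      have hbS : sInf S ∈ S := hSclosed.csInf_mem hSne hSbdd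
      set b : ℝ := sInf S with hb_def
      have hxb : x ≤ b := hbS.1
      have hb0 : 0 < b := lt_of_lt_of_le hx hxb
      have htouchb : B b = θ₂ b := by
        have := hbS.2
        simp only [Set.mem_preimage, Set.mem_singleton_iff] at this
        linarith
      have htle := touch_le hC₁ hC₂ hφ hφ0 hγ hγ0 hθ₁c hθ₁0 hA0 hf hg hfg hLip hb0 htouchb
      rcases eq_or_lt_of_le hxb with heq | hlt
      · rw [heq]; exact htle
      · have hgap : ∀ t ∈ Set.Ioo x b, θ₂ t < B t := by
          intro t ht
          rcases eq_or_lt_of_le (le_lcm hC₂ (Set.mem_Ici.mpr (le_trans (le_of_lt hx) (le_of_lt ht.1)))) with heq2 | h2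
          · exfalso
            have htS : t ∈ S := by
              refine ⟨Set.mem_Ici.mpr (le_of_lt ht.1), ?_⟩
              simp only [Set.mem_preimage, Set.mem_singleton_iff]
              linarith
            have := csInf_le hSbdd htS
            rw [← hb_def] at this
            linarith [ht.2]
          · exact h2
        have hγx : γ x = γ ((x + b)/2) :=
          bridge_phi_left hC₂ hγ hγ0 hθ₂c (le_of_lt hx) hlt hgap
        have hγb : γ b = γ ((x + b)/2) :=
          bridge_phi_right hC₂ hγ hγ0 hθ₂c (le_of_lt hx) hlt hgap
        have hφmono : φ b ≤ φ x := phi_antitone hC₁ hφ hφ0 (le_of_lt hx) hlt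
        rw [hγx, ← hγb]
        linarith
    · have hgap : ∀ t ∈ Set.Ioi x, θ₂ t < B t := by
        intro t ht
        rcases eq_or_lt_of_le (le_lcm hC₂ (Set.mem_Ici.mpr (le_trans (le_of_lt hx) (le_of_lt ht)))) with heq2 | h2
        · exfalso
          exact hSne ⟨t, Set.mem_Ici.mpr (le_of_lt ht), by
            simp only [Set.mem_preimage, Set.mem_singleton_iff]; linarith⟩
        · exact h2
      have hzero : γ x = 0 := unbounded_bridge hC₂ hγ hγ0 hθ₂c (le_of_lt hx) hgap
      have hpos := phi_nonneg hC₁ hφ hφ0 (le_of_lt hx)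
      linarith
  intro x hx
  rcases eq_or_lt_of_le hx with heq | hx'
  · rw [← heq]
    refine le_of_tendsto (tendsto_slope_right hγ hγ0 le_rfl) ?_
    filter_upwards [self_mem_nhdsWithin] with s hs
    obtain ⟨ξ, hξ, hval⟩ := mvt hγ hγ0 le_rfl (Set.mem_Ioi.mp hs)
    have hslope : slope (B) 0 s = γ ξ := by
      rw [slope_def_field]
      have hs0 : s ≠ 0 := ne_of_gt (Set.mem_Ioi.mp hs)
      rw [sub_zero, hval]
      field_simp
      ring
    rw [hslope]
    have h1 := main ξ hξ.1
    have h2 := phi_antitone hC₁ hφ hφ0 le_rfl hξ.1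
    linarith
  · exact main x hx'

end Compare
end LCM
namespace LCM
section Primitive

variable {f g : ℝ → ℝ} {δ : ℝ}

lemma primitive_intervalIntegrable (hf : ContinuousOn f (Set.Ici 0))
    {s t : ℝ} (hs : 0 ≤ s) (ht : 0 ≤ t) :
    IntervalIntegrable f MeasureTheory.volume s t := by
  apply ContinuousOn.intervalIntegrable
  exact hf.mono (fun u hu => Set.mem_Ici.mpr (le_trans (le_min hs ht) hu.1))

lemma primitive_hasDerivAt (hf : ContinuousOn f (Set.Ici 0)) {x : ℝ} (hx : 0 < x) :
    HasDerivAt (fun t => ∫ u in (0:ℝ)..t, f u) (f x) x := by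
  apply intervalIntegral.integral_hasDerivAt_right
    (primitive_intervalIntegrable hf le_rfl (le_of_lt hx))
  · exact (hf.mono (Set.Ioi_subset_Ici le_rfl)).stronglyMeasurableAtFilter isOpen_Ioi x hx
  · exact hf.continuousAt (Ici_mem_nhds hx)

lemma primitive_continuousOn (hf : ContinuousOn f (Set.Ici 0)) :
    ContinuousOn (fun t => ∫ u in (0:ℝ)..t, f u) (Set.Ici 0) := by
  intro x hx
  have hx0 : (0:ℝ) ≤ x := Set.mem_Ici.mp hx
  have hcont := intervalIntegral.continuousOn_primitive_interval'
    (μ := MeasureTheory.volume) (f := f) (b₁ := (0:ℝ)) (b₂ := x + 1)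
    (primitive_intervalIntegrable hf le_rfl (by linarith))
    (by rw [Set.uIcc_of_le (by linarith : (0:ℝ) ≤ x + 1)]; exact Set.left_mem_Icc.mpr (by linarith))
  rw [Set.uIcc_of_le (by linarith : (0:ℝ) ≤ x + 1)] at hcont
  have h1 : ContinuousWithinAt (fun t => ∫ u in (0:ℝ)..t, f u) (Set.Icc 0 (x+1)) x :=
    hcont x ⟨hx0, by linarith⟩
  have h2 : ContinuousWithinAt (fun t => ∫ u in (0:ℝ)..t, f u) (Set.Ici 0 ∩ Set.Iio (x+1)) x :=
    h1.mono (fun u hu => ⟨hu.1, le_of_lt hu.2⟩)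
  rwa [continuousWithinAt_inter (Iio_mem_nhds (by linarith))] at h2

lemma primitive_linear_bound (hf : ContinuousOn f (Set.Ici 0)) :
    ∃ K : ℝ, ∀ t ∈ Set.Icc (0:ℝ) 1, (∫ u in (0:ℝ)..t, f u) ≤ K * t := by
  obtain ⟨M, hM⟩ := IsCompact.exists_bound_of_continuousOn isCompact_Icc
    (hf.mono (fun u (hu : u ∈ Set.Icc (0:ℝ) 1) => Set.mem_Ici.mpr hu.1))
  refine ⟨M, fun t ht => ?_⟩
  have hnorm := intervalIntegral.norm_integral_le_of_norm_le_const
    (f := f) (a := (0:ℝ)) (b := t) (C := M) ?_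
  · rw [Real.norm_eq_abs] at hnorm
    have := (abs_le.mp (hnorm.trans_eq (by rw [sub_zero]))).2
    calc (∫ u in (0:ℝ)..t, f u) ≤ M * |t| := this
      _ = M * t := by rw [abs_of_nonneg ht.1]
  · intro u hu
    have hu' : u ∈ Set.Ioc (0:ℝ) t := by
      rwa [Set.uIoc_of_le ht.1] at hu
    exact hM u ⟨le_of_lt hu'.1, le_trans hu'.2 ht.2⟩

lemma primitive_lip (hf : ContinuousOn f (Set.Ici 0)) (hg : ContinuousOn g (Set.Ici 0))
    (hδ : ∀ t ∈ Set.Ici (0:ℝ), |g t - f t| ≤ δ) :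
    ∀ s t : ℝ, 0 ≤ s → s ≤ t →
      |((∫ u in (0:ℝ)..t, g u) - (∫ u in (0:ℝ)..t, f u)) -
        ((∫ u in (0:ℝ)..s, g u) - (∫ u in (0:ℝ)..s, f u))| ≤ δ * (t - s) := by
  intro s t hs hst
  have ht : (0:ℝ) ≤ t := le_trans hs hst
  have hfint := primitive_intervalIntegrable hf le_rfl ht
  have hgint := primitive_intervalIntegrable hg le_rfl ht
  have hfint' := primitive_intervalIntegrable hf le_rfl hs
  have hgint' := primitive_intervalIntegrable hg le_rfl hs
  have hfint'' := primitive_intervalIntegrable hf hs ht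
  have hgint'' := primitive_intervalIntegrable hg hs ht
  have heq : ((∫ u in (0:ℝ)..t, g u) - (∫ u in (0:ℝ)..t, f u)) -
      ((∫ u in (0:ℝ)..s, g u) - (∫ u in (0:ℝ)..s, f u)) = ∫ u in s..t, (g u - f u) := by
    rw [intervalIntegral.integral_sub hgint'' hfint'']
    rw [← intervalIntegral.integral_interval_sub_left hgint hgint',
      ← intervalIntegral.integral_interval_sub_left hfint hfint']
    ring
  rw [heq]
  have hnorm := intervalIntegral.norm_integral_le_of_norm_le_const
    (f := fun u => g u - f u) (a := s) (b := t) (C := δ) ?_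
  · rw [Real.norm_eq_abs] at hnorm
    rwa [abs_of_nonneg (by linarith : (0:ℝ) ≤ t - s)] at hnorm
  · intro u hu
    have hu' : u ∈ Set.Ioc s t := by rwa [Set.uIoc_of_le hst] at hu
    exact hδ u (Set.mem_Ici.mpr (le_trans hs (le_of_lt hu'.1)))

/-- The deterministic core: uniform bound for slope functions of LCMs of primitives. -/
lemma slopes_close {f g φ γ F G : ℝ → ℝ} {CF CG δ : ℝ}
    (hfc : ContinuousOn f (Set.Ici 0)) (hgc : ContinuousOn g (Set.Ici 0))
    (hFdef : ∀ t, F t = ∫ u in (0:ℝ)..t, f u) (hGdef : ∀ t, G t = ∫ u in (0:ℝ)..t, g u)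
    (hCF : ∀ t ∈ Set.Ici (0:ℝ), |F t| ≤ CF) (hCG : ∀ t ∈ Set.Ici (0:ℝ), |G t| ≤ CG)
    (hφ : ∀ x : ℝ, 0 < x → HasDerivAt (leastConcaveMajorant F) (φ x) x)
    (hφ0 : HasDerivWithinAt (leastConcaveMajorant F) (φ 0) (Set.Ici 0) 0)
    (hγ : ∀ x : ℝ, 0 < x → HasDerivAt (leastConcaveMajorant G) (γ x) x)
    (hγ0 : HasDerivWithinAt (leastConcaveMajorant G) (γ 0) (Set.Ici 0) 0)
    (hδ : ∀ t ∈ Set.Ici (0:ℝ), |g t - f t| ≤ δ) :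
    ∀ x ∈ Set.Ici (0:ℝ), |γ x - φ x| ≤ δ := by
  have hFfun : F = fun t => ∫ u in (0:ℝ)..t, f u := funext hFdef
  have hGfun : G = fun t => ∫ u in (0:ℝ)..t, g u := funext hGdef
  have hδ0 : 0 ≤ δ := le_trans (abs_nonneg _) (hδ 0 Set.self_mem_Ici)
  have hF0 : F 0 = 0 := by rw [hFdef 0, intervalIntegral.integral_same]
  have hG0 : G 0 = 0 := by rw [hGdef 0, intervalIntegral.integral_same]
  have hFd : ∀ x : ℝ, 0 < x → HasDerivAt F (f x) x := by
    intro x hx; rw [hFfun]; exact primitive_hasDerivAt hfc hx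
  have hGd : ∀ x : ℝ, 0 < x → HasDerivAt G (g x) x := by
    intro x hx; rw [hGfun]; exact primitive_hasDerivAt hgc hx
  have hFc : ContinuousOn F (Set.Ici 0) := by rw [hFfun]; exact primitive_continuousOn hfc
  have hGc : ContinuousOn G (Set.Ici 0) := by rw [hGfun]; exact primitive_continuousOn hgc
  obtain ⟨KF, hKF⟩ : ∃ K : ℝ, ∀ t ∈ Set.Icc (0:ℝ) 1, F t ≤ K * t := by
    obtain ⟨K, hK⟩ := primitive_linear_bound hfc
    exact ⟨K, fun t ht => by rw [hFdef t]; exact hK t ht⟩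
  obtain ⟨KG, hKG⟩ : ∃ K : ℝ, ∀ t ∈ Set.Icc (0:ℝ) 1, G t ≤ K * t := by
    obtain ⟨K, hK⟩ := primitive_linear_bound hgc
    exact ⟨K, fun t ht => by rw [hGdef t]; exact hK t ht⟩
  have hA0 : leastConcaveMajorant F 0 = 0 := lcm_zero hCF hF0 hKF
  have hB0 : leastConcaveMajorant G 0 = 0 := lcm_zero hCG hG0 hKG
  have hLip : ∀ s t : ℝ, 0 ≤ s → s ≤ t → |(G t - F t) - (G s - F s)| ≤ δ * (t - s) := by
    intro s t hs hst
    rw [hFdef t, hGdef t, hFdef s, hGdef s]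
    exact primitive_lip hfc hgc hδ s t hs hst
  have hLip' : ∀ s t : ℝ, 0 ≤ s → s ≤ t → |(F t - G t) - (F s - G s)| ≤ δ * (t - s) := by
    intro s t hs hst
    have : (F t - G t) - (F s - G s) = -((G t - F t) - (G s - F s)) := by ring
    rw [this, abs_neg]
    exact hLip s t hs hst
  have hδ' : ∀ t ∈ Set.Ici (0:ℝ), |f t - g t| ≤ δ := by
    intro t ht; rw [abs_sub_comm]; exact hδ t ht
  intro x hx
  rw [abs_sub_le_iff]
  constructor
  · have := one_sided hCF hCG hφ hφ0 hγ hγ0 hFc hGc hF0 hA0 hFd hGd hδ hLip hδ0 x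
      (Set.mem_Ici.mp hx)
    linarith
  · have := one_sided hCG hCF hγ hγ0 hφ hφ0 hGc hFc hG0 hB0 hGd hFd hδ' hLip' hδ0 x
      (Set.mem_Ici.mp hx)
    linarith

end Primitive
end LCM
/-- stochastic version. On a probability space, if random continuous functions
`fₙ(ω,·)` converge uniformly on `[0,∞)` in probability to a non-negative continuous `f(ω,·)`,
the primitives `Fₙ(ω,t) = ∫₀ᵗ fₙ(ω,u) du` and `F(ω,t) = ∫₀ᵗ f(ω,u) du` being almost surely
bounded on `[0,∞)`, then the slope functions `f_{n0}` of `MFₙ` converge uniformly on `[0,∞)`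
in probability to the slope function `f₀` of `MF`. -/
theorem slopes_of_lcm_tendsto_in_probability
    {Ω : Type*} [MeasurableSpace Ω] (μ : Measure Ω) [IsProbabilityMeasure μ]
    (fseq : ℕ → Ω → ℝ → ℝ) (f : Ω → ℝ → ℝ)
    (hfn : ∀ n ω, ContinuousOn (fseq n ω) (Set.Ici 0))
    (hf : ∀ ω, ContinuousOn (f ω) (Set.Ici 0))
    (hfpos : ∀ ω, ∀ t ∈ Set.Ici (0:ℝ), 0 ≤ f ω t)
    (Fseq : ℕ → Ω → ℝ → ℝ) (F : Ω → ℝ → ℝ)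
    (hFn : ∀ n ω t, Fseq n ω t = ∫ u in (0:ℝ)..t, fseq n ω u)
    (hF : ∀ ω t, F ω t = ∫ u in (0:ℝ)..t, f ω u)
    (hbdd : ∀ᵐ ω ∂μ, (∀ n, ∃ C : ℝ, ∀ t ∈ Set.Ici (0:ℝ), |Fseq n ω t| ≤ C) ∧
      (∃ C : ℝ, ∀ t ∈ Set.Ici (0:ℝ), |F ω t| ≤ C))
    (hconv : ∀ η : ℝ, 0 < η →
      Tendsto (fun n => μ {ω | ∃ t ∈ Set.Ici (0:ℝ), η < |fseq n ω t - f ω t|}) atTop (nhds 0))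
    (fn0 : ℕ → Ω → ℝ → ℝ) (f0 : Ω → ℝ → ℝ)
    (hfn0 : ∀ n ω, (∀ x : ℝ, 0 < x →
        HasDerivAt (leastConcaveMajorant (Fseq n ω)) (fn0 n ω x) x) ∧
      HasDerivWithinAt (leastConcaveMajorant (Fseq n ω)) (fn0 n ω 0) (Set.Ici 0) 0)
    (hf0 : ∀ ω, (∀ x : ℝ, 0 < x → HasDerivAt (leastConcaveMajorant (F ω)) (f0 ω x) x) ∧
      HasDerivWithinAt (leastConcaveMajorant (F ω)) (f0 ω 0) (Set.Ici 0) 0) :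
    ∀ η : ℝ, 0 < η →
      Tendsto (fun n => μ {ω | ∃ t ∈ Set.Ici (0:ℝ), η < |fn0 n ω t - f0 ω t|}) atTop (nhds 0) := by
  intro η hη
  have hη2 : 0 < η / 2 := by linarith
  set N : Set Ω := {ω | ¬ ((∀ n, ∃ C : ℝ, ∀ t ∈ Set.Ici (0:ℝ), |Fseq n ω t| ≤ C) ∧
      (∃ C : ℝ, ∀ t ∈ Set.Ici (0:ℝ), |F ω t| ≤ C))} with hN_def
  have hNnull : μ N = 0 := by
    rw [hN_def]
    exact hbdd
  have hsub : ∀ n, {ω | ∃ t ∈ Set.Ici (0:ℝ), η < |fn0 n ω t - f0 ω t|} ⊆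
      {ω | ∃ t ∈ Set.Ici (0:ℝ), η / 2 < |fseq n ω t - f ω t|} ∪ N := by
    intro n ω hω
    by_contra hnot
    rw [Set.mem_union] at hnot
    push_neg at hnot
    obtain ⟨hnotA, hnotN⟩ := hnot
    rw [hN_def, Set.mem_setOf_eq, not_not] at hnotN
    obtain ⟨hCn, hCF⟩ := hnotN
    obtain ⟨CG, hCG⟩ := hCn n
    obtain ⟨CF, hCF'⟩ := hCF
    have hδ : ∀ t ∈ Set.Ici (0:ℝ), |fseq n ω t - f ω t| ≤ η / 2 := by
      intro t ht
      by_contra hgt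
      push_neg at hgt
      exact hnotA ⟨t, ht, hgt⟩
    have hclose := LCM.slopes_close (hf ω) (hfn n ω) (hF ω) (hFn n ω) hCF' hCG
      (hf0 ω).1 (hf0 ω).2 (hfn0 n ω).1 (hfn0 n ω).2 hδ
    obtain ⟨t, ht, hηt⟩ := hω
    have := hclose t ht
    linarith
  have hbound : ∀ n, μ {ω | ∃ t ∈ Set.Ici (0:ℝ), η < |fn0 n ω t - f0 ω t|} ≤
      μ {ω | ∃ t ∈ Set.Ici (0:ℝ), η / 2 < |fseq n ω t - f ω t|} := by
    intro n
    calc μ {ω | ∃ t ∈ Set.Ici (0:ℝ), η < |fn0 n ω t - f0 ω t|}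
        ≤ μ ({ω | ∃ t ∈ Set.Ici (0:ℝ), η / 2 < |fseq n ω t - f ω t|} ∪ N) :=
          measure_mono (hsub n)
      _ ≤ μ {ω | ∃ t ∈ Set.Ici (0:ℝ), η / 2 < |fseq n ω t - f ω t|} + μ N :=
          measure_union_le _ _
      _ = μ {ω | ∃ t ∈ Set.Ici (0:ℝ), η / 2 < |fseq n ω t - f ω t|} := by
          rw [hNnull, add_zero]
  exact tendsto_of_tendsto_of_tendsto_of_le_of_le tendsto_const_nhds (hconv (η/2) hη2)
    (fun n => zero_le) hbound
end

section
/- For all bounded functions θ₁, θ₂ : [0,∞) → ℝ, one has ‖Mθ₁ − Mθ₂‖_∞ ≤ ‖θ₁ − θ₂‖_∞; that is, the least concave majorant operator is a contraction for the supremum norm. -/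
open MeasureTheory Filter Set

lemma lcm_le_aux (θ₁ θ₂ : ℝ → ℝ)
    (hb₂ : ∃ C : ℝ, ∀ t ∈ Set.Ici (0:ℝ), |θ₂ t| ≤ C)
    (D : ℝ) (hD : ∀ t ∈ Set.Ici (0:ℝ), θ₁ t ≤ θ₂ t + D)
    (x : ℝ) (hx : x ∈ Set.Ici (0:ℝ)) :
    leastConcaveMajorant θ₁ x ≤ leastConcaveMajorant θ₂ x + D := by
  obtain ⟨C₂, hC₂⟩ := hb₂
  have hbdd : BddBelow {y : ℝ | ∃ g : ℝ → ℝ,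
      (∃ C : ℝ, ∀ t ∈ Set.Ici (0:ℝ), |g t| ≤ C) ∧
      ConcaveOn ℝ (Set.Ici 0) g ∧
      (∀ t ∈ Set.Ici (0:ℝ), θ₁ t ≤ g t) ∧ y = g x} := by
    refine ⟨θ₁ x, ?_⟩
    rintro y ⟨g, _, _, hgM, rfl⟩
    exact hgM x hx
  have key : leastConcaveMajorant θ₁ x - D ≤ leastConcaveMajorant θ₂ x := by
    apply le_csInf
    · exact ⟨C₂, fun _ => C₂, ⟨|C₂|, fun t _ => by simp⟩,
        concaveOn_const C₂ (convex_Ici 0),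
        fun t ht => (abs_le.mp (hC₂ t ht)).2, rfl⟩
    · rintro y ⟨g, ⟨C, hC⟩, hgC, hgM, rfl⟩
      have hmem : g x + D ∈ {y : ℝ | ∃ g : ℝ → ℝ,
          (∃ C : ℝ, ∀ t ∈ Set.Ici (0:ℝ), |g t| ≤ C) ∧
          ConcaveOn ℝ (Set.Ici 0) g ∧
          (∀ t ∈ Set.Ici (0:ℝ), θ₁ t ≤ g t) ∧ y = g x} := by
        refine ⟨fun t => g t + D, ⟨C + |D|, fun t ht => ?_⟩, ?_, fun t ht => ?_, rfl⟩
        · calc |g t + D| ≤ |g t| + |D| := abs_add_le _ _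
            _ ≤ C + |D| := by linarith [hC t ht]
        · exact hgC.add (concaveOn_const D (convex_Ici 0))
        · show θ₁ t ≤ g t + D
          linarith [hD t ht, hgM t ht]
      have := csInf_le hbdd hmem
      unfold leastConcaveMajorant
      linarith [this]
  linarith [key]

/-- the least concave majorant operator is a contraction for the supremum
norm over `[0,∞)`: `‖Mθ₁ − Mθ₂‖_∞ ≤ ‖θ₁ − θ₂‖_∞` for all bounded `θ₁, θ₂`. -/
theorem lcm_sup_contraction
    (θ₁ θ₂ : ℝ → ℝ)
    (h₁ : ∃ C : ℝ, ∀ t ∈ Set.Ici (0:ℝ), |θ₁ t| ≤ C)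
    (h₂ : ∃ C : ℝ, ∀ t ∈ Set.Ici (0:ℝ), |θ₂ t| ≤ C) :
    ⨆ x : Set.Ici (0:ℝ), |leastConcaveMajorant θ₁ ↑x - leastConcaveMajorant θ₂ ↑x| ≤
      ⨆ t : Set.Ici (0:ℝ), |θ₁ ↑t - θ₂ ↑t| := by
  obtain ⟨C₁, hC₁⟩ := h₁
  obtain ⟨C₂, hC₂⟩ := h₂
  set D : ℝ := ⨆ t : Set.Ici (0:ℝ), |θ₁ ↑t - θ₂ ↑t| with hDdef
  have hbddA : BddAbove (Set.range fun t : Set.Ici (0:ℝ) => |θ₁ ↑t - θ₂ ↑t|) := by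
    refine ⟨C₁ + C₂, ?_⟩
    rintro y ⟨t, rfl⟩
    calc |θ₁ ↑t - θ₂ ↑t| ≤ |θ₁ ↑t| + |θ₂ ↑t| := abs_sub _ _
      _ ≤ C₁ + C₂ := add_le_add (hC₁ t t.2) (hC₂ t t.2)
  have hle : ∀ t ∈ Set.Ici (0:ℝ), |θ₁ t - θ₂ t| ≤ D := fun t ht =>
    le_ciSup hbddA (⟨t, ht⟩ : Set.Ici (0:ℝ))
  have h12 : ∀ t ∈ Set.Ici (0:ℝ), θ₁ t ≤ θ₂ t + D := fun t ht => by
    have := abs_le.mp (hle t ht)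
    linarith [this.2]
  have h21 : ∀ t ∈ Set.Ici (0:ℝ), θ₂ t ≤ θ₁ t + D := fun t ht => by
    have := abs_le.mp (hle t ht)
    linarith [this.1]
  apply ciSup_le
  intro x
  have a := lcm_le_aux θ₁ θ₂ ⟨C₂, hC₂⟩ D h12 x x.2
  have b := lcm_le_aux θ₂ θ₁ ⟨C₁, hC₁⟩ D h21 x x.2
  rw [abs_le]
  constructor <;> linarith
end

section
/- If G : [0,∞) → ℝ is bounded and continuous at 0, then its least concave majorant satisfies MG(0) = G(0). -/
open MeasureTheory Filter Set

/-- Construction of a truncated-linear concave majorant with small value at 0. -/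
lemma lcm_mem_aux (G : ℝ → ℝ) {C : ℝ} (hC : ∀ t ∈ Set.Ici (0:ℝ), |G t| ≤ C)
    {ε δ : ℝ} (hε : 0 < ε) (hδ : 0 < δ)
    (hsmall : ∀ t ∈ Set.Ici (0:ℝ), t < δ → |G t - G 0| < ε) :
    (G 0 + ε) ∈ {y : ℝ | ∃ g : ℝ → ℝ,
      (∃ C : ℝ, ∀ t ∈ Set.Ici (0:ℝ), |g t| ≤ C) ∧
      ConcaveOn ℝ (Set.Ici 0) g ∧
      (∀ t ∈ Set.Ici (0:ℝ), G t ≤ g t) ∧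
      G 0 + ε = g 0} := by
  have hC0 : 0 ≤ C := le_trans (abs_nonneg _) (hC 0 (Set.mem_Ici.mpr le_rfl))
  set K : ℝ := 2 * C / δ with hK
  have hK0 : 0 ≤ K := by positivity
  refine ⟨fun t => min (G 0 + ε + K * t) (G 0 + ε + 2 * C), ?_, ?_, ?_, ?_⟩
  · refine ⟨|G 0| + ε + 2 * C, fun t ht => ?_⟩
    have h1 : min (G 0 + ε + K * t) (G 0 + ε + 2 * C) ≤ |G 0| + ε + 2 * C := by
      refine le_trans (min_le_right _ _) ?_
      have := le_abs_self (G 0); linarith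
    have h2 : -(|G 0| + ε + 2 * C) ≤ min (G 0 + ε + K * t) (G 0 + ε + 2 * C) := by
      have ha : -(|G 0| + ε + 2 * C) ≤ G 0 + ε + K * t := by
        have := neg_abs_le (G 0)
        have : 0 ≤ K * t := mul_nonneg hK0 ht
        nlinarith [neg_abs_le (G 0)]
      have hb : -(|G 0| + ε + 2 * C) ≤ G 0 + ε + 2 * C := by
        nlinarith [neg_abs_le (G 0)]
      exact le_min ha hb
    rw [abs_le]; exact ⟨by linarith, h1⟩
  · have h1 : ConcaveOn ℝ (Set.Ici (0:ℝ)) (fun t => G 0 + ε + K * t) := by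
      apply ConcaveOn.add (concaveOn_const _ (convex_Ici 0))
      exact (LinearMap.mul ℝ ℝ K).concaveOn (convex_Ici 0)
    have h2 : ConcaveOn ℝ (Set.Ici (0:ℝ)) (fun _ => G 0 + ε + 2 * C) :=
      concaveOn_const _ (convex_Ici 0)
    exact h1.inf h2
  · intro t ht
    rcases lt_or_ge t δ with h | h
    · refine le_min ?_ ?_
      · have := hsmall t ht h
        have : G t - G 0 < ε := lt_of_le_of_lt (le_abs_self _) this
        nlinarith [mul_nonneg hK0 ht]
      · have hGt := (abs_le.mp (hC t ht)).2
        have hG0 := (abs_le.mp (hC 0 (Set.mem_Ici.mpr le_rfl))).1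
        linarith
    · have hKt : 2 * C ≤ K * t := by
        rw [hK, div_mul_eq_mul_div, le_div_iff₀ hδ]
        nlinarith
      have hGt := (abs_le.mp (hC t ht)).2
      have hG0 := (abs_le.mp (hC 0 (Set.mem_Ici.mpr le_rfl))).1
      refine le_min (by linarith) (by linarith)
  · show G 0 + ε = min (G 0 + ε + K * 0) (G 0 + ε + 2 * C)
    rw [mul_zero, add_zero, min_eq_left (by linarith)]

/-- if `G : [0,∞) → ℝ` is bounded and continuous at `0` (from the right),
then its least concave majorant satisfies `MG(0) = G(0)`. -/
theorem lcm_apply_zero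
    (G : ℝ → ℝ)
    (hG : ∃ C : ℝ, ∀ t ∈ Set.Ici (0:ℝ), |G t| ≤ C)
    (hcont : ContinuousWithinAt G (Set.Ici 0) 0) :
    leastConcaveMajorant G 0 = G 0 := by
  obtain ⟨C, hC⟩ := hG
  have hcont' : ∀ ε > 0, ∃ δ > 0, ∀ t ∈ Set.Ici (0:ℝ), t < δ → |G t - G 0| < ε := by
    intro ε hε
    obtain ⟨δ, hδ, h⟩ := Metric.tendsto_nhdsWithin_nhds.mp hcont ε hε
    refine ⟨δ, hδ, fun t ht htδ => ?_⟩
    have : dist t 0 < δ := by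
      rw [Real.dist_eq, sub_zero, abs_of_nonneg ht]; exact htδ
    simpa [Real.dist_eq] using h ht this
  set S := {y : ℝ | ∃ g : ℝ → ℝ,
    (∃ C : ℝ, ∀ t ∈ Set.Ici (0:ℝ), |g t| ≤ C) ∧
    ConcaveOn ℝ (Set.Ici 0) g ∧
    (∀ t ∈ Set.Ici (0:ℝ), G t ≤ g t) ∧
    y = g 0} with hS
  have hbdd : G 0 ∈ lowerBounds S := by
    rintro y ⟨g, _, _, hmaj, rfl⟩
    exact hmaj 0 (Set.mem_Ici.mpr le_rfl)
  have hne : S.Nonempty := by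
    obtain ⟨δ, hδ, h⟩ := hcont' 1 one_pos
    exact ⟨G 0 + 1, lcm_mem_aux G hC one_pos hδ h⟩
  rw [leastConcaveMajorant]
  refine le_antisymm ?_ (le_csInf hne fun y hy => hbdd hy)
  refine le_of_forall_pos_le_add fun ε hε => ?_
  obtain ⟨δ, hδ, h⟩ := hcont' ε hε
  exact csInf_le ⟨G 0, hbdd⟩ (lcm_mem_aux G hC hε hδ h)
end

section
/- Let F : [0,∞) → ℝ be bounded, continuous at 0, with F(0) = 0. Then MF(0) = 0, the right derivative of MF at 0 exists in [0, ∞], and it equals sup_{t>0} F(t)/t. -/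
open MeasureTheory Filter Set

private lemma affine_concaveOn (a b : ℝ) :
    ConcaveOn ℝ (Set.Ici (0:ℝ)) (fun x => a * x + b) := by
  refine ⟨convex_Ici 0, ?_⟩
  intro x _ y _ p q hp hq hpq
  simp only [smul_eq_mul]
  have : p * (a * x + b) + q * (a * y + b) = a * (p * x + q * y) + b := by
    linear_combination b * hpq
  exact le_of_eq this

/-- if `F : [0,∞) → ℝ` is bounded, continuous at `0`, with `F(0) = 0`, then
`MF(0) = 0` and the right derivative of `MF` at `0` — that is, the limit as `t → 0⁺` of the
difference quotient `(MF(t) − MF(0))/t = MF(t)/t` — exists in `[0,∞]` (as an extended real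
number, nonnegative) and equals `sup_{t>0} F(t)/t`. -/
theorem lcm_right_derivative_at_zero
    (F : ℝ → ℝ)
    (hF : ∃ C : ℝ, ∀ t ∈ Set.Ici (0:ℝ), |F t| ≤ C)
    (hcont : ContinuousWithinAt F (Set.Ici 0) 0)
    (h0 : F 0 = 0) :
    leastConcaveMajorant F 0 = 0 ∧
    (0 : EReal) ≤ (⨆ t : Set.Ioi (0:ℝ), ((F ↑t / ↑t : ℝ) : EReal)) ∧
    Tendsto (fun t : ℝ => ((leastConcaveMajorant F t / t : ℝ) : EReal))
      (nhdsWithin 0 (Set.Ioi 0))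
      (nhds (⨆ t : Set.Ioi (0:ℝ), ((F ↑t / ↑t : ℝ) : EReal))) := by
  obtain ⟨C₀, hC₀⟩ := hF
  set C : ℝ := max C₀ 0 with hCdef
  have hC0 : (0:ℝ) ≤ C := le_max_right _ _
  have hFC : ∀ t ∈ Set.Ici (0:ℝ), |F t| ≤ C :=
    fun t ht => (hC₀ t ht).trans (le_max_left _ _)
  -- the defining set
  set A : ℝ → Set ℝ := fun x => {y : ℝ | ∃ g : ℝ → ℝ,
    (∃ C : ℝ, ∀ t ∈ Set.Ici (0:ℝ), |g t| ≤ C) ∧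
    ConcaveOn ℝ (Set.Ici 0) g ∧
    (∀ t ∈ Set.Ici (0:ℝ), F t ≤ g t) ∧
    y = g x} with hAdef
  have hMF : ∀ x, leastConcaveMajorant F x = sInf (A x) := fun x => rfl
  -- nonemptiness
  have hne : ∀ x : ℝ, (A x).Nonempty := by
    intro x
    refine ⟨C, fun _ => C, ⟨C, fun t _ => by rw [abs_of_nonneg hC0]⟩,
      concaveOn_const C (convex_Ici 0), fun t ht => (le_abs_self _).trans (hFC t ht), rfl⟩
  -- bounded below
  have hbdd : ∀ x ∈ Set.Ici (0:ℝ), BddBelow (A x) := by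
    intro x hx
    refine ⟨F x, ?_⟩
    rintro y ⟨g, _, _, hge, rfl⟩
    exact hge x hx
  -- lower bound: MF t ≥ (t/s) F s for 0 < t ≤ s
  have hlb : ∀ s t : ℝ, 0 < s → 0 < t → t ≤ s →
      t / s * F s ≤ leastConcaveMajorant F t := by
    intro s t hs ht hts
    rw [hMF]
    refine le_csInf (hne t) ?_
    rintro y ⟨g, _, hcv, hge, rfl⟩
    have h1 : (0:ℝ) ≤ 1 - t / s := by
      have : t / s ≤ 1 := (div_le_one hs).2 hts
      linarith
    have h2 : (0:ℝ) ≤ t / s := by positivity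
    have h3 : (1 - t/s) + t/s = 1 := by ring
    have hc := hcv.2 (mem_Ici.2 le_rfl) (mem_Ici.2 hs.le) h1 h2 h3
    have heq : (1 - t/s) • (0:ℝ) + (t/s) • s = t := by
      field_simp
      simp [hs.ne']
    rw [heq] at hc
    have hg0 : 0 ≤ g 0 := by
      have h := hge 0 (mem_Ici.2 le_rfl); rw [h0] at h; exact h
    have hgs : F s ≤ g s := hge s (mem_Ici.2 hs.le)
    simp only [smul_eq_mul] at hc
    nlinarith
  -- MF 0 = 0
  have hMF0 : leastConcaveMajorant F 0 = 0 := by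
    have hge0 : 0 ≤ leastConcaveMajorant F 0 := by
      rw [hMF]
      refine le_csInf (hne 0) ?_
      rintro y ⟨g, _, _, hge, rfl⟩
      have h := hge 0 (mem_Ici.2 le_rfl); rw [h0] at h; exact h
    have hle : ∀ ε : ℝ, 0 < ε → leastConcaveMajorant F 0 ≤ ε := by
      intro ε hε
      have h1 : ∀ᶠ t in nhdsWithin 0 (Set.Ici 0), F t ∈ Set.Iio ε :=
        hcont (Iio_mem_nhds (by rw [h0]; exact hε))
      rw [eventually_iff, Metric.mem_nhdsWithin_iff] at h1
      obtain ⟨δ, hδ, hδ'⟩ := h1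
      set g : ℝ → ℝ := (fun u => C / δ * u + ε) ⊓ (fun u => 0 * u + (C + ε)) with hgdef
      have hgconc : ConcaveOn ℝ (Set.Ici 0) g :=
        (affine_concaveOn _ _).inf (affine_concaveOn _ _)
      have hgval : ∀ u, g u = min (C / δ * u + ε) (C + ε) := by
        intro u; simp [hgdef]
      have hglow : ∀ u ∈ Set.Ici (0:ℝ), ε ≤ g u := by
        intro u hu
        rw [hgval]
        refine le_min ?_ (by linarith)
        have : 0 ≤ C / δ * u := mul_nonneg (div_nonneg hC0 hδ.le) (mem_Ici.1 hu)
        linarith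
      have hgmaj : ∀ t ∈ Set.Ici (0:ℝ), F t ≤ g t := by
        intro t ht
        rcases lt_or_ge t δ with h | h
        · have : dist t 0 < δ := by
            rw [Real.dist_eq, sub_zero, abs_of_nonneg ht]; exact h
          have hmemb : t ∈ Metric.ball (0:ℝ) δ := by
            rwa [Metric.mem_ball]
          have := hδ' ⟨hmemb, ht⟩
          exact (le_of_lt this).trans (hglow t ht)
        · rw [hgval]
          have hFt : F t ≤ C := (le_abs_self _).trans (hFC t ht)
          refine le_min ?_ (by linarith)
          have : C ≤ C / δ * t := by
            rw [div_mul_eq_mul_div, le_div_iff₀ hδ]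
            nlinarith
          linarith
      have hgbd : ∃ C' : ℝ, ∀ t ∈ Set.Ici (0:ℝ), |g t| ≤ C' := by
        refine ⟨C + ε, fun t ht => abs_le.2 ⟨?_, ?_⟩⟩
        · have := hglow t ht; linarith
        · rw [hgval]; exact min_le_right _ _
      have hmem : g 0 ∈ A 0 := ⟨g, hgbd, hgconc, hgmaj, rfl⟩
      have : leastConcaveMajorant F 0 ≤ g 0 := by
        rw [hMF]; exact csInf_le (hbdd 0 (mem_Ici.2 le_rfl)) hmem
      have hg0 : g 0 = ε := by
        rw [hgval, mul_zero, zero_add]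
        exact min_eq_left (by linarith)
      linarith [this, hg0.le, hg0.ge]
    exact le_antisymm (le_of_forall_pos_le_add (by intro ε hε; simpa using hle ε hε)) hge0
  set S : EReal := ⨆ t : Set.Ioi (0:ℝ), ((F ↑t / ↑t : ℝ) : EReal) with hSdef
  -- S ≥ 0
  have hS0 : (0 : EReal) ≤ S := by
    have key : ∀ ε : ℝ, 0 < ε → ((-ε : ℝ) : EReal) ≤ S := by
      intro ε hε
      have htpos : (0:ℝ) < C / ε + 1 := by positivity
      have h1 : (-ε : ℝ) ≤ F (C/ε + 1) / (C/ε + 1) := by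
        have hFt : -C ≤ F (C/ε+1) := by
          have := hFC (C/ε+1) (mem_Ici.2 htpos.le)
          have := abs_le.1 this
          linarith [this.1]
        rw [le_div_iff₀ htpos]
        have hexp : -ε * (C / ε + 1) = -C - ε := by field_simp; ring
        linarith
      calc ((-ε : ℝ) : EReal) ≤ ((F (C/ε+1) / (C/ε+1) : ℝ) : EReal) := EReal.coe_le_coe_iff.2 h1
        _ ≤ S := le_iSup (fun t : Set.Ioi (0:ℝ) => ((F ↑t / ↑t : ℝ) : EReal)) ⟨C/ε+1, htpos⟩
    by_contra h
    push_neg at h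
    have hSne1 : S ≠ ⊥ := fun hb => by
      have := key 1 one_pos; rw [hb] at this
      exact absurd this (not_le.2 (EReal.bot_lt_coe _))
    have hSne2 : S ≠ ⊤ := fun ht => by rw [ht] at h; exact absurd h (by simp)
    have hSr : ((S.toReal : ℝ) : EReal) = S := EReal.coe_toReal hSne2 hSne1
    have hSneg : S.toReal < 0 := by
      have := h; rw [← hSr] at this
      exact_mod_cast this
    have := key (-S.toReal / 2) (by linarith)
    rw [← hSr] at this
    have : (-(-S.toReal / 2) : ℝ) ≤ S.toReal := by exact_mod_cast this
    linarith
  refine ⟨hMF0, hS0, ?_⟩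
  rw [tendsto_order]
  constructor
  · -- lower bound
    intro a ha
    rw [hSdef, lt_iSup_iff] at ha
    obtain ⟨⟨s, hs⟩, has⟩ := ha
    rw [mem_Ioi] at hs
    have hev : Set.Ioc 0 s ∈ nhdsWithin (0:ℝ) (Set.Ioi 0) :=
      Ioc_mem_nhdsGT_of_mem ⟨le_rfl, hs⟩
    filter_upwards [hev] with t ht
    rcases ht with ⟨ht0, hts⟩
    have hq : F s / s ≤ leastConcaveMajorant F t / t := by
      rw [div_le_div_iff₀ hs ht0]
      have h3 := mul_le_mul_of_nonneg_right (hlb s t hs ht0 hts) hs.le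
      have h4 : t / s * F s * s = F s * t := by field_simp
      linarith
    exact lt_of_lt_of_le has (EReal.coe_le_coe_iff.2 hq)
  · -- upper bound
    intro b hb
    have hSne2 : S ≠ ⊤ := fun ht => by rw [ht] at hb; exact absurd hb (by simp)
    have hSne1 : S ≠ ⊥ := fun hbot => by
      rw [hbot] at hS0; exact absurd hS0 (by simp)
    set s₀ : ℝ := S.toReal with hs₀def
    have hSr : ((s₀ : ℝ) : EReal) = S := EReal.coe_toReal hSne2 hSne1
    have hs₀0 : (0:ℝ) ≤ s₀ := by
      have := hS0; rw [← hSr] at this; exact_mod_cast this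
    have hslope : ∀ t : ℝ, 0 < t → F t ≤ s₀ * t := by
      intro t ht
      have h1 : ((F t / t : ℝ) : EReal) ≤ S :=
        le_iSup (fun u : Set.Ioi (0:ℝ) => ((F ↑u / ↑u : ℝ) : EReal)) ⟨t, ht⟩
      rw [← hSr] at h1
      have h2 : F t / t ≤ s₀ := by exact_mod_cast h1
      rw [div_le_iff₀ ht] at h2
      linarith [h2]
    -- construction: MF t ≤ s₀ * t
    have hub : ∀ t : ℝ, 0 < t → leastConcaveMajorant F t ≤ s₀ * t := by
      intro t ht
      set g : ℝ → ℝ := (fun u => s₀ * u + 0) ⊓ (fun u => 0 * u + C) with hgdef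
      have hgconc : ConcaveOn ℝ (Set.Ici 0) g :=
        (affine_concaveOn _ _).inf (affine_concaveOn _ _)
      have hgval : ∀ u, g u = min (s₀ * u) C := by intro u; simp [hgdef]
      have hgmaj : ∀ u ∈ Set.Ici (0:ℝ), F u ≤ g u := by
        intro u hu
        rw [hgval]
        rcases eq_or_lt_of_le (mem_Ici.1 hu) with h | h
        · rw [← h, h0]
          simp [le_min_iff, hC0, hs₀0]
        · exact le_min (hslope u h) ((le_abs_self _).trans (hFC u hu))
      have hgbd : ∃ C' : ℝ, ∀ u ∈ Set.Ici (0:ℝ), |g u| ≤ C' := by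
        refine ⟨C, fun u hu => abs_le.2 ⟨?_, ?_⟩⟩
        · rw [hgval]
          refine le_min ?_ (by linarith)
          have : 0 ≤ s₀ * u := mul_nonneg hs₀0 (mem_Ici.1 hu)
          linarith
        · rw [hgval]; exact min_le_right _ _
      have hmem : g t ∈ A t := ⟨g, hgbd, hgconc, hgmaj, rfl⟩
      have h1 : leastConcaveMajorant F t ≤ g t := by
        rw [hMF]; exact csInf_le (hbdd t (mem_Ici.2 ht.le)) hmem
      have h2 : g t ≤ s₀ * t := by rw [hgval]; exact min_le_left _ _
      linarith
    filter_upwards [self_mem_nhdsWithin] with t ht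
    rw [mem_Ioi] at ht
    have h1 : leastConcaveMajorant F t / t ≤ s₀ := by
      rw [div_le_iff₀ ht]; exact hub t ht
    calc ((leastConcaveMajorant F t / t : ℝ) : EReal) ≤ ((s₀ : ℝ) : EReal) :=
          EReal.coe_le_coe_iff.2 h1
      _ = S := hSr
      _ < b := hb
end

section
/- Let Y₁, …, Y_n be i.i.d. real random variables with characteristic function φ_Y(t) = E[e^{itY₁}], let φ_n(t) = n^{-1} ∑_{j=1}^n e^{itY_j}, and let φ_ε : ℝ → ℂ be a nowhere-vanishing function satisfying |1/φ_ε(t)| ≤ C(1+t²)^{β/2} for all t ∈ ℝ, for some constants C > 0 and β > 0. Then for every M > 0, E[ ∫_{−M}^{M} |φ_n(t) − φ_Y(t)| / |φ_ε(t)| dt ] ≤ 2 C M (1+M²)^{β/2} / √n. -/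
open MeasureTheory ProbabilityTheory Filter

lemma core_bound {Ω : Type*} [MeasurableSpace Ω] (μ : Measure Ω) [IsProbabilityMeasure μ]
    (n : ℕ) (hn : 0 < n) (Y : ℕ → Ω → ℝ) (hmeas : ∀ i, Measurable (Y i))
    (hindep : iIndepFun (m := fun _ : ℕ => Real.measurableSpace) Y μ)
    (hident : ∀ i, Measure.map (Y i) μ = Measure.map (Y 0) μ) (t : ℝ) :
    ∫ ω, ‖((n : ℂ)⁻¹ * ∑ j ∈ Finset.range n, Complex.exp (Complex.I * t * Y j ω)) -
      (∫ ω', Complex.exp (Complex.I * t * Y 0 ω') ∂μ)‖ ∂μ ≤ 1 / Real.sqrt n := by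
  classical
  set e : ℝ → ℂ := fun y => Complex.exp (Complex.I * t * y) with he_def
  have he_meas : Measurable e :=
    Complex.measurable_exp.comp (Complex.measurable_ofReal.const_mul (Complex.I * t))
  have hnorm : ∀ y, ‖e y‖ = 1 := by
    intro y
    simp only [he_def, Complex.norm_exp]
    norm_num [Complex.mul_re, Complex.I_re, Complex.I_im, Complex.ofReal_re, Complex.ofReal_im]
  set φ : ℂ := ∫ ω', e (Y 0 ω') ∂μ with hφ_def
  have heY_meas : ∀ j, Measurable fun ω => e (Y j ω) := fun j => he_meas.comp (hmeas j)
  have heY_int : ∀ j, Integrable (fun ω => e (Y j ω)) μ := fun j =>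
    (integrable_const (1:ℝ)).mono' (heY_meas j).aestronglyMeasurable
      (ae_of_all _ fun ω => le_of_eq (hnorm _))
  have heY_avg : ∀ j, ∫ ω, e (Y j ω) ∂μ = φ := by
    intro j
    rw [hφ_def, ← integral_map (hmeas j).aemeasurable he_meas.aestronglyMeasurable,
        hident j, integral_map (hmeas 0).aemeasurable he_meas.aestronglyMeasurable]
  have hφ_norm : ‖φ‖ ≤ 1 := by
    rw [hφ_def]
    calc ‖∫ ω', e (Y 0 ω') ∂μ‖ ≤ ∫ ω', ‖e (Y 0 ω')‖ ∂μ := norm_integral_le_integral_norm _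
    _ = 1 := by simp [hnorm]
  set g : ℝ → ℂ := fun y => e y - φ with hg_def
  have hg_meas : Measurable g := he_meas.sub measurable_const
  have hg_bd : ∀ y, ‖g y‖ ≤ 2 := by
    intro y
    calc ‖e y - φ‖ ≤ ‖e y‖ + ‖φ‖ := norm_sub_le _ _
    _ ≤ 2 := by rw [hnorm]; linarith
  set a : ℕ → Ω → ℝ := fun j ω => (g (Y j ω)).re with ha_def
  set b : ℕ → Ω → ℝ := fun j ω => (g (Y j ω)).im with hb_def
  have hgY_meas : ∀ j, Measurable fun ω => g (Y j ω) := fun j => hg_meas.comp (hmeas j)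
  have hgY_int : ∀ j, Integrable (fun ω => g (Y j ω)) μ := fun j =>
    (integrable_const (2:ℝ)).mono' (hgY_meas j).aestronglyMeasurable
      (ae_of_all _ fun ω => hg_bd _)
  have ha_meas : ∀ j, Measurable (a j) := fun j => Complex.measurable_re.comp (hgY_meas j)
  have hb_meas : ∀ j, Measurable (b j) := fun j => Complex.measurable_im.comp (hgY_meas j)
  have ha_bd : ∀ j ω, ‖a j ω‖ ≤ 2 := fun j ω =>
    (Complex.abs_re_le_norm _).trans (hg_bd _)
  have hb_bd : ∀ j ω, ‖b j ω‖ ≤ 2 := fun j ω =>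
    (Complex.abs_im_le_norm _).trans (hg_bd _)
  have ha2 : ∀ j, MemLp (a j) 2 μ := fun j =>
    MemLp.of_bound (ha_meas j).aestronglyMeasurable 2 (ae_of_all _ (ha_bd j))
  have hb2 : ∀ j, MemLp (b j) 2 μ := fun j =>
    MemLp.of_bound (hb_meas j).aestronglyMeasurable 2 (ae_of_all _ (hb_bd j))
  have hgY_avg : ∀ j, ∫ ω, g (Y j ω) ∂μ = 0 := by
    intro j
    simp only [hg_def]
    rw [integral_sub (heY_int j) (integrable_const φ), heY_avg j, integral_const]
    simp
  have ha_avg : ∀ j, ∫ ω, a j ω ∂μ = 0 := by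
    intro j
    have := integral_re (hgY_int j)
    simp only [RCLike.re_to_complex] at this
    rw [ha_def]
    simp only []
    rw [this, hgY_avg j, Complex.zero_re]
  have hb_avg : ∀ j, ∫ ω, b j ω ∂μ = 0 := by
    intro j
    have := integral_im (hgY_int j)
    simp only [RCLike.im_to_complex] at this
    rw [hb_def]
    simp only []
    rw [this, hgY_avg j, Complex.zero_im]
  -- squares integrable
  have sq_int : ∀ (f : ℕ → Ω → ℝ), (∀ j, Measurable (f j)) → (∀ j ω, ‖f j ω‖ ≤ 2) →
      ∀ j, Integrable (fun ω => (f j ω)^2) μ := fun f hfm hfb j =>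
    (integrable_const (4:ℝ)).mono' ((hfm j).pow_const 2).aestronglyMeasurable
      (ae_of_all _ fun ω => by
        have := hfb j ω
        rw [Real.norm_eq_abs] at this ⊢
        rw [abs_pow]
        nlinarith [abs_nonneg (f j ω)])
  have ha_sq_int := sq_int a ha_meas ha_bd
  have hb_sq_int := sq_int b hb_meas hb_bd
  -- per-j second moment
  have hj_key : ∀ j, (∫ ω, (a j ω)^2 ∂μ) + (∫ ω, (b j ω)^2 ∂μ) ≤ 1 := by
    intro j
    have hptw : ∀ ω, (a j ω)^2 + (b j ω)^2 =
        1 - 2 * ((e (Y j ω)) * (starRingEnd ℂ) φ).re + Complex.normSq φ := by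
      intro ω
      have h1 : (a j ω)^2 + (b j ω)^2 = Complex.normSq (g (Y j ω)) := by
        rw [Complex.normSq_apply, ha_def, hb_def]; ring
      have h2 : Complex.normSq (e (Y j ω)) = 1 := by
        rw [← Complex.sq_norm, hnorm]; norm_num
      rw [h1, hg_def]
      simp only []
      rw [Complex.normSq_sub, h2]
      ring
    have hmul_int : Integrable (fun ω => ((e (Y j ω)) * (starRingEnd ℂ) φ).re) μ := by
      have : Integrable (fun ω => (e (Y j ω)) * (starRingEnd ℂ) φ) μ :=
        (heY_int j).mul_const _
      have h := integral_re this  -- just to have; integrability of re: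
      exact this.re
    have hmul_avg : ∫ ω, ((e (Y j ω)) * (starRingEnd ℂ) φ).re ∂μ = Complex.normSq φ := by
      have h1 : ∫ ω, (e (Y j ω)) * (starRingEnd ℂ) φ ∂μ = φ * (starRingEnd ℂ) φ := by
        rw [integral_mul_const, heY_avg j]
      have h2 := integral_re ((heY_int j).mul_const ((starRingEnd ℂ) φ))
      simp only [RCLike.re_to_complex] at h2
      rw [h2, h1, Complex.mul_conj]
      simp
    calc (∫ ω, (a j ω)^2 ∂μ) + (∫ ω, (b j ω)^2 ∂μ)
        = ∫ ω, ((a j ω)^2 + (b j ω)^2) ∂μ := (integral_add (ha_sq_int j) (hb_sq_int j)).symm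
      _ = ∫ ω, (1 - 2 * ((e (Y j ω)) * (starRingEnd ℂ) φ).re + Complex.normSq φ) ∂μ := by
          congr 1; funext ω; exact hptw ω
      _ = (∫ ω, (1 - 2 * ((e (Y j ω)) * (starRingEnd ℂ) φ).re) ∂μ) + Complex.normSq φ := by
          rw [integral_add _ (integrable_const _)]
          · simp
          · exact (integrable_const (1:ℝ)).sub (hmul_int.const_mul 2)
      _ = 1 - 2 * Complex.normSq φ + Complex.normSq φ := by
          rw [integral_sub (integrable_const _) (hmul_int.const_mul 2), integral_const,
            integral_const_mul, hmul_avg]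
          simp
      _ ≤ 1 := by nlinarith [Complex.normSq_nonneg φ]
  -- independence of the real/imaginary parts
  have hpair : ∀ (f : ℝ → ℝ), Measurable f →
      Set.Pairwise ↑(Finset.range n) fun i j =>
        IndepFun (fun ω => f (Y i ω)) (fun ω => f (Y j ω)) μ := by
    intro f hf i _ j _ hij
    exact (hindep.indepFun hij).comp hf hf
  have ha_indep := hpair (fun y => (g y).re) (Complex.measurable_re.comp hg_meas)
  have hb_indep := hpair (fun y => (g y).im) (Complex.measurable_im.comp hg_meas)
  -- second moment of the sums
  have hsum_sq : ∀ (f : ℕ → Ω → ℝ), (∀ j, MemLp (f j) 2 μ) →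
      (∀ j, ∫ ω, f j ω ∂μ = 0) →
      (Set.Pairwise ↑(Finset.range n) fun i j => IndepFun (f i) (f j) μ) →
      (∀ j, Integrable (fun ω => (f j ω)^2) μ) →
      ∫ ω, (∑ j ∈ Finset.range n, f j ω)^2 ∂μ = ∑ j ∈ Finset.range n, ∫ ω, (f j ω)^2 ∂μ := by
    intro f hf2 hf0 hfind hfsq
    have hmem : MemLp (∑ j ∈ Finset.range n, f j) 2 μ :=
      memLp_finset_sum' _ (fun i _ => hf2 i)
    have hVsum := IndepFun.variance_sum (μ := μ) (fun i _ => hf2 i) hfind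
    have hv : ∀ j, variance (f j) μ = ∫ ω, (f j ω)^2 ∂μ := by
      intro j
      rw [variance_eq_sub (hf2 j)]
      have h0 : μ[f j] = 0 := hf0 j
      rw [h0]
      simp only [Pi.pow_apply]
      ring
    have hmean : μ[∑ j ∈ Finset.range n, f j] = 0 := by
      have : (∫ ω, (∑ j ∈ Finset.range n, f j) ω ∂μ)
          = ∑ j ∈ Finset.range n, ∫ ω, f j ω ∂μ := by
        simp only [Finset.sum_apply]
        exact integral_finset_sum _ (fun i _ => (hf2 i).integrable one_le_two)
      rw [this]
      simp [hf0]
    have hvar := variance_eq_sub hmem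
    rw [hmean] at hvar
    have : μ[(∑ j ∈ Finset.range n, f j) ^ 2] = ∫ ω, (∑ j ∈ Finset.range n, f j ω)^2 ∂μ := by
      congr 1
      funext ω
      simp [Finset.sum_apply]
    rw [this] at hvar
    have : ∫ (ω : Ω), (∑ j ∈ Finset.range n, f j ω) ^ 2 ∂μ
        = variance (∑ j ∈ Finset.range n, f j) μ := by rw [hvar]; ring
    rw [this, hVsum]
    exact Finset.sum_congr rfl (fun j _ => hv j)
  have hAsum := hsum_sq a ha2 ha_avg ha_indep ha_sq_int
  have hBsum := hsum_sq b hb2 hb_avg hb_indep hb_sq_int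
  -- second moment of S
  set S : Ω → ℂ := fun ω => ∑ j ∈ Finset.range n, g (Y j ω) with hS_def
  have hS_meas : Measurable S := by
    apply Finset.measurable_sum
    exact fun j _ => hgY_meas j
  have hS_bd : ∀ ω, ‖S ω‖ ≤ 2 * n := by
    intro ω
    calc ‖S ω‖ ≤ ∑ j ∈ Finset.range n, ‖g (Y j ω)‖ := norm_sum_le _ _
    _ ≤ ∑ _j ∈ Finset.range n, (2:ℝ) := Finset.sum_le_sum (fun j _ => hg_bd _)
    _ = 2 * n := by simp [mul_comm]
  have hS2 : ∫ ω, ‖S ω‖^2 ∂μ ≤ (n:ℝ) := by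
    have hptw : ∀ ω, ‖S ω‖^2 =
        (∑ j ∈ Finset.range n, a j ω)^2 + (∑ j ∈ Finset.range n, b j ω)^2 := by
      intro ω
      rw [Complex.sq_norm, Complex.normSq_apply, hS_def]
      simp only [Complex.re_sum, Complex.im_sum, ha_def, hb_def]
      ring
    have hA_sq_int : Integrable (fun ω => (∑ j ∈ Finset.range n, a j ω)^2) μ := by
      apply (integrable_const ((2*n:ℝ)^2)).mono'
      · exact ((Finset.measurable_sum _ (fun j _ => ha_meas j)).pow_const 2).aestronglyMeasurable
      · refine ae_of_all _ fun ω => ?_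
        rw [Real.norm_eq_abs, abs_pow, ← Real.norm_eq_abs]
        have h1 : ‖∑ j ∈ Finset.range n, a j ω‖ ≤ 2 * n := by
          calc ‖∑ j ∈ Finset.range n, a j ω‖ ≤ ∑ j ∈ Finset.range n, ‖a j ω‖ :=
            norm_sum_le _ _
          _ ≤ ∑ _j ∈ Finset.range n, (2:ℝ) := Finset.sum_le_sum (fun j _ => ha_bd j ω)
          _ = 2 * n := by simp [mul_comm]
        exact pow_le_pow_left₀ (norm_nonneg _) h1 2
    have hB_sq_int : Integrable (fun ω => (∑ j ∈ Finset.range n, b j ω)^2) μ := by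
      apply (integrable_const ((2*n:ℝ)^2)).mono'
      · exact ((Finset.measurable_sum _ (fun j _ => hb_meas j)).pow_const 2).aestronglyMeasurable
      · refine ae_of_all _ fun ω => ?_
        rw [Real.norm_eq_abs, abs_pow, ← Real.norm_eq_abs]
        have h1 : ‖∑ j ∈ Finset.range n, b j ω‖ ≤ 2 * n := by
          calc ‖∑ j ∈ Finset.range n, b j ω‖ ≤ ∑ j ∈ Finset.range n, ‖b j ω‖ :=
            norm_sum_le _ _
          _ ≤ ∑ _j ∈ Finset.range n, (2:ℝ) := Finset.sum_le_sum (fun j _ => hb_bd j ω)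
          _ = 2 * n := by simp [mul_comm]
        exact pow_le_pow_left₀ (norm_nonneg _) h1 2
    calc ∫ ω, ‖S ω‖^2 ∂μ
        = ∫ ω, ((∑ j ∈ Finset.range n, a j ω)^2 + (∑ j ∈ Finset.range n, b j ω)^2) ∂μ := by
          congr 1; funext ω; exact hptw ω
      _ = (∫ ω, (∑ j ∈ Finset.range n, a j ω)^2 ∂μ)
          + (∫ ω, (∑ j ∈ Finset.range n, b j ω)^2 ∂μ) := integral_add hA_sq_int hB_sq_int
      _ = ∑ j ∈ Finset.range n, ((∫ ω, (a j ω)^2 ∂μ) + (∫ ω, (b j ω)^2 ∂μ)) := by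
          rw [hAsum, hBsum, Finset.sum_add_distrib]
      _ ≤ ∑ _j ∈ Finset.range n, (1:ℝ) := Finset.sum_le_sum (fun j _ => hj_key j)
      _ = (n:ℝ) := by simp
  -- Cauchy–Schwarz
  have hSnorm_mem : MemLp (fun ω => ‖S ω‖) 2 μ :=
    MemLp.of_bound hS_meas.norm.aestronglyMeasurable (2*n)
      (ae_of_all _ fun ω => by rw [norm_norm]; exact hS_bd ω)
  have hCS : ∫ ω, ‖S ω‖ ∂μ ≤ Real.sqrt n := by
    have hv := variance_nonneg (fun ω => ‖S ω‖) μ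
    rw [variance_eq_sub hSnorm_mem] at hv
    have hsq : (∫ ω, ‖S ω‖ ∂μ)^2 ≤ ∫ ω, ‖S ω‖^2 ∂μ := by
      have hh : μ[(fun ω => ‖S ω‖) ^ 2] = ∫ ω, ‖S ω‖^2 ∂μ := rfl
      rw [hh] at hv
      linarith
    have h0 : 0 ≤ ∫ ω, ‖S ω‖ ∂μ := integral_nonneg (fun ω => norm_nonneg _)
    calc ∫ ω, ‖S ω‖ ∂μ = Real.sqrt ((∫ ω, ‖S ω‖ ∂μ)^2) := (Real.sqrt_sq h0).symm
    _ ≤ Real.sqrt (n:ℝ) := Real.sqrt_le_sqrt (hsq.trans hS2)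
  -- rewrite the goal
  have hne : (n:ℂ) ≠ 0 := Nat.cast_ne_zero.mpr hn.ne'
  have hrw : ∀ ω, ‖((n : ℂ)⁻¹ * ∑ j ∈ Finset.range n, e (Y j ω)) - φ‖ = ‖S ω‖ / n := by
    intro ω
    have hSω : S ω = (∑ j ∈ Finset.range n, e (Y j ω)) - n * φ := by
      rw [hS_def]
      simp only [hg_def, Finset.sum_sub_distrib, Finset.sum_const, Finset.card_range,
        nsmul_eq_mul]
    have h1 : ((n : ℂ)⁻¹ * ∑ j ∈ Finset.range n, e (Y j ω)) - φ = (n:ℂ)⁻¹ * S ω := by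
      rw [hSω]
      field_simp
    rw [h1, norm_mul, norm_inv]
    simp [Complex.norm_natCast, div_eq_mul_inv, mul_comm]
  have hgoal : ∫ ω, ‖((n : ℂ)⁻¹ * ∑ j ∈ Finset.range n, e (Y j ω)) - φ‖ ∂μ
      ≤ 1 / Real.sqrt n := by
    have h2 : ∫ ω, ‖((n : ℂ)⁻¹ * ∑ j ∈ Finset.range n, e (Y j ω)) - φ‖ ∂μ
        = (∫ ω, ‖S ω‖ ∂μ) / n := by
      simp only [hrw]
      exact integral_div _ _
    rw [h2]
    have hn' : (0:ℝ) < n := Nat.cast_pos.mpr hn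
    have hsn : (0:ℝ) < Real.sqrt n := Real.sqrt_pos.mpr hn'
    rw [div_le_div_iff₀ hn' hsn]
    have h0 : 0 ≤ ∫ ω, ‖S ω‖ ∂μ := integral_nonneg fun ω => norm_nonneg _
    nlinarith [Real.mul_self_sqrt hn'.le]
  exact hgoal

lemma norm_exp_I_mul_ofReal (t y : ℝ) : ‖Complex.exp (Complex.I * t * y)‖ = 1 := by
  simp only [Complex.norm_exp]
  norm_num [Complex.mul_re, Complex.I_re, Complex.I_im, Complex.ofReal_re, Complex.ofReal_im]

set_option maxHeartbeats 1000000 in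
/-- if `Y₁, …, Yₙ` are i.i.d. real random variables with characteristic
function `φ_Y(t) = E[e^{itY₁}]`, empirical characteristic function
`φₙ(t) = n⁻¹ ∑_{j<n} e^{itY_j}`, and `φ_ε : ℝ → ℂ` is nowhere vanishing with
`|1/φ_ε(t)| ≤ C(1+t²)^{β/2}`, then for every `M > 0`,
`E[∫_{−M}^{M} |φₙ(t) − φ_Y(t)|/|φ_ε(t)| dt] ≤ 2 C M (1+M²)^{β/2} / √n`. -/
theorem empirical_char_fn_weighted_L1_bound
    {Ω : Type*} [MeasurableSpace Ω] (μ : Measure Ω) [IsProbabilityMeasure μ]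
    (n : ℕ) (hn : 0 < n) (Y : ℕ → Ω → ℝ)
    (hmeas : ∀ i, Measurable (Y i))
    (hindep : iIndepFun (m := fun _ : ℕ => Real.measurableSpace) Y μ)
    (hident : ∀ i, Measure.map (Y i) μ = Measure.map (Y 0) μ)
    (φε : ℝ → ℂ) (C β : ℝ) (hC : 0 < C) (hβ : 0 < β)
    (hφne : ∀ t : ℝ, φε t ≠ 0)
    (hφbd : ∀ t : ℝ, ‖(φε t)⁻¹‖ ≤ C * (1 + t ^ 2) ^ (β / 2))
    (M : ℝ) (hM : 0 < M) :
    ∫ ω, (∫ t in (-M)..M,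
        ‖((n : ℂ)⁻¹ * ∑ j ∈ Finset.range n, Complex.exp (Complex.I * t * Y j ω)) -
          (∫ ω', Complex.exp (Complex.I * t * Y 0 ω') ∂μ)‖ / ‖φε t‖) ∂μ ≤
      2 * C * M * (1 + M ^ 2) ^ (β / 2) / Real.sqrt n := by
  have hMle : -M ≤ M := by linarith
  set K := C * (1 + M^2)^(β/2) with hK_def
  have hK0 : 0 < K := mul_pos hC (Real.rpow_pos_of_pos (by positivity) _)
  set φY : ℝ → ℂ := fun s => ∫ ω', Complex.exp (Complex.I * s * Y 0 ω') ∂μ with hφY_def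
  set G : ℝ → Ω → ℝ := fun s ω =>
    ‖((n : ℂ)⁻¹ * ∑ j ∈ Finset.range n, Complex.exp (Complex.I * s * Y j ω)) - φY s‖
    with hG_def
  suffices h : ∫ ω, (∫ t in (-M)..M, G t ω / ‖φε t‖) ∂μ ≤
      2 * C * M * (1 + M ^ 2) ^ (β / 2) / Real.sqrt n by
    simpa only [hG_def, hφY_def] using h
  -- measurability
  have hexp_meas : ∀ j, Measurable
      (fun p : ℝ × Ω => Complex.exp (Complex.I * p.1 * Y j p.2)) := by
    intro j
    exact Complex.measurable_exp.comp
      ((measurable_const.mul (Complex.measurable_ofReal.comp measurable_fst)).mul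
        (Complex.measurable_ofReal.comp ((hmeas j).comp measurable_snd)))
  have hφY_meas : Measurable φY := by
    have hsm : StronglyMeasurable (fun p : ℝ × Ω => Complex.exp (Complex.I * p.1 * Y 0 p.2)) :=
      (hexp_meas 0).stronglyMeasurable
    rw [hφY_def]
    exact hsm.integral_prod_right'.measurable
  have hG_meas : Measurable (fun p : ℝ × Ω => G p.1 p.2) := by
    simp only [hG_def]
    apply Measurable.norm
    apply Measurable.sub
    · exact measurable_const.mul (Finset.measurable_sum _ (fun j _ => hexp_meas j))
    · exact hφY_meas.comp measurable_fst
  have hG_nonneg : ∀ s ω, 0 ≤ G s ω := by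
    intro s ω
    simp only [hG_def]
    exact norm_nonneg _
  have hφY_bd : ∀ s, ‖φY s‖ ≤ 1 := by
    intro s
    rw [hφY_def]
    calc ‖∫ ω', Complex.exp (Complex.I * s * Y 0 ω') ∂μ‖
        ≤ ∫ ω', ‖Complex.exp (Complex.I * s * Y 0 ω')‖ ∂μ := norm_integral_le_integral_norm _
    _ = 1 := by
      simp only [norm_exp_I_mul_ofReal]
      simp
  have hG_bd : ∀ s ω, G s ω ≤ 2 := by
    intro s ω
    simp only [hG_def]
    have h1 : ‖(n : ℂ)⁻¹ * ∑ j ∈ Finset.range n, Complex.exp (Complex.I * s * Y j ω)‖ ≤ 1 := by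
      rw [norm_mul, norm_inv, Complex.norm_natCast]
      have h2 : ‖∑ j ∈ Finset.range n, Complex.exp (Complex.I * (s:ℂ) * Y j ω)‖ ≤ n := by
        calc ‖∑ j ∈ Finset.range n, Complex.exp (Complex.I * (s:ℂ) * Y j ω)‖
            ≤ ∑ j ∈ Finset.range n, ‖Complex.exp (Complex.I * (s:ℂ) * Y j ω)‖ :=
          norm_sum_le _ _
        _ = n := by
          simp only [norm_exp_I_mul_ofReal]
          simp
      have hn' : (0:ℝ) < n := Nat.cast_pos.mpr hn
      calc (n:ℝ)⁻¹ * ‖∑ j ∈ Finset.range n, Complex.exp (Complex.I * (s:ℂ) * Y j ω)‖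
          ≤ (n:ℝ)⁻¹ * n := mul_le_mul_of_nonneg_left h2 (by positivity)
      _ = 1 := by field_simp
    calc ‖((n : ℂ)⁻¹ * ∑ j ∈ Finset.range n, Complex.exp (Complex.I * s * Y j ω)) - φY s‖
        ≤ ‖(n : ℂ)⁻¹ * ∑ j ∈ Finset.range n, Complex.exp (Complex.I * s * Y j ω)‖
          + ‖φY s‖ := norm_sub_le _ _
    _ ≤ 1 + 1 := add_le_add h1 (hφY_bd s)
    _ = 2 := by norm_num
  have hcore : ∀ s : ℝ, ∫ ω, G s ω ∂μ ≤ 1 / Real.sqrt n := by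
    intro s
    have h := core_bound μ n hn Y hmeas hindep hident s
    simp only [hG_def, hφY_def]
    exact h
  -- integrability in t
  have hGm1 : ∀ ω, Measurable fun s => G s ω := by
    intro ω
    have heq : (fun s => G s ω) = (fun p : ℝ × Ω => G p.1 p.2) ∘ (fun s => (s, ω)) := rfl
    rw [heq]
    exact hG_meas.comp (measurable_id.prodMk measurable_const)
  have hGint_t : ∀ ω, IntegrableOn (fun s => G s ω) (Set.Ioc (-M) M) := by
    intro ω
    refine ((integrableOn_const_iff (C := (2:ℝ))).mpr (Or.inr measure_Ioc_lt_top)).mono'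
      (hGm1 ω).aestronglyMeasurable (ae_of_all _ fun s => ?_)
    rw [Real.norm_eq_abs, abs_of_nonneg (hG_nonneg s ω)]
    exact hG_bd s ω
  -- inner bound
  have hinner : ∀ ω, (∫ t in (-M)..M, G t ω / ‖φε t‖) ≤ K * ∫ t in Set.Ioc (-M) M, G t ω := by
    intro ω
    rw [intervalIntegral.integral_of_le hMle, ← integral_const_mul]
    apply integral_mono_of_nonneg
    · exact ae_of_all _ fun s => div_nonneg (hG_nonneg s ω) (norm_nonneg _)
    · exact (hGint_t ω).const_mul K
    · refine (ae_restrict_mem measurableSet_Ioc).mono fun s hs => ?_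
      have ht2 : s^2 ≤ M^2 := by nlinarith [hs.1, hs.2]
      have hr : (1 + s^2) ^ (β/2) ≤ (1 + M^2) ^ (β/2) :=
        Real.rpow_le_rpow (by positivity) (by linarith) (by positivity)
      have hinv : ‖(φε s)⁻¹‖ ≤ K := by
        calc ‖(φε s)⁻¹‖ ≤ C * (1 + s^2) ^ (β/2) := hφbd s
        _ ≤ K := by rw [hK_def]; exact mul_le_mul_of_nonneg_left hr hC.le
      calc G s ω / ‖φε s‖ = G s ω * ‖(φε s)⁻¹‖ := by rw [norm_inv, div_eq_mul_inv]
      _ ≤ G s ω * K := mul_le_mul_of_nonneg_left hinv (hG_nonneg s ω)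
      _ = K * G s ω := mul_comm _ _
  haveI hfin : IsFiniteMeasure (volume.restrict (Set.Ioc (-M:ℝ) M)) :=
    ⟨by rw [Measure.restrict_apply_univ]; exact measure_Ioc_lt_top⟩
  have hJ_meas : StronglyMeasurable (fun ω => ∫ t in Set.Ioc (-M) M, G t ω) :=
    (hG_meas.comp measurable_swap).stronglyMeasurable.integral_prod_right'
  have hJ_nonneg : ∀ ω, 0 ≤ ∫ t in Set.Ioc (-M) M, G t ω := fun ω =>
    integral_nonneg fun s => hG_nonneg s ω
  have hvol : (volume (Set.Ioc (-M:ℝ) M)).toReal = 2*M := by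
    rw [Real.volume_Ioc, ENNReal.toReal_ofReal (by linarith)]
    ring
  have hJ_bd : ∀ ω, ‖∫ t in Set.Ioc (-M) M, G t ω‖ ≤ 2 * (2*M) := by
    intro ω
    have h := norm_integral_le_of_norm_le_const
      (μ := volume.restrict (Set.Ioc (-M:ℝ) M)) (C := 2) (f := fun s => G s ω)
      (ae_of_all _ fun s => by
        rw [Real.norm_eq_abs, abs_of_nonneg (hG_nonneg s ω)]; exact hG_bd s ω)
    rw [measureReal_def, Measure.restrict_apply_univ, hvol] at h
    exact h
  have hJ_int : Integrable (fun ω => ∫ t in Set.Ioc (-M) M, G t ω) μ :=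
    (integrable_const (2*(2*M))).mono' hJ_meas.aestronglyMeasurable (ae_of_all _ hJ_bd)
  -- outer monotonicity
  have hstep1 : ∫ ω, (∫ t in (-M)..M, G t ω / ‖φε t‖) ∂μ
      ≤ ∫ ω, (K * ∫ t in Set.Ioc (-M) M, G t ω) ∂μ := by
    apply integral_mono_of_nonneg
    · exact ae_of_all _ fun ω => intervalIntegral.integral_nonneg hMle
        (fun s _ => div_nonneg (hG_nonneg s ω) (norm_nonneg _))
    · exact hJ_int.const_mul K
    · exact ae_of_all _ fun ω => hinner ω
  -- Fubini
  have hprod_int : Integrable (fun p : Ω × ℝ => G p.2 p.1)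
      (μ.prod (volume.restrict (Set.Ioc (-M) M))) := by
    refine (integrable_const (2:ℝ)).mono'
      ((hG_meas.comp measurable_swap).aestronglyMeasurable) (ae_of_all _ fun p => ?_)
    rw [Real.norm_eq_abs, abs_of_nonneg (hG_nonneg _ _)]
    exact hG_bd _ _
  have hswap : ∫ ω, (∫ t in Set.Ioc (-M) M, G t ω) ∂μ
      = ∫ t in Set.Ioc (-M) M, (∫ ω, G t ω ∂μ) :=
    integral_integral_swap hprod_int
  -- final integral bound
  have hfinal : ∫ t in Set.Ioc (-M) M, (∫ ω, G t ω ∂μ) ≤ (2*M) * (1 / Real.sqrt n) := by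
    calc ∫ t in Set.Ioc (-M) M, (∫ ω, G t ω ∂μ)
        ≤ ∫ _t in Set.Ioc (-M) M, (1 / Real.sqrt n : ℝ) := by
          apply integral_mono_of_nonneg
          · exact ae_of_all _ fun s => integral_nonneg fun ω => hG_nonneg s ω
          · exact (integrableOn_const_iff).mpr (Or.inr measure_Ioc_lt_top)
          · exact ae_of_all _ fun s => hcore s
      _ = (2*M) * (1 / Real.sqrt n) := by
          rw [setIntegral_const, measureReal_def, hvol, smul_eq_mul]
  calc ∫ ω, (∫ t in (-M)..M, G t ω / ‖φε t‖) ∂μ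
      ≤ ∫ ω, (K * ∫ t in Set.Ioc (-M) M, G t ω) ∂μ := hstep1
    _ = K * ∫ ω, (∫ t in Set.Ioc (-M) M, G t ω) ∂μ := integral_const_mul K _
    _ = K * ∫ t in Set.Ioc (-M) M, (∫ ω, G t ω ∂μ) := by rw [hswap]
    _ ≤ K * ((2*M) * (1 / Real.sqrt n)) := mul_le_mul_of_nonneg_left hfinal hK0.le
    _ = 2 * C * M * (1 + M ^ 2) ^ (β / 2) / Real.sqrt n := by rw [hK_def]; ring
end

section
/- Let g : ℝ → [0,∞) vanish on (−∞,0), be nonincreasing on [0,∞) with g(0) < ∞, satisfy g(u) → 0 as u → ∞, and have ∫₀^∞ g(u) du = 1. Then for every α ∈ (0, 1/2), ∫_ℝ (1+x²)^α · |∫₀^∞ e^{ixu} g(u) du|² dx < ∞. -/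
open MeasureTheory Filter

private lemma norm_exp_I_mul' (x u : ℝ) : ‖Complex.exp (Complex.I * x * u)‖ = 1 := by
  rw [show Complex.I * (x:ℂ) * (u:ℂ) = ((x * u : ℝ) : ℂ) * Complex.I by push_cast; ring]
  exact Complex.norm_exp_ofReal_mul_I _

/-- if `g : ℝ → [0,∞)` vanishes on `(−∞,0)`, is nonincreasing on `[0,∞)`
(with `g(0)` finite), `g(u) → 0` as `u → ∞`, and `∫₀^∞ g = 1`, then for every
`α ∈ (0, 1/2)`, `∫_ℝ (1+x²)^α |∫₀^∞ e^{ixu} g(u) du|² dx < ∞`. -/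
theorem fourier_of_monotone_density_in_sobolev
    (g : ℝ → ℝ)
    (hpos : ∀ u, 0 ≤ g u)
    (hneg : ∀ u : ℝ, u < 0 → g u = 0)
    (hmono : AntitoneOn g (Set.Ici 0))
    (hlim : Tendsto g atTop (nhds 0))
    (hint : IntegrableOn g (Set.Ioi 0))
    (hnorm : ∫ u in Set.Ioi (0:ℝ), g u = 1) :
    ∀ α : ℝ, 0 < α → α < 1 / 2 →
      ∫⁻ x : ℝ, ENNReal.ofReal ((1 + x ^ 2) ^ α *
        ‖∫ u in Set.Ioi (0:ℝ), Complex.exp (Complex.I * x * u) * (g u : ℂ)‖ ^ 2) < ⊤ := by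
  intro α hα0 hα2
  -- ## Basic integrability facts
  have h0null : (volume : Measure ℝ) {(0:ℝ)} = 0 := measure_singleton 0
  have hg_ae : g =ᵐ[volume] Set.indicator (Set.Ioi 0) g := by
    filter_upwards [compl_mem_ae_iff.2 h0null] with u hu
    rcases lt_trichotomy u 0 with h | h | h
    · rw [hneg u h, Set.indicator_of_notMem (by simp [h.not_gt])]
    · exact absurd h hu
    · rw [Set.indicator_of_mem (Set.mem_Ioi.mpr h)]
  have hgInt : Integrable g := by
    exact ((integrable_indicator_iff measurableSet_Ioi).2 hint).congr hg_ae.symm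
  have hgc : Integrable (fun u : ℝ => (g u : ℂ)) := hgInt.ofReal
  have hfInt : ∀ x h : ℝ,
      Integrable (fun u : ℝ => Complex.exp (Complex.I * x * u) * (g (u + h) : ℂ)) := by
    intro x h
    refine (Integrable.bdd_mul (c := 1) (hgc.comp_add_right h) ?_ (ae_of_all _ fun u => ?_))
    · exact (Complex.continuous_exp.comp (by fun_prop)).aestronglyMeasurable
    · exact le_of_eq (norm_exp_I_mul' x u)
  have hfInt0 : ∀ x : ℝ,
      Integrable (fun u : ℝ => Complex.exp (Complex.I * x * u) * (g u : ℂ)) := by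
    intro x
    simpa using hfInt x 0
  -- the set integral equals the full integral
  have hphi_eq : ∀ x : ℝ,
      (∫ u in Set.Ioi (0:ℝ), Complex.exp (Complex.I * x * u) * (g u : ℂ))
        = ∫ u : ℝ, Complex.exp (Complex.I * x * u) * (g u : ℂ) := by
    intro x
    rw [← integral_indicator measurableSet_Ioi]
    refine integral_congr_ae ?_
    filter_upwards [compl_mem_ae_iff.2 h0null] with u hu
    rcases lt_trichotomy u 0 with h | h | h
    · rw [Set.indicator_of_notMem (by simp [h.not_gt]), hneg u h]
      simp
    · exact absurd h hu
    · rw [Set.indicator_of_mem (Set.mem_Ioi.mpr h)]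
  -- ## Bound 1 : ‖φ x‖ ≤ 1
  have hle1 : ∀ x : ℝ,
      ‖∫ u in Set.Ioi (0:ℝ), Complex.exp (Complex.I * x * u) * (g u : ℂ)‖ ≤ 1 := by
    intro x
    calc ‖∫ u in Set.Ioi (0:ℝ), Complex.exp (Complex.I * x * u) * (g u : ℂ)‖
        ≤ ∫ u in Set.Ioi (0:ℝ), ‖Complex.exp (Complex.I * x * u) * (g u : ℂ)‖ :=
          norm_integral_le_integral_norm _
      _ = ∫ u in Set.Ioi (0:ℝ), g u := by
          refine integral_congr_ae (ae_of_all _ fun u => ?_)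
          beta_reduce
          rw [norm_mul, norm_exp_I_mul' x u, one_mul, Complex.norm_real,
            Real.norm_eq_abs, abs_of_nonneg (hpos u)]
      _ = 1 := hnorm
  -- ## Bound 2 : decay ‖φ x‖ ≤ π * g 0 / |x|
  have hdecay : ∀ x : ℝ, x ≠ 0 →
      ‖∫ u in Set.Ioi (0:ℝ), Complex.exp (Complex.I * x * u) * (g u : ℂ)‖
        ≤ Real.pi * g 0 / |x| := by
    intro x hx
    set h : ℝ := Real.pi / |x| with hh_def
    have hh : 0 < h := div_pos Real.pi_pos (abs_pos.2 hx)
    -- exp (I x h) = -1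
    have hexp : Complex.exp (Complex.I * x * h) = -1 := by
      have hxh : x * h = Real.pi ∨ x * h = -Real.pi := by
        rcases hx.lt_or_gt with hx' | hx'
        · right
          rw [hh_def, abs_of_neg hx', div_neg, mul_neg, mul_div_assoc', mul_comm,
            mul_div_assoc, div_self hx'.ne, mul_one]
        · left
          rw [hh_def, abs_of_pos hx', mul_comm, div_mul_cancel₀ _ hx'.ne']
      have hrw : Complex.I * (x:ℂ) * (h:ℂ) = ((x * h : ℝ) : ℂ) * Complex.I := by
        push_cast; ring
      rcases hxh with hxh | hxh
      · rw [hrw, hxh, Complex.exp_pi_mul_I]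
      · rw [hrw, hxh]
        push_cast
        rw [neg_mul, Complex.exp_neg, Complex.exp_pi_mul_I]
        norm_num
    -- translation identity
    have hshift : (∫ u : ℝ, Complex.exp (Complex.I * x * u) * (g u : ℂ))
        = - ∫ u : ℝ, Complex.exp (Complex.I * x * u) * (g (u + h) : ℂ) := by
      have ht := integral_add_right_eq_self
        (μ := volume) (fun u : ℝ => Complex.exp (Complex.I * x * u) * (g u : ℂ)) h
      rw [← ht, ← integral_neg]
      refine integral_congr_ae (ae_of_all _ fun u => ?_)
      beta_reduce
      have : Complex.I * (x:ℂ) * ((u + h : ℝ):ℂ)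
          = Complex.I * x * u + Complex.I * x * h := by push_cast; ring
      rw [this, Complex.exp_add, hexp]
      ring
    have hsum : (∫ u : ℝ, Complex.exp (Complex.I * x * u) * ((g u : ℂ) - (g (u + h) : ℂ)))
        = 2 * ∫ u : ℝ, Complex.exp (Complex.I * x * u) * (g u : ℂ) := by
      simp_rw [mul_sub]
      rw [integral_sub (hfInt0 x) (hfInt x h), hshift]
      ring
    -- the L¹ bound on the difference
    have habsInt : Integrable (fun u : ℝ => |g u - g (u + h)|) :=
      (hgInt.sub (hgInt.comp_add_right h)).abs
    -- compute the pieces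
    have hP2 : (∫ u in Set.Ici (0:ℝ), g (u + h)) = ∫ u in Set.Ici h, g u := by
      rw [← integral_indicator measurableSet_Ici, ← integral_indicator measurableSet_Ici,
        ← integral_add_right_eq_self (μ := volume) (Set.indicator (Set.Ici h) g) h]
      refine integral_congr_ae (ae_of_all _ fun u => ?_)
      beta_reduce
      by_cases hu : (0:ℝ) ≤ u
      · rw [Set.indicator_of_mem (Set.mem_Ici.mpr hu),
          Set.indicator_of_mem (Set.mem_Ici.mpr (by linarith : h ≤ u + h))]
      · rw [Set.indicator_of_notMem (by simpa using hu),
          Set.indicator_of_notMem (by simp only [Set.mem_Ici, not_le] at hu ⊢; linarith)]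
    have hP4 : (∫ u in Set.Iio (0:ℝ), g (u + h)) = ∫ u in Set.Iio h, g u := by
      rw [← integral_indicator measurableSet_Iio, ← integral_indicator measurableSet_Iio,
        ← integral_add_right_eq_self (μ := volume) (Set.indicator (Set.Iio h) g) h]
      refine integral_congr_ae (ae_of_all _ fun u => ?_)
      beta_reduce
      by_cases hu : u < 0
      · rw [Set.indicator_of_mem (Set.mem_Iio.mpr hu),
          Set.indicator_of_mem (Set.mem_Iio.mpr (by linarith : u + h < h))]
      · rw [Set.indicator_of_notMem (by simpa using hu),
          Set.indicator_of_notMem (by simp only [Set.mem_Iio, not_lt] at hu ⊢; linarith)]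
    have hIoc : IntegrableOn g (Set.Ioc 0 h) := hgInt.integrableOn
    have hsplit : (∫ u in Set.Ioc (0:ℝ) h, g u) + ∫ u in Set.Ioi h, g u = 1 := by
      rw [← setIntegral_union (Set.Ioc_disjoint_Ioi le_rfl) measurableSet_Ioi
        hIoc hgInt.integrableOn, Set.Ioc_union_Ioi_eq_Ioi hh.le, hnorm]
    have hP5 : (∫ u in Set.Iio h, g u) = ∫ u in Set.Ioc (0:ℝ) h, g u := by
      rw [← Set.Iio_union_Ico_eq_Iio hh.le,
        setIntegral_union ((Set.Iio_disjoint_Ici le_rfl).mono_right Set.Ico_subset_Ici_self)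
          measurableSet_Ico hgInt.integrableOn hgInt.integrableOn]
      have hz : (∫ u in Set.Iio (0:ℝ), g u) = 0 := by
        rw [setIntegral_congr_fun measurableSet_Iio (fun u hu => hneg u hu)]
        simp
      rw [hz, zero_add, integral_Ico_eq_integral_Ioo, ← integral_Ioc_eq_integral_Ioo]
    -- assemble: ∫ |g u - g (u+h)| = 2 ∫_{Ioc 0 h} g
    have hJ : (∫ u : ℝ, |g u - g (u + h)|) = 2 * ∫ u in Set.Ioc (0:ℝ) h, g u := by
      rw [← integral_add_compl measurableSet_Ici habsInt, Set.compl_Ici]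
      have h1 : (∫ u in Set.Ici (0:ℝ), |g u - g (u + h)|)
          = (∫ u in Set.Ici (0:ℝ), g u) - ∫ u in Set.Ici (0:ℝ), g (u + h) := by
        rw [setIntegral_congr_fun measurableSet_Ici (f := fun u => |g u - g (u + h)|)
          (g := fun u => g u - g (u + h)) (fun u hu => abs_of_nonneg (sub_nonneg.2
            (hmono hu (by simp only [Set.mem_Ici] at hu ⊢; linarith)
              (le_add_of_nonneg_right hh.le))))]
        exact integral_sub hgInt.integrableOn (hgInt.comp_add_right h).integrableOn
      have h2 : (∫ u in Set.Iio (0:ℝ), |g u - g (u + h)|)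
          = ∫ u in Set.Iio (0:ℝ), g (u + h) := by
        refine setIntegral_congr_fun measurableSet_Iio (fun u hu => ?_)
        rw [hneg u hu, zero_sub, abs_neg, abs_of_nonneg (hpos _)]
      rw [h1, h2, hP2, hP4, hP5, integral_Ici_eq_integral_Ioi, integral_Ici_eq_integral_Ioi,
        hnorm]
      linarith
    have hIocle : (∫ u in Set.Ioc (0:ℝ) h, g u) ≤ g 0 * h := by
      calc (∫ u in Set.Ioc (0:ℝ) h, g u) ≤ ∫ _ in Set.Ioc (0:ℝ) h, g 0 :=
            setIntegral_mono_on hIoc (integrableOn_const measure_Ioc_lt_top.ne)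
              measurableSet_Ioc (fun u hu => hmono Set.self_mem_Ici hu.1.le hu.1.le)
        _ = g 0 * h := by
            rw [setIntegral_const, measureReal_def, Real.volume_Ioc, smul_eq_mul]
            rw [ENNReal.toReal_ofReal (by linarith)]
            ring
    -- final computation for this x
    have hnormbd : 2 * ‖∫ u : ℝ, Complex.exp (Complex.I * x * u) * (g u : ℂ)‖
        ≤ 2 * (g 0 * h) := by
      calc 2 * ‖∫ u : ℝ, Complex.exp (Complex.I * x * u) * (g u : ℂ)‖
          = ‖(2:ℂ) * ∫ u : ℝ, Complex.exp (Complex.I * x * u) * (g u : ℂ)‖ := by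
            rw [norm_mul]; norm_num
        _ = ‖∫ u : ℝ, Complex.exp (Complex.I * x * u) * ((g u : ℂ) - (g (u + h) : ℂ))‖ := by
            rw [hsum]
        _ ≤ ∫ u : ℝ, ‖Complex.exp (Complex.I * x * u) * ((g u : ℂ) - (g (u + h) : ℂ))‖ :=
            norm_integral_le_integral_norm _
        _ = ∫ u : ℝ, |g u - g (u + h)| := by
            refine integral_congr_ae (ae_of_all _ fun u => ?_)
            beta_reduce
            rw [norm_mul, norm_exp_I_mul' x u, one_mul,
              show ((g u : ℂ) - (g (u + h) : ℂ)) = ((g u - g (u + h) : ℝ) : ℂ) by push_cast; ring,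
              Complex.norm_real, Real.norm_eq_abs]
        _ = 2 * ∫ u in Set.Ioc (0:ℝ) h, g u := hJ
        _ ≤ 2 * (g 0 * h) := by linarith
    rw [hphi_eq x]
    have : g 0 * h = Real.pi * g 0 / |x| := by rw [hh_def]; ring
    linarith
  -- ## global bound by C * (1+x²)^(α-1)
  set C : ℝ := 2 * max 1 (Real.pi * g 0) ^ 2 with hC_def
  have hC1 : (1:ℝ) ≤ max 1 (Real.pi * g 0) := le_max_left _ _
  have hCpos : 0 < C := by rw [hC_def]; positivity
  have hbd : ∀ x : ℝ, (1 + x ^ 2) ^ α *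
      ‖∫ u in Set.Ioi (0:ℝ), Complex.exp (Complex.I * x * u) * (g u : ℂ)‖ ^ 2
        ≤ C * (1 + x ^ 2) ^ (α - 1) := by
    intro x
    have h1 : (0:ℝ) < 1 + x ^ 2 := by positivity
    set N : ℝ := ‖∫ u in Set.Ioi (0:ℝ), Complex.exp (Complex.I * x * u) * (g u : ℂ)‖ with hN
    have hN0 : 0 ≤ N := norm_nonneg _
    have hN1 : N ≤ 1 := hle1 x
    have hkey : N ^ 2 * (1 + x ^ 2) ≤ C := by
      rcases le_or_gt |x| 1 with hx | hx
      · have hx2 : x ^ 2 ≤ 1 := by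
          have := sq_abs x
          nlinarith [abs_nonneg x]
        nlinarith [sq_nonneg N, sq_nonneg (max 1 (Real.pi * g 0))]
      · have hxne : x ≠ 0 := by
          intro h; rw [h] at hx; simp at hx; linarith
        have hd := hdecay x hxne
        have hxpos : 0 < |x| := abs_pos.2 hxne
        have hNx : N * |x| ≤ Real.pi * g 0 := by
          rw [div_eq_mul_inv] at hd
          calc N * |x| ≤ Real.pi * g 0 * |x|⁻¹ * |x| := by
                exact mul_le_mul_of_nonneg_right hd (abs_nonneg x)
            _ = Real.pi * g 0 := by field_simp
        have hNx2 : N ^ 2 * x ^ 2 ≤ (Real.pi * g 0) ^ 2 := by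
          have h1' : (N * |x|) ^ 2 ≤ (Real.pi * g 0) ^ 2 := by
            have : 0 ≤ N * |x| := by positivity
            nlinarith
          calc N ^ 2 * x ^ 2 = (N * |x|) ^ 2 := by rw [mul_pow, sq_abs]
            _ ≤ (Real.pi * g 0) ^ 2 := h1'
        have hle : Real.pi * g 0 ≤ max 1 (Real.pi * g 0) := le_max_right _ _
        have hpg : 0 ≤ Real.pi * g 0 := mul_nonneg Real.pi_pos.le (hpos 0)
        have : (Real.pi * g 0) ^ 2 ≤ max 1 (Real.pi * g 0) ^ 2 := by nlinarith
        nlinarith [sq_nonneg N]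
    have heq : C * (1 + x ^ 2) ^ (α - 1) = (1 + x ^ 2) ^ α * (C * (1 + x ^ 2)⁻¹) := by
      rw [show α - 1 = α + (-1) by ring, Real.rpow_add h1, Real.rpow_neg_one]
      ring
    rw [heq]
    refine mul_le_mul_of_nonneg_left ?_ (Real.rpow_nonneg h1.le α)
    rw [show C * (1 + x ^ 2)⁻¹ = C / (1 + x ^ 2) by ring]
    exact (le_div_iff₀ h1).2 hkey
  -- ## integrability of the bound
  have hbd_int : Integrable (fun x : ℝ => C * (1 + x ^ 2) ^ (α - 1)) := by
    have hr : (Module.finrank ℝ ℝ : ℝ) < 2 - 2 * α := by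
      simp [Module.finrank_self]; linarith
    have h0 := (integrable_rpow_neg_one_add_norm_sq (E := ℝ) (μ := volume) hr).const_mul C
    refine h0.congr (ae_of_all _ fun x => ?_)
    beta_reduce
    rw [Real.norm_eq_abs, sq_abs, show -(2 - 2*α) / 2 = α - 1 by ring]
  calc ∫⁻ x : ℝ, ENNReal.ofReal ((1 + x ^ 2) ^ α *
        ‖∫ u in Set.Ioi (0:ℝ), Complex.exp (Complex.I * x * u) * (g u : ℂ)‖ ^ 2)
      ≤ ∫⁻ x : ℝ, ENNReal.ofReal (C * (1 + x ^ 2) ^ (α - 1)) :=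
        lintegral_mono fun x => ENNReal.ofReal_le_ofReal (hbd x)
    _ < ⊤ := hbd_int.lintegral_lt_top
end
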